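/- arXiv:2309.15035 — 12 statements merged into one kernel-verified Lean document; each statement's English description precedes it below -/
import Mathlib

section
/- Let t be a term of some minor of the generic matrix X, represented by its two-row array ((i_1,...,i_r),(j_1,...,j_r)) with i_1 < ... < i_r, and let B be an anti-diagonal subset of X whose minors under consideration have size r̃. Then there exists an r̃×r̃ minor m contained in B such that the anti-diagonal leading term of m divides t if and only if the anti-diagonal length of t in B (the length of the longest strictly decreasing subsequence of the column indices of the entries of t lying in B) is at least r̃. -/
/-!
Both sides describe the same anti-diagonal `x_{a₁b_{r̃}} ⋯ x_{a_{r̃}b₁}` of entries of `t` in `B`.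
A leading term dividing `t` consists of entries of `t`, and since `t` has one entry per row, its
entries, read by increasing row, pick out a subsequence of `t` with strictly decreasing columns.
Conversely, the rows and the (reversed) columns of such a subsequence span a minor; it lies in
`B` because every entry of it sits between two entries of the subsequence in the anti-diagonal
direction.
-/

/-- A subset `B` of the entries of a generic `m × n` matrix is anti-diagonal: whenever
the north-east and south-west corners of a submatrix lie in `B`, all of its entries do. -/
def AntiDiagSubset (m n : ℕ) (B : Set (Fin m × Fin n)) : Prop :=
  ∀ p pt : Fin m, ∀ q qt : Fin n, (p, q) ∈ B → (pt, qt) ∈ B → pt ≤ p → q ≤ qt →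
    ∀ i : Fin m, ∀ j : Fin n, pt ≤ i → i ≤ p → q ≤ j → j ≤ qt → (i, j) ∈ B

namespace Finsupp

variable {α ι κ : Type*} [Fintype ι] [Fintype κ]

theorem mem_range_of_sum_single_le {p : ι → α} {q : κ → α}
    (h : (∑ k, single (p k) 1 : α →₀ ℕ) ≤ ∑ l, single (q l) 1) (k : ι) : p k ∈ Set.range q := by
  by_contra hk
  have h_rhs : (∑ l, single (q l) 1 : α →₀ ℕ) (p k) = 0 := by
    rw [finsetSum_apply]
    exact Finset.sum_eq_zero fun l _ => single_eq_of_ne fun hl => hk ⟨l, hl.symm⟩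
  have h_lhs : 1 ≤ (∑ k', single (p k') 1 : α →₀ ℕ) (p k) := by
    rw [finsetSum_apply]
    calc 1 = single (p k) 1 (p k) := single_eq_same.symm
      _ ≤ _ := Finset.single_le_sum (f := fun k' => single (p k') 1 (p k)) (fun _ _ => zero_le)
          (Finset.mem_univ k)
  have := h (p k)
  omega

theorem sum_single_comp_le {φ : ι → κ} (hφ : φ.Injective) (q : κ → α) :
    (∑ k, single (q (φ k)) 1 : α →₀ ℕ) ≤ ∑ l, single (q l) 1 :=
  calc _ = ∑ l ∈ Finset.univ.map ⟨φ, hφ⟩, single (q l) 1 := (Finset.sum_map _ _ _).symm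
    _ ≤ _ := Finset.sum_le_univ_sum_of_nonneg fun _ => zero_le

end Finsupp

theorem AntiDiagSubset.mem_of_antidiagonal {m n : ℕ} {B : Set (Fin m × Fin n)}
    (hB : AntiDiagSubset m n B) {ι : Type*} [LinearOrder ι] {a : ι → Fin m} {c : ι → Fin n}
    (ha : Monotone a) (hc : Antitone c) (hac : ∀ k, (a k, c k) ∈ B) (k l : ι) :
    (a k, c l) ∈ B := by
  rcases le_total k l with h | h
  · exact hB _ _ _ _ (hac l) (hac k) (ha h) (hc h) _ _ le_rfl (ha h) le_rfl (hc h)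
  · exact hB _ _ _ _ (hac k) (hac l) (ha h) (hc h) _ _ (ha h) le_rfl (hc h) le_rfl

theorem stmt_2_general (m n r rt : ℕ) (B : Set (Fin m × Fin n)) (hB : AntiDiagSubset m n B)
    (i : Fin r → Fin m) (j : Fin r → Fin n) (hi : StrictMono i) :
    (∃ (a : Fin rt → Fin m) (b : Fin rt → Fin n), StrictMono a ∧ StrictMono b ∧
        (∀ k l : Fin rt, (a k, b l) ∈ B) ∧
        (∑ k : Fin rt, Finsupp.single (a k, b k.rev) 1 : (Fin m × Fin n) →₀ ℕ) ≤
          ∑ k : Fin r, Finsupp.single (i k, j k) 1) ↔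
      ∃ φ : Fin rt → Fin r, StrictMono φ ∧ (∀ k, (i (φ k), j (φ k)) ∈ B) ∧
        StrictAnti fun k => j (φ k) := by
  constructor
  · rintro ⟨a, b, ha, hb, hab, hle⟩
    choose φ hφ using Finsupp.mem_range_of_sum_single_le hle
    have hφi : ∀ k, i (φ k) = a k := fun k => congrArg Prod.fst (hφ k)
    have hφj : ∀ k, j (φ k) = b k.rev := fun k => congrArg Prod.snd (hφ k)
    refine ⟨φ, fun k l hkl => hi.lt_iff_lt.mp ?_, fun k => by rw [hφi, hφj]; exact hab k k.rev,
      fun k l hkl => ?_⟩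
    · simpa only [hφi] using ha hkl
    · simpa only [hφj] using hb (Fin.rev_lt_rev.mpr hkl)
  · rintro ⟨φ, hφ, hφB, hφj⟩
    refine ⟨fun k => i (φ k), fun k => j (φ k.rev), hi.comp hφ,
      fun k l hkl => hφj (Fin.rev_lt_rev.mpr hkl),
      fun k l => hB.mem_of_antidiagonal (hi.comp hφ).monotone hφj.antitone hφB k l.rev, ?_⟩
    simpa only [Fin.rev_rev] using Finsupp.sum_single_comp_le hφ.injective fun k => (i k, j k)

/-- For a term `t` of a minor (given by `x_{i₁j₁} ⋯ x_{i_r j_r}` with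
`i₁ < ⋯ < i_r` and distinct columns) and an anti-diagonal subset `B`, there exists a
`r̃ × r̃` minor inside `B` whose anti-diagonal leading term divides `t` iff the
anti-diagonal length of `t` in `B` is at least `r̃`, i.e. there is a strictly
decreasing subsequence of length `r̃` of the column indices of the entries of `t`
lying in `B`. -/
theorem stmt_2 (m n r rt : ℕ) (B : Set (Fin m × Fin n)) (hB : AntiDiagSubset m n B)
    (i : Fin r → Fin m) (j : Fin r → Fin n) (hi : StrictMono i) (hj : Function.Injective j) :
    (∃ (a : Fin rt → Fin m) (b : Fin rt → Fin n), StrictMono a ∧ StrictMono b ∧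
        (∀ k l : Fin rt, (a k, b l) ∈ B) ∧
        (∑ k : Fin rt, Finsupp.single (a k, b k.rev) 1 : (Fin m × Fin n) →₀ ℕ) ≤
          ∑ k : Fin r, Finsupp.single (i k, j k) 1) ↔
      ∃ φ : Fin rt → Fin r, StrictMono φ ∧ (∀ k, (i (φ k), j (φ k)) ∈ B) ∧
        StrictAnti fun k => j (φ k) :=
  stmt_2_general m n r rt B hB i j hi
end

section
/- Let m₁ and m₂ be two distinct minors of a generic matrix X. Then m₁ (as a polynomial) is reducible modulo m₂ with respect to an anti-diagonal (or diagonal) term order if and only if m₂ is contained in m₁, i.e., the row index set of m₂ is a subset of the row index set of m₁ and the column index set of m₂ is a subset of the column index set of m₁. -/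
/-!
The leading term of `m₂` is a product of distinct variables `x_{a₂ k, c k}` (with
`c = b₂ ∘ rev` or `c = b₂`), so it divides a term of `m₁` exactly when each of them occurs
there. If row `a₂ k` sits at position `i k` of `m₁` and column `c k` at position `j k`, that
variable occurs in the term of `m₁` for `σ` iff `σ (i k) = j k`; since `i` and `j` are
injective, such a `σ` exists (a partial injection of a finite type extends to a permutation).
-/

open Function Equiv

namespace Finsupp

variable {ι κ α : Type*}

theorem toMultiset_sum_single_one (s : Finset ι) (p : ι → α) :
    toMultiset (∑ k ∈ s, single (p k) 1) = s.val.map p := by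
  rw [toMultiset_sum, ← Multiset.sum_map_singleton (s.val.map p), Multiset.map_map]
  simp

theorem sum_single_one_le_sum_single_one_iff [Fintype ι] [Fintype κ] {p : κ → α}
    (hp : Injective p) (q : ι → α) :
    ∑ k, single (p k) 1 ≤ ∑ l, single (q l) 1 ↔ Set.range p ⊆ Set.range q := by
  classical
  rw [← orderIsoMultiset.le_iff_le, coe_orderIsoMultiset, toMultiset_sum_single_one,
    toMultiset_sum_single_one,
    Multiset.le_iff_subset (Finset.univ.nodup_map_iff_injOn.mpr hp.injOn)]
  simp [Multiset.subset_iff, Set.range_subset_iff]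

end Finsupp

theorem exists_perm_range_prod_subset_iff {ι κ α β : Type*} [Finite κ]
    {a₁ : ι → α} {b₁ : ι → β} {a₂ : κ → α} {b₂ : κ → β}
    (ha₂ : Injective a₂) (hb₂ : Injective b₂) :
    (∃ σ : Perm ι,
        Set.range (fun k ↦ (a₂ k, b₂ k)) ⊆ Set.range (fun l ↦ (a₁ l, b₁ (σ l)))) ↔
      Set.range a₂ ⊆ Set.range a₁ ∧ Set.range b₂ ⊆ Set.range b₁ := by
  constructor
  · rintro ⟨σ, h⟩
    refine ⟨?_, ?_⟩ <;> rintro _ ⟨k, rfl⟩ <;> obtain ⟨l, hl⟩ := h ⟨k, rfl⟩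
    exacts [⟨l, congrArg Prod.fst hl⟩, ⟨σ l, congrArg Prod.snd hl⟩]
  · rintro ⟨hrow, hcol⟩
    choose i hi using Set.range_subset_iff.mp hrow
    choose j hj using Set.range_subset_iff.mp hcol
    have hi_inj : Injective i := fun k k' h ↦ ha₂ (by rw [← hi, ← hi, h])
    have hj_inj : Injective j := fun k k' h ↦ hb₂ (by rw [← hj, ← hj, h])
    obtain ⟨σ, hσ⟩ := Perm.exists_extending_pair i j hi_inj hj_inj
    exact ⟨σ, Set.range_subset_iff.mpr fun k ↦ ⟨i k, by simp only [hi, hσ, hj]⟩⟩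

theorem exists_perm_sum_single_le_iff {ι κ α β : Type*} [Fintype ι] [Fintype κ]
    {a₁ : ι → α} {b₁ : ι → β} {a₂ : κ → α} {b₂ : κ → β}
    (ha₂ : Injective a₂) (hb₂ : Injective b₂) :
    (∃ σ : Perm ι, (∑ k, Finsupp.single (a₂ k, b₂ k) 1 : α × β →₀ ℕ) ≤
        ∑ l, Finsupp.single (a₁ l, b₁ (σ l)) 1) ↔
      Set.range a₂ ⊆ Set.range a₁ ∧ Set.range b₂ ⊆ Set.range b₁ := by
  have hpair : Injective fun k ↦ (a₂ k, b₂ k) := fun k k' h ↦ ha₂ (congrArg Prod.fst h)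
  simp_rw [Finsupp.sum_single_one_le_sum_single_one_iff hpair]
  exact exists_perm_range_prod_subset_iff ha₂ hb₂

/-- Monomials are exponent vectors, divisibility is `≤`. The terms of the minor on rows `a₁`,
columns `b₁` are indexed by `σ`; the anti-diagonal (resp. diagonal) leading term of the minor on
`a₂`, `b₂` pairs row `a₂ k` with column `b₂ k.rev` (resp. `b₂ k`). -/
theorem stmt_3_general (m n r₁ r₂ : ℕ)
    (a₁ : Fin r₁ → Fin m) (b₁ : Fin r₁ → Fin n) (a₂ : Fin r₂ → Fin m) (b₂ : Fin r₂ → Fin n)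
    (ha₂ : StrictMono a₂) (hb₂ : StrictMono b₂) :
    ((∃ σ : Equiv.Perm (Fin r₁),
        (∑ k : Fin r₂, Finsupp.single (a₂ k, b₂ k.rev) 1 : (Fin m × Fin n) →₀ ℕ) ≤
          ∑ k : Fin r₁, Finsupp.single (a₁ k, b₁ (σ k)) 1) ↔
      Set.range a₂ ⊆ Set.range a₁ ∧ Set.range b₂ ⊆ Set.range b₁) ∧
    ((∃ σ : Equiv.Perm (Fin r₁),
        (∑ k : Fin r₂, Finsupp.single (a₂ k, b₂ k) 1 : (Fin m × Fin n) →₀ ℕ) ≤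
          ∑ k : Fin r₁, Finsupp.single (a₁ k, b₁ (σ k)) 1) ↔
      Set.range a₂ ⊆ Set.range a₁ ∧ Set.range b₂ ⊆ Set.range b₁) := by
  refine ⟨?_, exists_perm_sum_single_le_iff ha₂.injective hb₂.injective⟩
  rw [← Fin.rev_surjective.range_comp b₂]
  exact exists_perm_sum_single_le_iff ha₂.injective (hb₂.injective.comp Fin.rev_injective)

/-- Let `m₁` (rows `a₁`, columns `b₁`) and `m₂` (rows `a₂`, columns `b₂`)
be two distinct minors of the generic matrix.  The terms of `m₁` are the monomials
`∏ₖ x_{a₁ k, b₁ (σ k)}` for permutations `σ`; the leading term of `m₂` w.r.t. an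
anti-diagonal (resp. diagonal) term order is `∏ₖ x_{a₂ k, b₂ (rev k)}` (resp.
`∏ₖ x_{a₂ k, b₂ k}`), and divisibility of monomials is `≤` of exponent vectors.
Then `m₁` is reducible modulo `m₂` — some term of `m₁` is divisible by the leading term
of `m₂` — iff `R(m₂) ⊆ R(m₁)` and `C(m₂) ⊆ C(m₁)`; this holds both for the
anti-diagonal and the diagonal term order. -/
theorem stmt_3 (m n r₁ r₂ : ℕ)
    (a₁ : Fin r₁ → Fin m) (b₁ : Fin r₁ → Fin n) (a₂ : Fin r₂ → Fin m) (b₂ : Fin r₂ → Fin n)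
    (ha₁ : StrictMono a₁) (hb₁ : StrictMono b₁) (ha₂ : StrictMono a₂) (hb₂ : StrictMono b₂)
    (hne : ¬ (Set.range a₁ = Set.range a₂ ∧ Set.range b₁ = Set.range b₂)) :
    ((∃ σ : Equiv.Perm (Fin r₁),
        (∑ k : Fin r₂, Finsupp.single (a₂ k, b₂ k.rev) 1 : (Fin m × Fin n) →₀ ℕ) ≤
          ∑ k : Fin r₁, Finsupp.single (a₁ k, b₁ (σ k)) 1) ↔
      Set.range a₂ ⊆ Set.range a₁ ∧ Set.range b₂ ⊆ Set.range b₁) ∧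
    ((∃ σ : Equiv.Perm (Fin r₁),
        (∑ k : Fin r₂, Finsupp.single (a₂ k, b₂ k) 1 : (Fin m × Fin n) →₀ ℕ) ≤
          ∑ k : Fin r₁, Finsupp.single (a₁ k, b₁ (σ k)) 1) ↔
      Set.range a₂ ⊆ Set.range a₁ ∧ Set.range b₂ ⊆ Set.range b₁) :=
  stmt_3_general m n r₁ r₂ a₁ b₁ a₂ b₂ ha₂ hb₂
end

section
/- Let m₁ and m₂ be two distinct minors of a generic matrix such that m₁ is reducible modulo m₂ (equivalently, m₂ is contained in m₁), with respect to a fixed anti-diagonal or diagonal term order. Writing m₁ = Σ c_t t over its terms with c_t = ±1, the full reduction of m₁ modulo m₂ yields the polynomial Σ c_t t where the sum is over terms of m₁ not in the removed set rterm(m₁,m₂) = { t·t̄ : t a term of m₂, t̄ a term of the complement of m₂ in m₁ }. -/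
/-- One step of reduction of `P` modulo `Q`, where `L` is the exponent vector of the
leading term of `Q`: pick a term of `P` whose exponent `E` is divisible by `L` and
subtract `(coeff of E in P)/(lc Q) · x^{E-L} · Q`. -/
def ReduceStep {σ' K : Type*} [Field K] (Q : MvPolynomial σ' K) (L : σ' →₀ ℕ)
    (P P' : MvPolynomial σ' K) : Prop :=
  ∃ E ∈ P.support, L ≤ E ∧
    P' = P - MvPolynomial.C (P.coeff E / Q.coeff L) * MvPolynomial.monomial (E - L) 1 * Q


open MvPolynomial Equiv Finset

namespace Stmt5Aux

variable {K : Type*} [Field K]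

noncomputable def ks (K : Type*) [Field K] {α : Type*} [DecidableEq α] [Fintype α]
    (π : Equiv.Perm α) : K := ((Equiv.Perm.sign π : ℤ) : K)

lemma ks_mul_self {α : Type*} [DecidableEq α] [Fintype α] (π : Equiv.Perm α) :
    ks K π * ks K π = 1 := by
  unfold ks
  rw [← Int.cast_mul, ← Units.val_mul, Int.units_mul_self]
  simp

lemma ks_ne_zero {α : Type*} [DecidableEq α] [Fintype α] (π : Equiv.Perm α) :
    ks K π ≠ 0 := by
  intro h
  have h2 := ks_mul_self (K := K) π
  rw [h, zero_mul] at h2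
  exact zero_ne_one h2

lemma div_ks {α : Type*} [DecidableEq α] [Fintype α] (x : K) (π : Equiv.Perm α) :
    x / ks K π = x * ks K π := by
  rw [div_eq_mul_inv, inv_eq_of_mul_eq_one_right (ks_mul_self π)]

noncomputable def Epi {ι R Cl : Type*} [Fintype ι] (ρ : ι → R) (γ : ι → Cl)
    (π : Equiv.Perm ι) : (R × Cl) →₀ ℕ :=
  ∑ p, Finsupp.single (ρ p, γ (π p)) 1

lemma Epi_apply {ι R Cl : Type*} [Fintype ι] [DecidableEq R] [DecidableEq Cl]
    {ρ : ι → R} {γ : ι → Cl} (hρ : Function.Injective ρ) (π : Equiv.Perm ι) (p : ι) (c : Cl) :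
    Epi ρ γ π (ρ p, c) = if γ (π p) = c then 1 else 0 := by
  classical
  unfold Epi
  rw [Finsupp.finset_sum_apply, Finset.sum_eq_single p]
  · simp [Finsupp.single_apply, Prod.ext_iff]
  · intro q _ hq
    rw [Finsupp.single_apply, if_neg]
    intro h
    exact hq (hρ (congrArg Prod.fst h))
  · intro h; exact absurd (Finset.mem_univ p) h

lemma Epi_ne_zero {ι R Cl : Type*} [Fintype ι] {ρ : ι → R} {γ : ι → Cl}
    (π : Equiv.Perm ι) (x : R × Cl) (h : Epi ρ γ π x ≠ 0) :
    ∃ p, (ρ p, γ (π p)) = x := by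
  classical
  by_contra hc
  push_neg at hc
  apply h
  unfold Epi
  rw [Finsupp.finset_sum_apply]
  exact Finset.sum_eq_zero fun p _ => by rw [Finsupp.single_apply, if_neg (hc p)]

lemma Epi_inj {ι R Cl : Type*} [Fintype ι] {ρ : ι → R} {γ : ι → Cl}
    (hρ : Function.Injective ρ) (hγ : Function.Injective γ) :
    Function.Injective (Epi ρ γ) := by
  classical
  intro π π' h
  ext p
  have h1 : Epi ρ γ π (ρ p, γ (π p)) = 1 := by rw [Epi_apply hρ, if_pos rfl]
  rw [h, Epi_apply hρ] at h1
  split_ifs at h1 with hc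
  exact (hγ hc).symm

lemma prod_X_eq {ι σ' : Type*} (s : Finset ι) (f : ι → σ') :
    (∏ i ∈ s, (X (f i) : MvPolynomial σ' K)) =
      monomial (∑ i ∈ s, Finsupp.single (f i) 1) 1 := by
  classical
  induction s using Finset.cons_induction with
  | empty => simp
  | cons i s hi ih =>
    rw [Finset.prod_cons, Finset.sum_cons, ih, monomial_single_add, pow_one]

lemma detX {ι R Cl : Type*} [Fintype ι] [DecidableEq ι] (ρ : ι → R) (γ : ι → Cl) :
    Matrix.det (Matrix.of fun p q : ι => (X (ρ p, γ q) : MvPolynomial (R × Cl) K)) =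
      ∑ π : Equiv.Perm ι, C (ks K π) * monomial (Epi ρ γ π) 1 := by
  rw [← Matrix.det_transpose, Matrix.det_apply]
  refine Finset.sum_congr rfl fun π _ => ?_
  have h1 : ∀ i, (Matrix.of fun p q : ι => (X (ρ p, γ q) : MvPolynomial (R × Cl) K)).transpose (π i) i
      = X (ρ i, γ (π i)) := fun i => rfl
  simp only [h1]
  rw [prod_X_eq, Units.smul_def, ← Int.cast_smul_eq_zsmul K, smul_eq_C_mul]
  rfl

lemma coeff_detX_apply {ι R Cl : Type*} [Fintype ι] [DecidableEq ι]
    {ρ : ι → R} {γ : ι → Cl} (hρ : Function.Injective ρ) (hγ : Function.Injective γ)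
    (π : Equiv.Perm ι) :
    MvPolynomial.coeff (Epi ρ γ π)
      (Matrix.det (Matrix.of fun p q : ι => (X (ρ p, γ q) : MvPolynomial (R × Cl) K)))
      = ks K π := by
  classical
  rw [detX, coeff_sum, Finset.sum_eq_single π]
  · rw [coeff_C_mul, coeff_monomial, if_pos rfl, mul_one]
  · intro q _ hq
    rw [coeff_C_mul, coeff_monomial, if_neg (fun h => hq (Epi_inj hρ hγ h)), mul_zero]
  · intro h; exact absurd (Finset.mem_univ π) h

lemma coeff_detX_zero {ι R Cl : Type*} [Fintype ι] [DecidableEq ι]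
    (ρ : ι → R) (γ : ι → Cl) (E : (R × Cl) →₀ ℕ) (hE : ∀ π, Epi ρ γ π ≠ E) :
    MvPolynomial.coeff E
      (Matrix.det (Matrix.of fun p q : ι => (X (ρ p, γ q) : MvPolynomial (R × Cl) K)))
      = 0 := by
  classical
  rw [detX, coeff_sum]
  exact Finset.sum_eq_zero fun q _ => by
    rw [coeff_C_mul, coeff_monomial, if_neg (hE q), mul_zero]



lemma key (K : Type*) [Field K] (m n r k : ℕ)
    (a : Fin r → Fin m) (b : Fin r → Fin n)
    (ha : Function.Injective a) (hb : Function.Injective b)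
    (u v : Fin k → Fin r) (uc vc : Fin (r - k) → Fin r)
    (hu : Function.Injective u) (hv : Function.Injective v)
    (huc : Function.Injective uc) (hvc : Function.Injective vc)
    (hucompl : Set.range uc = (Set.range u)ᶜ) (hvcompl : Set.range vc = (Set.range v)ᶜ)
    (M₁ M₂ : MvPolynomial (Fin m × Fin n) K)
    (hM₁ : M₁ = Matrix.det (Matrix.of fun p q : Fin r => MvPolynomial.X (a p, b q)))
    (hM₂ : M₂ = Matrix.det (Matrix.of fun p q : Fin k => MvPolynomial.X (a (u p), b (v q))))
    (σ₀ : Equiv.Perm (Fin k)) (L : (Fin m × Fin n) →₀ ℕ)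
    (hL : L = ∑ x : Fin k, Finsupp.single (a (u x), b (v (σ₀ x))) 1)
    (rt : Set ((Fin m × Fin n) →₀ ℕ))
    (hrt : rt = {E | ∃ (σ : Equiv.Perm (Fin k)) (τ : Equiv.Perm (Fin (r - k))),
        E = (∑ x : Fin k, Finsupp.single (a (u x), b (v (σ x))) 1) +
          ∑ x : Fin (r - k), Finsupp.single (a (uc x), b (vc (τ x))) 1}) :
    ∃ P : MvPolynomial (Fin m × Fin n) K,
        Relation.ReflTransGen (ReduceStep M₂ L) M₁ P ∧
        (∀ E ∈ P.support, ¬ L ≤ E) ∧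
        (∀ E ∈ rt, P.coeff E = 0) ∧ ∀ E ∉ rt, P.coeff E = M₁.coeff E := by
  classical
  have hau : Function.Injective (fun x => a (u x)) := fun x y h => hu (ha h)
  have hbv : Function.Injective (fun x => b (v x)) := fun x y h => hv (hb h)
  have hauc : Function.Injective (fun x => a (uc x)) := fun x y h => huc (ha h)
  have hbvc : Function.Injective (fun x => b (vc x)) := fun x y h => hvc (hb h)
  have hdisj : ∀ i j, u i ≠ uc j := by
    intro i j h
    have h2 : uc j ∈ (Set.range u)ᶜ := hucompl ▸ Set.mem_range_self j
    exact h2 ⟨i, h⟩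
  have hAbij : Function.Bijective (Sum.elim u uc) := by
    constructor
    · rintro (i | j) (i' | j') h
      · exact congrArg Sum.inl (hu h)
      · exact absurd h (hdisj i j')
      · exact absurd h.symm (hdisj i' j)
      · exact congrArg Sum.inr (huc h)
    · intro x
      by_cases hx : x ∈ Set.range u
      · obtain ⟨i, rfl⟩ := hx; exact ⟨Sum.inl i, rfl⟩
      · have h2 : x ∈ Set.range uc := by rw [hucompl]; exact hx
        obtain ⟨j, rfl⟩ := h2; exact ⟨Sum.inr j, rfl⟩
  obtain ⟨A, hA⟩ : ∃ A : (Fin k ⊕ Fin (r - k)) ≃ Fin r, ∀ s, A s = Sum.elim u uc s :=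
    ⟨Equiv.ofBijective _ hAbij, fun s => rfl⟩
  have hvdisj : ∀ i j, v i ≠ vc j := by
    intro i j h
    have h2 : vc j ∈ (Set.range v)ᶜ := hvcompl ▸ Set.mem_range_self j
    exact h2 ⟨i, h⟩
  have hBbij : Function.Bijective (Sum.elim v vc) := by
    constructor
    · rintro (i | j) (i' | j') h
      · exact congrArg Sum.inl (hv h)
      · exact absurd h (hvdisj i j')
      · exact absurd h.symm (hvdisj i' j)
      · exact congrArg Sum.inr (hvc h)
    · intro x
      by_cases hx : x ∈ Set.range v
      · obtain ⟨i, rfl⟩ := hx; exact ⟨Sum.inl i, rfl⟩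
      · have h2 : x ∈ Set.range vc := by rw [hvcompl]; exact hx
        obtain ⟨j, rfl⟩ := h2; exact ⟨Sum.inr j, rfl⟩
  obtain ⟨B, hB⟩ : ∃ B : (Fin k ⊕ Fin (r - k)) ≃ Fin r, ∀ s, B s = Sum.elim v vc s :=
    ⟨Equiv.ofBijective _ hBbij, fun s => rfl⟩
  have hAs_u : ∀ i, A.symm (u i) = Sum.inl i := by
    intro i; rw [Equiv.symm_apply_eq, hA]; rfl
  have hAs_uc : ∀ j, A.symm (uc j) = Sum.inr j := by
    intro j; rw [Equiv.symm_apply_eq, hA]; rfl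
  set πst : Equiv.Perm (Fin k) → Equiv.Perm (Fin (r - k)) → Equiv.Perm (Fin r) :=
    fun σ τ => (A.permCongr (σ.sumCongr τ)).trans (A.symm.trans B) with hπst
  have hπu : ∀ σ τ i, πst σ τ (u i) = v (σ i) := by
    intro σ τ i
    simp only [hπst, Equiv.trans_apply, Equiv.permCongr_apply, Equiv.sumCongr_apply,
      hAs_u, Sum.map_inl, Equiv.symm_apply_apply, hB, Sum.elim_inl]
  have hπuc : ∀ σ τ j, πst σ τ (uc j) = vc (τ j) := by
    intro σ τ j
    simp only [hπst, Equiv.trans_apply, Equiv.permCongr_apply, Equiv.sumCongr_apply,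
      hAs_uc, Sum.map_inr, Equiv.symm_apply_apply, hB, Sum.elim_inr]
  have hsignZ : ∀ σ τ, Equiv.Perm.sign (πst σ τ) =
      Equiv.Perm.sign (A.symm.trans B : Equiv.Perm (Fin r)) *
        (Equiv.Perm.sign σ * Equiv.Perm.sign τ) := by
    intro σ τ
    have hfac : πst σ τ =
        (A.symm.trans B : Equiv.Perm (Fin r)) * A.permCongr (σ.sumCongr τ) := rfl
    rw [hfac, map_mul, Equiv.Perm.sign_permCongr, Equiv.Perm.sign_sumCongr]
  have hsign : ∀ σ τ, ks K (πst σ τ) =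
      ks K (A.symm.trans B : Equiv.Perm (Fin r)) * (ks K σ * ks K τ) := by
    intro σ τ
    unfold ks
    rw [hsignZ σ τ]
    push_cast [Units.val_mul]
    ring
  have hπst_inj : ∀ {σ τ σ' τ'}, πst σ τ = πst σ' τ' → σ = σ' ∧ τ = τ' := by
    intro σ τ σ' τ' h
    constructor
    · refine Equiv.ext fun i => hv ?_
      rw [← hπu σ τ i, ← hπu σ' τ' i, h]
    · refine Equiv.ext fun j => hvc ?_
      rw [← hπuc σ τ j, ← hπuc σ' τ' j, h]
  have hsplit : ∀ σ τ, Epi a b (πst σ τ) =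
      Epi (fun x => a (u x)) (fun x => b (v x)) σ +
        Epi (fun x => a (uc x)) (fun x => b (vc x)) τ := by
    intro σ τ
    have h1 : Epi a b (πst σ τ) = ∑ s : Fin k ⊕ Fin (r - k),
        Finsupp.single (a (A s), b (πst σ τ (A s))) 1 :=
      (Equiv.sum_comp A (fun p => Finsupp.single (a p, b (πst σ τ p)) 1)).symm
    rw [h1, Fintype.sum_sum_type]
    congr 1
    · refine Finset.sum_congr rfl fun i _ => ?_
      rw [hA]
      simp only [Sum.elim_inl, hπu]
    · refine Finset.sum_congr rfl fun j _ => ?_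
      rw [hA]
      simp only [Sum.elim_inr, hπuc]
  have hE2 : ∀ σ : Equiv.Perm (Fin k), Epi (fun x => a (u x)) (fun x => b (v x)) σ =
      ∑ x : Fin k, Finsupp.single (a (u x), b (v (σ x))) 1 := fun σ => rfl
  have hEt : ∀ τ : Equiv.Perm (Fin (r - k)),
      Epi (fun x => a (uc x)) (fun x => b (vc x)) τ =
        ∑ x : Fin (r - k), Finsupp.single (a (uc x), b (vc (τ x))) 1 := fun τ => rfl
  have hrt' : ∀ E, E ∈ rt ↔ ∃ σ τ, E = Epi a b (πst σ τ) := by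
    intro E
    rw [hrt]
    simp only [Set.mem_setOf_eq]
    constructor
    · rintro ⟨σ, τ, rfl⟩
      exact ⟨σ, τ, by rw [hsplit, hE2, hEt]⟩
    · rintro ⟨σ, τ, rfl⟩
      exact ⟨σ, τ, by rw [hsplit, hE2, hEt]⟩
  have hM₁coeff : ∀ π, MvPolynomial.coeff (Epi a b π) M₁ = ks K π := by
    intro π; rw [hM₁]; exact coeff_detX_apply ha hb π
  have hM₁zero : ∀ E, (∀ π, Epi a b π ≠ E) → MvPolynomial.coeff E M₁ = 0 := by
    intro E hE; rw [hM₁]; exact coeff_detX_zero a b E hE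
  have hM₂coeff : ∀ σ,
      MvPolynomial.coeff (Epi (fun x => a (u x)) (fun x => b (v x)) σ) M₂ = ks K σ := by
    intro σ; rw [hM₂]; exact coeff_detX_apply hau hbv σ
  have hM₂zero : ∀ E, (∀ σ, Epi (fun x => a (u x)) (fun x => b (v x)) σ ≠ E) →
      MvPolynomial.coeff E M₂ = 0 := by
    intro E hE; rw [hM₂]; exact coeff_detX_zero _ _ E hE
  have hL' : L = Epi (fun x => a (u x)) (fun x => b (v x)) σ₀ := by rw [hL, hE2]
  have hlc : MvPolynomial.coeff L M₂ = ks K σ₀ := by rw [hL']; exact hM₂coeff σ₀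
  set D : Equiv.Perm (Fin (r - k)) → MvPolynomial (Fin m × Fin n) K := fun τ =>
    MvPolynomial.C (ks K (πst σ₀ τ) * ks K σ₀) *
      MvPolynomial.monomial (Epi (fun x => a (uc x)) (fun x => b (vc x)) τ) 1 * M₂ with hD
  set PS : Finset (Equiv.Perm (Fin (r - k))) → MvPolynomial (Fin m × Fin n) K :=
    fun S => M₁ - ∑ τ ∈ S, D τ with hPS
  have hcoeffD : ∀ τ' E, MvPolynomial.coeff E (D τ') =
      (ks K (πst σ₀ τ') * ks K σ₀) *
        if Epi (fun x => a (uc x)) (fun x => b (vc x)) τ' ≤ E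
          then MvPolynomial.coeff (E - Epi (fun x => a (uc x)) (fun x => b (vc x)) τ') M₂
          else 0 := by
    intro τ' E
    simp only [hD]
    rw [mul_assoc, MvPolynomial.coeff_C_mul, MvPolynomial.coeff_monomial_mul']
    simp only [one_mul]
  have hD_ne : ∀ τ' E, MvPolynomial.coeff E (D τ') ≠ 0 →
      ∃ σ, E = Epi a b (πst σ τ') := by
    intro τ' E h
    rw [hcoeffD] at h
    by_cases hle : Epi (fun x => a (uc x)) (fun x => b (vc x)) τ' ≤ E
    · rw [if_pos hle] at h
      have h2 : MvPolynomial.coeff (E - Epi (fun x => a (uc x)) (fun x => b (vc x)) τ') M₂ ≠ 0 :=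
        fun h0 => h (by rw [h0, mul_zero])
      have h3 : ∃ σ, Epi (fun x => a (u x)) (fun x => b (v x)) σ =
          E - Epi (fun x => a (uc x)) (fun x => b (vc x)) τ' := by
        by_contra hc
        push_neg at hc
        exact h2 (hM₂zero _ hc)
      obtain ⟨σ, hσ⟩ := h3
      refine ⟨σ, ?_⟩
      rw [hsplit, hσ]
      exact (tsub_add_cancel_of_le hle).symm
    · rw [if_neg hle, mul_zero] at h
      exact absurd rfl h
  have hDE : ∀ σ τ, MvPolynomial.coeff (Epi a b (πst σ τ)) (D τ) = ks K (πst σ τ) := by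
    intro σ τ
    rw [hcoeffD, hsplit, if_pos le_add_self, add_tsub_cancel_right, hM₂coeff]
    rw [hsign σ₀ τ, hsign σ τ]
    have hself := ks_mul_self (K := K) σ₀
    linear_combination (ks K (A.symm.trans B : Equiv.Perm (Fin r)) * ks K τ * ks K σ) * hself
  have hDnot : ∀ σ τ τ', τ' ≠ τ →
      MvPolynomial.coeff (Epi a b (πst σ τ)) (D τ') = 0 := by
    intro σ τ τ' hne
    by_contra h
    obtain ⟨σ', h'⟩ := hD_ne τ' _ h
    obtain ⟨-, hττ'⟩ := hπst_inj (Epi_inj ha hb h')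
    exact hne hττ'.symm
  have hPScoeff : ∀ S E, MvPolynomial.coeff E (PS S) =
      MvPolynomial.coeff E M₁ - ∑ τ' ∈ S, MvPolynomial.coeff E (D τ') := by
    intro S E
    rw [hPS]
    rw [MvPolynomial.coeff_sub, MvPolynomial.coeff_sum]
  have hPSτ : ∀ (S : Finset (Equiv.Perm (Fin (r - k)))) τ, τ ∉ S →
      MvPolynomial.coeff (Epi a b (πst σ₀ τ)) (PS S) = ks K (πst σ₀ τ) := by
    intro S τ hτS
    rw [hPScoeff, hM₁coeff,
      Finset.sum_eq_zero (fun τ' hτ' => hDnot σ₀ τ τ' (ne_of_mem_of_not_mem hτ' hτS)),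
      sub_zero]
  have hchain : ∀ S : Finset (Equiv.Perm (Fin (r - k))),
      Relation.ReflTransGen (ReduceStep M₂ L) M₁ (PS S) := by
    intro S
    induction S using Finset.induction_on with
    | empty =>
      simp only [hPS, Finset.sum_empty, sub_zero]
      exact Relation.ReflTransGen.refl
    | @insert τ S hτS ih =>
      refine ih.tail ?_
      refine ⟨Epi a b (πst σ₀ τ), ?_, ?_, ?_⟩
      · rw [MvPolynomial.mem_support_iff, hPSτ S τ hτS]
        exact ks_ne_zero _
      · rw [hL', hsplit]
        exact le_self_add
      · have hdiv : MvPolynomial.coeff (Epi a b (πst σ₀ τ)) (PS S) / MvPolynomial.coeff L M₂ =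
            ks K (πst σ₀ τ) * ks K σ₀ := by
          rw [hPSτ S τ hτS, hlc, div_ks]
        have hEL : Epi a b (πst σ₀ τ) - L =
            Epi (fun x => a (uc x)) (fun x => b (vc x)) τ := by
          rw [hL', hsplit]
          exact add_tsub_cancel_left _ _
        rw [hdiv, hEL]
        simp only [hPS, hD]
        rw [Finset.sum_insert hτS]
        ring
  have hz : ∀ E ∈ rt, MvPolynomial.coeff E (PS Finset.univ) = 0 := by
    intro E hE
    rw [hrt'] at hE
    obtain ⟨σ, τ, rfl⟩ := hE
    rw [hPScoeff, hM₁coeff, Finset.sum_eq_single τ]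
    · rw [hDE, sub_self]
    · intro τ' _ hne; exact hDnot σ τ τ' hne
    · intro h; exact absurd (Finset.mem_univ τ) h
  have hnz : ∀ E ∉ rt, MvPolynomial.coeff E (PS Finset.univ) = MvPolynomial.coeff E M₁ := by
    intro E hE
    rw [hPScoeff]
    rw [Finset.sum_eq_zero, sub_zero]
    intro τ' _
    by_contra h
    obtain ⟨σ, hσ⟩ := hD_ne τ' E h
    exact hE ((hrt' E).mpr ⟨σ, τ', hσ⟩)
  refine ⟨PS Finset.univ, hchain _, ?_, hz, hnz⟩
  intro E hEsupp hLE
  have hEne := MvPolynomial.mem_support_iff.1 hEsupp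
  have hErt : E ∉ rt := fun h => hEne (hz E h)
  have hM₁ne : MvPolynomial.coeff E M₁ ≠ 0 := by rw [← hnz E hErt]; exact hEne
  have hex : ∃ π, Epi a b π = E := by
    by_contra hc
    push_neg at hc
    exact hM₁ne (hM₁zero E hc)
  obtain ⟨π, hπ⟩ := hex
  have hcond : ∀ i, π (u i) = v (σ₀ i) := by
    intro i
    have h1 : L (a (u i), b (v (σ₀ i))) = 1 := by
      rw [hL']
      simpa using Epi_apply (γ := fun x => b (v x)) hau σ₀ i (b (v (σ₀ i)))
    have h2 := (Finsupp.le_def.mp hLE) (a (u i), b (v (σ₀ i)))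
    rw [h1] at h2
    have h3 : Epi a b π (a (u i), b (v (σ₀ i))) ≠ 0 := by
      rw [hπ]; omega
    obtain ⟨p, hp⟩ := Epi_ne_zero π _ h3
    obtain ⟨hp1, hp2⟩ := Prod.ext_iff.1 hp
    have hpu : p = u i := ha hp1
    rw [hpu] at hp2
    exact hb hp2
  have hmem : ∀ j, π (uc j) ∈ Set.range vc := by
    intro j
    rw [hvcompl]
    rintro ⟨i, hi⟩
    have h4 : π (u (σ₀⁻¹ i)) = v i := by
      rw [hcond, Equiv.Perm.inv_def, Equiv.apply_symm_apply]
    have h5 : u (σ₀⁻¹ i) = uc j := π.injective (by rw [h4, hi])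
    exact hdisj _ _ h5
  choose g hg using hmem
  have hginj : Function.Injective g := by
    intro j j' h
    have h6 : vc (g j) = vc (g j') := congrArg vc h
    rw [hg, hg] at h6
    exact huc (π.injective h6)
  let τ : Equiv.Perm (Fin (r - k)) :=
    Equiv.ofBijective g (Finite.injective_iff_bijective.mp hginj)
  have hτ : ∀ j, τ j = g j := fun j => rfl
  have hπeq : π = πst σ₀ τ := by
    refine Equiv.ext fun x => ?_
    obtain ⟨s, rfl⟩ := A.surjective x
    rw [hA]
    cases s with
    | inl i =>
      simp only [Sum.elim_inl]
      rw [hcond, hπu]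
    | inr j =>
      simp only [Sum.elim_inr]
      rw [hπuc, hτ, hg]
  exact hErt ((hrt' E).mpr ⟨σ₀, τ, by rw [← hπ, hπeq]⟩)

end Stmt5Aux

/-- Let `m₁` be the minor with rows `a`, columns `b`, and `m₂` a distinct
minor contained in it (position maps `u, v`, complementary positions `uc, vc`), so that
`m₁` is reducible modulo `m₂`.  `rt` is the removed set `rterm(m₁,m₂)`: exponents of
products of a term of `m₂` and a term of its complement in `m₁`.  For the anti-diagonal
leading term `La` of `m₂` (and likewise for the diagonal leading term `Ld`), the full
reduction of `m₁` modulo `m₂` yields the polynomial whose terms are exactly the terms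
of `m₁` outside `rterm(m₁,m₂)`, with the same coefficients `c_t = ±1`. -/
theorem stmt_5 (K : Type*) [Field K] (m n r k : ℕ)
    (a : Fin r → Fin m) (b : Fin r → Fin n) (ha : StrictMono a) (hb : StrictMono b)
    (u v : Fin k → Fin r) (uc vc : Fin (r - k) → Fin r)
    (hu : StrictMono u) (hv : StrictMono v) (huc : StrictMono uc) (hvc : StrictMono vc)
    (hucompl : Set.range uc = (Set.range u)ᶜ) (hvcompl : Set.range vc = (Set.range v)ᶜ)
    (hkr : k < r)
    (M₁ M₂ : MvPolynomial (Fin m × Fin n) K)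
    (hM₁ : M₁ = Matrix.det (Matrix.of fun p q : Fin r => MvPolynomial.X (a p, b q)))
    (hM₂ : M₂ = Matrix.det (Matrix.of fun p q : Fin k => MvPolynomial.X (a (u p), b (v q))))
    (La Ld : (Fin m × Fin n) →₀ ℕ)
    (hLa : La = ∑ x : Fin k, Finsupp.single (a (u x), b (v x.rev)) 1)
    (hLd : Ld = ∑ x : Fin k, Finsupp.single (a (u x), b (v x)) 1)
    (rt : Set ((Fin m × Fin n) →₀ ℕ))
    (hrt : rt = {E | ∃ (σ : Equiv.Perm (Fin k)) (τ : Equiv.Perm (Fin (r - k))),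
        E = (∑ x : Fin k, Finsupp.single (a (u x), b (v (σ x))) 1) +
          ∑ x : Fin (r - k), Finsupp.single (a (uc x), b (vc (τ x))) 1}) :
    (∃ P : MvPolynomial (Fin m × Fin n) K,
        Relation.ReflTransGen (ReduceStep M₂ La) M₁ P ∧
        (∀ E ∈ P.support, ¬ La ≤ E) ∧
        (∀ E ∈ rt, P.coeff E = 0) ∧ ∀ E ∉ rt, P.coeff E = M₁.coeff E) ∧
    (∃ P : MvPolynomial (Fin m × Fin n) K,
        Relation.ReflTransGen (ReduceStep M₂ Ld) M₁ P ∧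
        (∀ E ∈ P.support, ¬ Ld ≤ E) ∧
        (∀ E ∈ rt, P.coeff E = 0) ∧ ∀ E ∉ rt, P.coeff E = M₁.coeff E) := by
  constructor
  · refine Stmt5Aux.key K m n r k a b ha.injective hb.injective u v uc vc hu.injective
      hv.injective huc.injective hvc.injective hucompl hvcompl M₁ M₂ hM₁ hM₂
      Fin.revPerm La ?_ rt hrt
    rw [hLa]
    simp [Fin.revPerm_apply]
  · refine Stmt5Aux.key K m n r k a b ha.injective hb.injective u v uc vc hu.injective
      hv.injective huc.injective hvc.injective hucompl hvcompl M₁ M₂ hM₁ hM₂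
      1 Ld ?_ rt hrt
    rw [hLd]
    simp
end

section
/- Let m be a minor containing two minors f₁ and f₂ of a generic matrix. If R(f₂) ⊆ R(f₁) and C(f₂) ⊄ C(f₁), or C(f₂) ⊆ C(f₁) and R(f₂) ⊄ R(f₁), then the removed sets rterm(m,f₁) and rterm(m,f₂) are disjoint. -/
/-!
Every variable dividing a term of `rterm(m, f₁)` lies in the block `R(f₁) × C(f₁)` or in the
complementary block `R(f̄₁) × C(f̄₁)`, and these blocks share neither a row nor a column. A term of
`rterm(m, f₂)` contains a variable in every column of `f₂`; if `R(f₂) ⊆ R(f₁)`, the one in a column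
outside `C(f₁)` sits in a row of `f₁` and so lies in neither block. The other case is the transpose.
-/

open Finsupp

theorem Finsupp.sum_single_one_apply_ne_zero_iff {ι α : Type*} [Fintype ι] (p : ι → α) (z : α) :
    (∑ i, single (p i) (1 : ℕ)) z ≠ 0 ↔ z ∈ Set.range p := by
  classical
  rw [finsetSum_apply, Ne, Finset.sum_eq_zero_iff]
  simp [single_apply, eq_comm]

theorem Finsupp.sum_single_one_add_apply_ne_zero_iff {ι κ α : Type*} [Fintype ι] [Fintype κ]
    (p : ι → α) (q : κ → α) (z : α) :
    ((∑ i, single (p i) (1 : ℕ)) + ∑ j, single (q j) (1 : ℕ)) z ≠ 0 ↔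
      z ∈ Set.range p ∨ z ∈ Set.range q := by
  rw [add_apply, Ne, Nat.add_eq_zero_iff, not_and_or, ← Ne, ← Ne,
    sum_single_one_apply_ne_zero_iff, sum_single_one_apply_ne_zero_iff]

theorem Set.disjoint_range_comp_of_range_eq_compl {ι κ α β : Type*} {a : α → β}
    (ha : Function.Injective a) {u : ι → α} {uc : κ → α} (hcompl : Set.range uc = (Set.range u)ᶜ) :
    Disjoint (Set.range (a ∘ u)) (Set.range (a ∘ uc)) := by
  rw [Set.range_comp, Set.range_comp, Set.disjoint_image_iff ha, hcompl]
  exact disjoint_compl_right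

theorem stmt_6_general (m n r k₁ k₂ : ℕ)
    (a : Fin r → Fin m) (b : Fin r → Fin n) (ha : StrictMono a) (hb : StrictMono b)
    (u₁ v₁ : Fin k₁ → Fin r) (uc₁ vc₁ : Fin (r - k₁) → Fin r)
    (hucompl₁ : Set.range uc₁ = (Set.range u₁)ᶜ) (hvcompl₁ : Set.range vc₁ = (Set.range v₁)ᶜ)
    (u₂ v₂ : Fin k₂ → Fin r) (uc₂ vc₂ : Fin (r - k₂) → Fin r)
    (hcond :
      (Set.range (fun x => a (u₂ x)) ⊆ Set.range (fun x => a (u₁ x)) ∧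
        ¬ Set.range (fun x => b (v₂ x)) ⊆ Set.range (fun x => b (v₁ x))) ∨
      (Set.range (fun x => b (v₂ x)) ⊆ Set.range (fun x => b (v₁ x)) ∧
        ¬ Set.range (fun x => a (u₂ x)) ⊆ Set.range (fun x => a (u₁ x)))) :
    ∀ E : (Fin m × Fin n) →₀ ℕ,
      (∃ (σ : Equiv.Perm (Fin k₁)) (τ : Equiv.Perm (Fin (r - k₁))),
        E = (∑ x : Fin k₁, Finsupp.single (a (u₁ x), b (v₁ (σ x))) 1) +
          ∑ x : Fin (r - k₁), Finsupp.single (a (uc₁ x), b (vc₁ (τ x))) 1) →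
      ¬ (∃ (σ : Equiv.Perm (Fin k₂)) (τ : Equiv.Perm (Fin (r - k₂))),
        E = (∑ x : Fin k₂, Finsupp.single (a (u₂ x), b (v₂ (σ x))) 1) +
          ∑ x : Fin (r - k₂), Finsupp.single (a (uc₂ x), b (vc₂ (τ x))) 1) := by
  rintro E ⟨σ₁, τ₁, rfl⟩ ⟨σ₂, τ₂, hE⟩
  have hblock (x : Fin k₂) :
      (a (u₂ x) ∈ Set.range (a ∘ u₁) ∧ b (v₂ (σ₂ x)) ∈ Set.range (b ∘ v₁)) ∨
        (a (u₂ x) ∈ Set.range (a ∘ uc₁) ∧ b (v₂ (σ₂ x)) ∈ Set.range (b ∘ vc₁)) := by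
    have hx := (sum_single_one_add_apply_ne_zero_iff (fun i => (a (u₂ i), b (v₂ (σ₂ i))))
      (fun j => (a (uc₂ j), b (vc₂ (τ₂ j)))) _).mpr (.inl ⟨x, rfl⟩)
    rw [← hE, sum_single_one_add_apply_ne_zero_iff] at hx
    rcases hx with ⟨z, hz⟩ | ⟨z, hz⟩
    · exact .inl ⟨⟨z, congrArg Prod.fst hz⟩, ⟨σ₁ z, congrArg Prod.snd hz⟩⟩
    · exact .inr ⟨⟨z, congrArg Prod.fst hz⟩, ⟨τ₁ z, congrArg Prod.snd hz⟩⟩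
  have hrows := Set.disjoint_range_comp_of_range_eq_compl ha.injective hucompl₁
  have hcols := Set.disjoint_range_comp_of_range_eq_compl hb.injective hvcompl₁
  rcases hcond with ⟨hR, hC⟩ | ⟨hC, hR⟩
  · obtain ⟨_, ⟨y, rfl⟩, hy⟩ := Set.not_subset.mp hC
    have hrow : a (u₂ (σ₂.symm y)) ∈ Set.range (a ∘ u₁) := hR ⟨_, rfl⟩
    rcases hblock (σ₂.symm y) with ⟨-, hcol⟩ | ⟨hrow', -⟩
    · exact hy (by simpa using hcol)
    · exact Set.disjoint_left.mp hrows hrow hrow'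
  · obtain ⟨_, ⟨x, rfl⟩, hx⟩ := Set.not_subset.mp hR
    have hcol : b (v₂ (σ₂ x)) ∈ Set.range (b ∘ v₁) := hC ⟨_, rfl⟩
    rcases hblock x with ⟨hrow, -⟩ | ⟨-, hcol'⟩
    · exact hx hrow
    · exact Set.disjoint_left.mp hcols hcol hcol'

/-- Let `m` be the minor with rows `a`, columns `b`, containing two minors
`f₁` (positions `u₁, v₁`, complementary positions `uc₁, vc₁`) and `f₂` (positions
`u₂, v₂`, complementary positions `uc₂, vc₂`).  If `R(f₂) ⊆ R(f₁)` and
`C(f₂) ⊄ C(f₁)`, or `C(f₂) ⊆ C(f₁)` and `R(f₂) ⊄ R(f₁)`, then the removed sets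
`rterm(m,f₁)` and `rterm(m,f₂)` (exponents of products of a term of `fᵢ` with a term
of its complement in `m`) are disjoint. -/
theorem stmt_6 (m n r k₁ k₂ : ℕ)
    (a : Fin r → Fin m) (b : Fin r → Fin n) (ha : StrictMono a) (hb : StrictMono b)
    (u₁ v₁ : Fin k₁ → Fin r) (uc₁ vc₁ : Fin (r - k₁) → Fin r)
    (hu₁ : StrictMono u₁) (hv₁ : StrictMono v₁) (huc₁ : StrictMono uc₁) (hvc₁ : StrictMono vc₁)
    (hucompl₁ : Set.range uc₁ = (Set.range u₁)ᶜ) (hvcompl₁ : Set.range vc₁ = (Set.range v₁)ᶜ)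
    (u₂ v₂ : Fin k₂ → Fin r) (uc₂ vc₂ : Fin (r - k₂) → Fin r)
    (hu₂ : StrictMono u₂) (hv₂ : StrictMono v₂) (huc₂ : StrictMono uc₂) (hvc₂ : StrictMono vc₂)
    (hucompl₂ : Set.range uc₂ = (Set.range u₂)ᶜ) (hvcompl₂ : Set.range vc₂ = (Set.range v₂)ᶜ)
    (hcond :
      (Set.range (fun x => a (u₂ x)) ⊆ Set.range (fun x => a (u₁ x)) ∧
        ¬ Set.range (fun x => b (v₂ x)) ⊆ Set.range (fun x => b (v₁ x))) ∨
      (Set.range (fun x => b (v₂ x)) ⊆ Set.range (fun x => b (v₁ x)) ∧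
        ¬ Set.range (fun x => a (u₂ x)) ⊆ Set.range (fun x => a (u₁ x)))) :
    ∀ E : (Fin m × Fin n) →₀ ℕ,
      (∃ (σ : Equiv.Perm (Fin k₁)) (τ : Equiv.Perm (Fin (r - k₁))),
        E = (∑ x : Fin k₁, Finsupp.single (a (u₁ x), b (v₁ (σ x))) 1) +
          ∑ x : Fin (r - k₁), Finsupp.single (a (uc₁ x), b (vc₁ (τ x))) 1) →
      ¬ (∃ (σ : Equiv.Perm (Fin k₂)) (τ : Equiv.Perm (Fin (r - k₂))),
        E = (∑ x : Fin k₂, Finsupp.single (a (u₂ x), b (v₂ (σ x))) 1) +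
          ∑ x : Fin (r - k₂), Finsupp.single (a (uc₂ x), b (vc₂ (τ x))) 1) :=
  stmt_6_general m n r k₁ k₂ a b ha hb u₁ v₁ uc₁ vc₁ hucompl₁ hvcompl₁ u₂ v₂ uc₂ vc₂ hcond
end

section
/- Let m be a minor containing two distinct minors f₁ and f₂ of the same size. If R(f₁) = R(f₂) or C(f₁) = C(f₂), then rterm(m,f₁) and rterm(m,f₂) are disjoint. -/
lemma aux_ne_zero {ι α : Type*} [Fintype ι] [DecidableEq α] (f : ι → α) (x₀ : ι) :
    (∑ x : ι, Finsupp.single (f x) (1:ℕ)) (f x₀) ≠ 0 := by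
  rw [Finsupp.finset_sum_apply]
  intro h
  have := Finset.sum_eq_zero_iff.mp h x₀ (Finset.mem_univ _)
  simp [Finsupp.single_apply] at this

lemma aux_exists {ι α : Type*} [Fintype ι] [DecidableEq α] (f : ι → α) (p : α)
    (h : (∑ x : ι, Finsupp.single (f x) (1:ℕ)) p ≠ 0) : ∃ x, f x = p := by
  by_contra hc
  push_neg at hc
  apply h
  rw [Finsupp.finset_sum_apply]
  exact Finset.sum_eq_zero fun x _ => by simp [Finsupp.single_apply, hc x]

lemma step_aux {r k : ℕ} {α β : Type*} [DecidableEq α] [DecidableEq β]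
    (ra : Fin r → α) (rb : Fin r → β)
    (hra : Function.Injective ra) (hrb : Function.Injective rb)
    (u₁ v₁ u₂ v₂ : Fin k → Fin r) (uc₁ vc₁ uc₂ vc₂ : Fin (r - k) → Fin r)
    (huc₂ : Set.range uc₂ = (Set.range u₂)ᶜ)
    (σ₁ σ₂ : Equiv.Perm (Fin k)) (τ₁ τ₂ : Equiv.Perm (Fin (r - k)))
    (hE : (∑ x : Fin k, Finsupp.single (ra (u₁ x), rb (v₁ (σ₁ x))) (1:ℕ)) +
        ∑ x : Fin (r - k), Finsupp.single (ra (uc₁ x), rb (vc₁ (τ₁ x))) 1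
      = (∑ x : Fin k, Finsupp.single (ra (u₂ x), rb (v₂ (σ₂ x))) 1) +
        ∑ x : Fin (r - k), Finsupp.single (ra (uc₂ x), rb (vc₂ (τ₂ x))) 1)
    (huu : Set.range u₁ = Set.range u₂) :
    Set.range v₁ ⊆ Set.range v₂ := by
  rintro _ ⟨i, rfl⟩
  set x₀ := σ₁⁻¹ i with hx₀
  set p : α × β := (ra (u₁ x₀), rb (v₁ (σ₁ x₀))) with hp
  have hL : (((∑ x : Fin k, Finsupp.single (ra (u₁ x), rb (v₁ (σ₁ x))) (1:ℕ)) +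
      ∑ x : Fin (r - k), Finsupp.single (ra (uc₁ x), rb (vc₁ (τ₁ x))) 1 : (α × β) →₀ ℕ)) p ≠ 0 := by
    rw [Finsupp.add_apply]
    have := aux_ne_zero (fun x => (ra (u₁ x), rb (v₁ (σ₁ x)))) x₀
    exact fun hc => this (Nat.eq_zero_of_add_eq_zero_right hc)
  rw [hE, Finsupp.add_apply] at hL
  have hor : ((∑ x : Fin k, Finsupp.single (ra (u₂ x), rb (v₂ (σ₂ x))) (1:ℕ) : (α × β) →₀ ℕ)) p ≠ 0 ∨
      ((∑ x : Fin (r - k), Finsupp.single (ra (uc₂ x), rb (vc₂ (τ₂ x))) (1:ℕ) : (α × β) →₀ ℕ)) p ≠ 0 := by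
    omega
  have hsi : σ₁ x₀ = i := by simp [hx₀]
  rcases hor with h | h
  · obtain ⟨y, hy⟩ := aux_exists _ _ h
    rw [hp, Prod.mk.injEq] at hy
    refine ⟨σ₂ y, ?_⟩
    rw [← hsi]
    exact hrb hy.2
  · obtain ⟨y, hy⟩ := aux_exists _ _ h
    rw [hp, Prod.mk.injEq] at hy
    have h1 : uc₂ y = u₁ x₀ := hra hy.1
    have h2 : u₁ x₀ ∈ Set.range u₂ := huu ▸ Set.mem_range_self x₀
    have h3 : uc₂ y ∈ (Set.range u₂)ᶜ := huc₂ ▸ Set.mem_range_self y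
    exact absurd (h1 ▸ h2) h3

/-- Let `m` be the minor with rows `a`, columns `b`, containing two
distinct minors `f₁` and `f₂` of the same size `k` (position maps `uᵢ, vᵢ` with
complementary positions `ucᵢ, vcᵢ`).  If `R(f₁) = R(f₂)` or `C(f₁) = C(f₂)`, then the
removed sets `rterm(m,f₁)` and `rterm(m,f₂)` are disjoint. -/
theorem stmt_7 (m n r k : ℕ)
    (a : Fin r → Fin m) (b : Fin r → Fin n) (ha : StrictMono a) (hb : StrictMono b)
    (u₁ v₁ : Fin k → Fin r) (uc₁ vc₁ : Fin (r - k) → Fin r)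
    (hu₁ : StrictMono u₁) (hv₁ : StrictMono v₁) (huc₁ : StrictMono uc₁) (hvc₁ : StrictMono vc₁)
    (hucompl₁ : Set.range uc₁ = (Set.range u₁)ᶜ) (hvcompl₁ : Set.range vc₁ = (Set.range v₁)ᶜ)
    (u₂ v₂ : Fin k → Fin r) (uc₂ vc₂ : Fin (r - k) → Fin r)
    (hu₂ : StrictMono u₂) (hv₂ : StrictMono v₂) (huc₂ : StrictMono uc₂) (hvc₂ : StrictMono vc₂)
    (hucompl₂ : Set.range uc₂ = (Set.range u₂)ᶜ) (hvcompl₂ : Set.range vc₂ = (Set.range v₂)ᶜ)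
    (hne : ¬ (Set.range u₁ = Set.range u₂ ∧ Set.range v₁ = Set.range v₂))
    (hcond : Set.range (fun x => a (u₁ x)) = Set.range (fun x => a (u₂ x)) ∨
      Set.range (fun x => b (v₁ x)) = Set.range (fun x => b (v₂ x))) :
    ∀ E : (Fin m × Fin n) →₀ ℕ,
      (∃ (σ : Equiv.Perm (Fin k)) (τ : Equiv.Perm (Fin (r - k))),
        E = (∑ x : Fin k, Finsupp.single (a (u₁ x), b (v₁ (σ x))) 1) +
          ∑ x : Fin (r - k), Finsupp.single (a (uc₁ x), b (vc₁ (τ x))) 1) →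
      ¬ (∃ (σ : Equiv.Perm (Fin k)) (τ : Equiv.Perm (Fin (r - k))),
        E = (∑ x : Fin k, Finsupp.single (a (u₂ x), b (v₂ (σ x))) 1) +
          ∑ x : Fin (r - k), Finsupp.single (a (uc₂ x), b (vc₂ (τ x))) 1) := by
  rintro E ⟨σ₁, τ₁, h1⟩ ⟨σ₂, τ₂, h2⟩
  have hE := h1.symm.trans h2
  apply hne
  rcases hcond with hc | hc
  · have huu : Set.range u₁ = Set.range u₂ := by
      have : a '' Set.range u₁ = a '' Set.range u₂ := by
        rw [← Set.range_comp, ← Set.range_comp]; exact hc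
      exact Set.image_injective.mpr ha.injective this
    refine ⟨huu, subset_antisymm ?_ ?_⟩
    · exact step_aux a b ha.injective hb.injective u₁ v₁ u₂ v₂ uc₁ vc₁ uc₂ vc₂ hucompl₂
        σ₁ σ₂ τ₁ τ₂ hE huu
    · exact step_aux a b ha.injective hb.injective u₂ v₂ u₁ v₁ uc₂ vc₂ uc₁ vc₁ hucompl₁
        σ₂ σ₁ τ₂ τ₁ hE.symm huu.symm
  · have hvv : Set.range v₁ = Set.range v₂ := by
      have : b '' Set.range v₁ = b '' Set.range v₂ := by
        rw [← Set.range_comp, ← Set.range_comp]; exact hc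
      exact Set.image_injective.mpr hb.injective this
    have hE' := congrArg (⇑(Finsupp.domCongr (M := ℕ) (Equiv.prodComm (Fin m) (Fin n)))) hE
    simp only [map_add, map_sum, Finsupp.domCongr_apply, Finsupp.equivMapDomain_single,
      Equiv.prodComm_apply, Prod.swap_prod_mk] at hE'
    have e1 : ∀ (u v : Fin k → Fin r) (σ : Equiv.Perm (Fin k)),
        ∑ x : Fin k, Finsupp.single (b (v (σ x)), a (u x)) (1:ℕ)
          = ∑ x : Fin k, Finsupp.single (b (v x), a (u (σ⁻¹ x))) (1:ℕ) := by
      intro u v σ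
      exact Fintype.sum_equiv σ _ _ (fun x => by rw [Equiv.Perm.inv_def, Equiv.symm_apply_apply])
    have e2 : ∀ (u v : Fin (r - k) → Fin r) (τ : Equiv.Perm (Fin (r - k))),
        ∑ x : Fin (r - k), Finsupp.single (b (v (τ x)), a (u x)) (1:ℕ)
          = ∑ x : Fin (r - k), Finsupp.single (b (v x), a (u (τ⁻¹ x))) (1:ℕ) := by
      intro u v τ
      exact Fintype.sum_equiv τ _ _ (fun x => by rw [Equiv.Perm.inv_def, Equiv.symm_apply_apply])
    rw [e1 u₁ v₁ σ₁, e1 u₂ v₂ σ₂, e2 uc₁ vc₁ τ₁, e2 uc₂ vc₂ τ₂] at hE'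
    refine ⟨subset_antisymm ?_ ?_, hvv⟩
    · exact step_aux b a hb.injective ha.injective v₁ u₁ v₂ u₂ vc₁ uc₁ vc₂ uc₂ hvcompl₂
        σ₁⁻¹ σ₂⁻¹ τ₁⁻¹ τ₂⁻¹ hE' hvv
    · exact step_aux b a hb.injective ha.injective v₂ u₂ v₁ u₁ vc₂ uc₂ vc₁ uc₁ hvcompl₁
        σ₂⁻¹ σ₁⁻¹ τ₂⁻¹ τ₁⁻¹ hE'.symm hvv.symm
end

section
/- Let M be a square n×n matrix over a commutative ring and fix a subset R of its row indices of size k. Then det(M) = Σ_m (−1)^{δ(m)} · m · m̄, where the sum is over all k×k minors m of M with row index set R and all possible column index subsets C of size k, m̄ is the complementary minor (row indices [n]\R, column indices [n]\C), and δ(m) is the sum of the elements of R and C (generalized Laplace expansion). -/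
namespace Lap

open Equiv Finset


variable {n k : ℕ}

def lapBlock (n k : ℕ) (h : k + (n - k) = n) : (Fin k ⊕ Fin (n - k)) ≃ Fin n :=
  finSumFinEquiv.trans (finCongr h)

def lapSet (S : Finset (Fin n)) (h1 : S.card = k) (h2 : Sᶜ.card = n - k) :
    (Fin k ⊕ Fin (n - k)) ≃ Fin n :=
  (Equiv.sumCongr (S.orderIsoOfFin h1).toEquiv
      (((Sᶜ).orderIsoOfFin h2).toEquiv.trans
        (Equiv.subtypeEquivRight (fun _ => Finset.mem_compl)))).trans
    (Equiv.sumCompl (· ∈ S))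

lemma lapSet_inl (S : Finset (Fin n)) (h1 : S.card = k) (h2 : Sᶜ.card = n - k) (i : Fin k) :
    lapSet S h1 h2 (Sum.inl i) = ((S.orderIsoOfFin h1) i : Fin n) := rfl

lemma lapSet_inr (S : Finset (Fin n)) (h1 : S.card = k) (h2 : Sᶜ.card = n - k) (j : Fin (n - k)) :
    lapSet S h1 h2 (Sum.inr j) = (((Sᶜ).orderIsoOfFin h2) j : Fin n) := rfl

def lapPerm (h : k + (n - k) = n) (S : Finset (Fin n)) (h1 : S.card = k)
    (h2 : Sᶜ.card = n - k) : Equiv.Perm (Fin n) :=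
  ((lapBlock n k h).symm.trans (lapSet S h1 h2))

lemma orderEmb_comp {m : ℕ} (T T' : Finset (Fin n)) (hT : T.card = m) (hT' : T'.card = m)
    (g : Fin n → Fin n) (hmono : ∀ x ∈ T', ∀ y ∈ T', x < y → g x < g y)
    (hmem : ∀ x ∈ T', g x ∈ T) (i : Fin m) :
    (T.orderEmbOfFin hT) i = g ((T'.orderEmbOfFin hT') i) := by
  have h : (fun i => g ((T'.orderEmbOfFin hT') i)) = ⇑(T.orderEmbOfFin hT) :=
    Finset.orderEmbOfFin_unique hT (fun x => hmem _ (Finset.orderEmbOfFin_mem T' hT' x))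
      (fun i j hij => hmono _ (Finset.orderEmbOfFin_mem T' hT' i) _
        (Finset.orderEmbOfFin_mem T' hT' j) ((T'.orderEmbOfFin hT').strictMono hij))
  exact (congrFun h i).symm

lemma lapPerm_sign_aux (h : k + (n - k) = n) :
    ∀ (N : ℕ) (S : Finset (Fin n)) (h1 : S.card = k) (h2 : Sᶜ.card = n - k),
      (∑ i ∈ S, (i : ℕ)) = N →
      Equiv.Perm.sign (lapPerm h S h1 h2) =
        (-1 : ℤˣ) ^ ((∑ i ∈ S, (i : ℕ)) + ∑ i ∈ Finset.range k, i) := by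
  intro N
  induction N using Nat.strong_induction_on with
  | _ N ih =>
  intro S h1 h2 hN
  by_cases hA : ∃ b ∈ S, ∃ a : Fin n, (a : ℕ) + 1 = (b : ℕ) ∧ a ∉ S
  · obtain ⟨b, hbS, a, hab, haS⟩ := hA
    have habne : a ≠ b := fun hh => haS (hh ▸ hbS)
    set S' : Finset (Fin n) := insert a (S.erase b) with hS'
    have hbS' : b ∉ S' := by
      simp only [hS', Finset.mem_insert, Finset.mem_erase]
      push_neg
      exact ⟨habne.symm, fun hh => absurd rfl hh⟩
    have hkpos : 0 < k := by
      rw [← h1]; exact Finset.card_pos.2 ⟨b, hbS⟩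
    have h1' : S'.card = k := by
      rw [hS', Finset.card_insert_of_notMem (fun hh => haS (Finset.mem_of_mem_erase hh)),
        Finset.card_erase_of_mem hbS, h1]
      omega
    have h2' : S'ᶜ.card = n - k := by
      rw [Finset.card_compl, h1', Fintype.card_fin]
    have haS' : a ∈ S' := Finset.mem_insert_self _ _
    have hsum' : (∑ i ∈ S', (i : ℕ)) + 1 = N := by
      rw [hS', Finset.sum_insert (fun hh => haS (Finset.mem_of_mem_erase hh))]
      have e1 := Finset.add_sum_erase S (fun i : Fin n => (i : ℕ)) hbS
      omega
    -- membership characterizations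
    have hmemS' : ∀ x : Fin n, x ∈ S' ↔ (x = a ∨ (x ≠ b ∧ x ∈ S)) := by
      intro x
      simp [hS', Finset.mem_insert, Finset.mem_erase]
    have hmemS'c : ∀ x : Fin n, x ∈ S'ᶜ ↔ (x = b ∨ (x ≠ a ∧ x ∈ Sᶜ)) := by
      intro x
      simp only [Finset.mem_compl, hmemS']
      push_neg
      constructor
      · rintro ⟨hxa, hx⟩
        by_cases hxb : x = b
        · exact Or.inl hxb
        · exact Or.inr ⟨hxa, hx hxb⟩
      · rintro (rfl | ⟨hxa, hx⟩)
        · exact ⟨habne.symm, fun hh => absurd rfl hh⟩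
        · exact ⟨hxa, fun _ => hx⟩
    have hswS : ∀ x ∈ S', Equiv.swap a b x ∈ S := by
      intro x hx
      rcases (hmemS' x).1 hx with rfl | ⟨hxb, hxS⟩
      · rw [Equiv.swap_apply_left]; exact hbS
      · have hxa : x ≠ a := fun hh => haS (hh ▸ hxS)
        rw [Equiv.swap_apply_of_ne_of_ne hxa hxb]; exact hxS
    have hmono : ∀ x ∈ S', ∀ y ∈ S', x < y → Equiv.swap a b x < Equiv.swap a b y := by
      intro x hx y hy hxy
      have hxb : x ≠ b := fun hh => hbS' (hh ▸ hx)
      have hyb : y ≠ b := fun hh => hbS' (hh ▸ hy)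
      rcases eq_or_ne x a with rfl | hxa
      · rw [Equiv.swap_apply_left, Equiv.swap_apply_of_ne_of_ne hxy.ne' hyb]
        have hyb' : (y : ℕ) ≠ (b : ℕ) := fun hh => hyb (Fin.ext hh)
        rw [Fin.lt_def] at hxy ⊢
        omega
      · rcases eq_or_ne y a with rfl | hya
        · rw [Equiv.swap_apply_left, Equiv.swap_apply_of_ne_of_ne hxa hxb]
          rw [Fin.lt_def] at hxy ⊢
          omega
        · rw [Equiv.swap_apply_of_ne_of_ne hxa hxb, Equiv.swap_apply_of_ne_of_ne hya hyb]
          exact hxy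
    have hne_a : ∀ x ∈ S'ᶜ, x ≠ a := by
      intro x hx
      rcases (hmemS'c x).1 hx with rfl | ⟨hxa, _⟩
      · exact habne.symm
      · exact hxa
    have hswSc : ∀ x ∈ S'ᶜ, Equiv.swap a b x ∈ Sᶜ := by
      intro x hx
      rcases (hmemS'c x).1 hx with rfl | ⟨hxa, hxSc⟩
      · rw [Equiv.swap_apply_right]; exact Finset.mem_compl.2 haS
      · have hxb : x ≠ b := fun hh => (Finset.mem_compl.1 (hh ▸ hxSc)) hbS
        rw [Equiv.swap_apply_of_ne_of_ne hxa hxb]; exact hxSc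
    have hmonoc : ∀ x ∈ S'ᶜ, ∀ y ∈ S'ᶜ, x < y → Equiv.swap a b x < Equiv.swap a b y := by
      intro x hx y hy hxy
      rcases eq_or_ne x b with rfl | hxb
      · rw [Equiv.swap_apply_right, Equiv.swap_apply_of_ne_of_ne (hne_a y hy) hxy.ne']
        rw [Fin.lt_def] at hxy ⊢
        omega
      · rcases eq_or_ne y b with rfl | hyb
        · rw [Equiv.swap_apply_right, Equiv.swap_apply_of_ne_of_ne (hne_a x hx) hxb]
          have hxa' : (x : ℕ) ≠ (a : ℕ) := fun hh => (hne_a x hx) (Fin.ext hh)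
          rw [Fin.lt_def] at hxy ⊢
          omega
        · rw [Equiv.swap_apply_of_ne_of_ne (hne_a x hx) hxb,
            Equiv.swap_apply_of_ne_of_ne (hne_a y hy) hyb]
          exact hxy
    have hkey : lapPerm h S h1 h2 = Equiv.swap a b * lapPerm h S' h1' h2' := by
      apply Equiv.ext
      intro x
      rw [Equiv.Perm.mul_apply]
      show lapSet S h1 h2 ((lapBlock n k h).symm x) =
        Equiv.swap a b (lapSet S' h1' h2' ((lapBlock n k h).symm x))
      rcases hy : (lapBlock n k h).symm x with i | j
      · rw [lapSet_inl, lapSet_inl, Finset.coe_orderIsoOfFin_apply,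
          Finset.coe_orderIsoOfFin_apply]
        exact orderEmb_comp S S' h1 h1' (Equiv.swap a b) hmono hswS i
      · rw [lapSet_inr, lapSet_inr, Finset.coe_orderIsoOfFin_apply,
          Finset.coe_orderIsoOfFin_apply]
        exact orderEmb_comp Sᶜ S'ᶜ h2 h2' (Equiv.swap a b) hmonoc hswSc j
    have hNpos : 1 ≤ N := by
      have hb1 : 1 ≤ (b : ℕ) := by omega
      have := Finset.single_le_sum (f := fun i : Fin n => (i : ℕ))
        (fun i _ => Nat.zero_le _) hbS
      omega
    rw [hkey, Equiv.Perm.sign_mul, Equiv.Perm.sign_swap habne,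
      ih (N - 1) (by omega) S' h1' h2' (by omega), hN,
      show (∑ i ∈ S', (i : ℕ)) = N - 1 from by omega,
      show N + ∑ i ∈ Finset.range k, i = (N - 1 + ∑ i ∈ Finset.range k, i) + 1 from by omega,
      pow_succ]
    exact mul_comm _ _
  · push_neg at hA
    have hkn : k ≤ n := by omega
    have closure : ∀ m : ℕ, ∀ b : Fin n, b ∈ S → (b : ℕ) = m →
        ∀ j : Fin n, (j : ℕ) ≤ m → j ∈ S := by
      intro m
      induction m with
      | zero =>
        intro b hb hbm j hj
        have : j = b := Fin.ext (by omega)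
        rwa [this]
      | succ m ihm =>
        intro b hb hbm j hj
        have hmn : m < n := by have := b.isLt; omega
        rcases Nat.lt_or_ge (j : ℕ) (m + 1) with h' | h'
        · have ham : ((⟨m, hmn⟩ : Fin n)) ∈ S := hA b hb ⟨m, hmn⟩ (by simp [hbm])
          exact ihm ⟨m, hmn⟩ ham rfl j (by simpa using Nat.lt_succ_iff.1 h')
        · have : j = b := Fin.ext (by omega)
          rwa [this]
    have hlt : ∀ b ∈ S, (b : ℕ) < k := by
      intro b hb
      by_contra hge
      push_neg at hge
      have hsub : Finset.image
          (fun j : Fin ((b : ℕ) + 1) => Fin.castLE (Nat.succ_le_of_lt b.isLt) j)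
          Finset.univ ⊆ S := by
        intro x hx
        simp only [Finset.mem_image, Finset.mem_univ, true_and] at hx
        obtain ⟨j, rfl⟩ := hx
        exact closure (b : ℕ) b hb rfl _ (by simpa using Nat.lt_succ_iff.1 j.isLt)
      have hcard := Finset.card_le_card hsub
      rw [Finset.card_image_of_injective _ (Fin.castLE_injective _), Finset.card_univ,
        Fintype.card_fin, h1] at hcard
      omega
    have hT : S = Finset.image (Fin.castLE hkn) Finset.univ := by
      apply Finset.eq_of_subset_of_card_le
      · intro x hx
        simp only [Finset.mem_image, Finset.mem_univ, true_and]
        exact ⟨⟨(x : ℕ), hlt x hx⟩, Fin.ext rfl⟩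
      · rw [Finset.card_image_of_injective _ (Fin.castLE_injective _), Finset.card_univ,
          Fintype.card_fin, h1]
    have hmemS : ∀ i : Fin k, Fin.castLE hkn i ∈ S := by
      intro i
      rw [hT]
      exact Finset.mem_image_of_mem _ (Finset.mem_univ _)
    have hjlt : ∀ j : Fin (n - k), k + (j : ℕ) < n := by
      intro j
      have := j.isLt
      omega
    have hmemSc : ∀ j : Fin (n - k), (⟨k + (j : ℕ), hjlt j⟩ : Fin n) ∈ Sᶜ := by
      intro j
      rw [Finset.mem_compl, hT]
      simp only [Finset.mem_image, Finset.mem_univ, true_and, not_exists]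
      intro i hi
      have hv := congrArg Fin.val hi
      simp only [Fin.coe_castLE] at hv
      have := i.isLt
      omega
    have hosS : ∀ i : Fin k, (S.orderEmbOfFin h1) i = Fin.castLE hkn i := by
      have hh := Finset.orderEmbOfFin_unique h1 (f := fun i => Fin.castLE hkn i)
        (fun i => hmemS i)
        (fun i j hij => by simp only [Fin.lt_def, Fin.coe_castLE] at hij ⊢; omega)
      exact fun i => (congrFun hh i).symm
    have hosSc : ∀ j : Fin (n - k), ((Sᶜ).orderEmbOfFin h2) j = ⟨k + (j : ℕ), hjlt j⟩ := by
      have hh := Finset.orderEmbOfFin_unique h2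
        (f := fun j : Fin (n - k) => (⟨k + (j : ℕ), hjlt j⟩ : Fin n))
        (fun j => hmemSc j)
        (fun i j hij => by simp only [Fin.lt_def] at hij ⊢; omega)
      exact fun j => (congrFun hh j).symm
    have hone : lapPerm h S h1 h2 = 1 := by
      apply Equiv.ext
      intro x
      show lapSet S h1 h2 ((lapBlock n k h).symm x) = x
      have hy : ∀ y, lapSet S h1 h2 y = lapBlock n k h y := by
        intro y
        rcases y with i | j
        · rw [lapSet_inl, Finset.coe_orderIsoOfFin_apply, hosS]
          rfl
        · rw [lapSet_inr, Finset.coe_orderIsoOfFin_apply, hosSc]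
          rfl
      rw [hy, Equiv.apply_symm_apply]
    have hsum : ∑ i ∈ S, (i : ℕ) = ∑ i ∈ Finset.range k, i := by
      rw [hT, Finset.sum_image (fun _ _ _ _ hh => Fin.castLE_injective _ hh)]
      simp only [Fin.coe_castLE]
      exact Fin.sum_univ_eq_sum_range (fun i => i) k
    rw [hone, Equiv.Perm.sign_one, hsum, ← two_mul, pow_mul]
    norm_num


lemma lapPerm_sign (h : k + (n - k) = n) (S : Finset (Fin n)) (h1 : S.card = k)
    (h2 : Sᶜ.card = n - k) :
    Equiv.Perm.sign (lapPerm h S h1 h2) =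
      (-1 : ℤˣ) ^ ((∑ i ∈ S, (i : ℕ)) + ∑ i ∈ Finset.range k, i) :=
  lapPerm_sign_aux h _ S h1 h2 rfl

lemma compl_card {C : Finset (Fin n)} (hC : C.card = k) : Cᶜ.card = n - k := by
  rw [Finset.card_compl, hC, Fintype.card_fin]

def lapMap (Rs : Finset (Fin n)) (hR : Rs.card = k) (hRc : Rsᶜ.card = n - k)
    (t : {C : Finset (Fin n) // C.card = k} ×
      (Equiv.Perm (Fin k) × Equiv.Perm (Fin (n - k)))) :
    Equiv.Perm (Fin n) :=
  ((lapSet t.1.1 t.1.2 (compl_card t.1.2)).symm.trans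
    (Equiv.sumCongr t.2.1 t.2.2)).trans (lapSet Rs hR hRc)

lemma lapMap_apply (Rs : Finset (Fin n)) (hR : Rs.card = k) (hRc : Rsᶜ.card = n - k)
    (t : {C : Finset (Fin n) // C.card = k} ×
      (Equiv.Perm (Fin k) × Equiv.Perm (Fin (n - k))))
    (y : Fin k ⊕ Fin (n - k)) :
    lapMap Rs hR hRc t (lapSet t.1.1 t.1.2 (compl_card t.1.2) y) =
      lapSet Rs hR hRc (Equiv.sumCongr t.2.1 t.2.2 y) := by
  simp [lapMap]

lemma lapMap_mem (Rs : Finset (Fin n)) (hR : Rs.card = k) (hRc : Rsᶜ.card = n - k)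
    (t : {C : Finset (Fin n) // C.card = k} ×
      (Equiv.Perm (Fin k) × Equiv.Perm (Fin (n - k)))) (x : Fin n) :
    x ∈ t.1.1 ↔ lapMap Rs hR hRc t x ∈ Rs := by
  rcases hy : (lapSet t.1.1 t.1.2 (compl_card t.1.2)).symm x with i | j
  · have hx : x = lapSet t.1.1 t.1.2 (compl_card t.1.2) (Sum.inl i) := by
      rw [← hy, Equiv.apply_symm_apply]
    rw [hx, lapMap_apply]
    refine iff_of_true ?_ ?_
    · rw [lapSet_inl]; exact ((t.1.1).orderIsoOfFin t.1.2 i).2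
    · rw [Equiv.sumCongr_apply, Sum.map_inl, lapSet_inl]
      exact (Rs.orderIsoOfFin hR _).2
  · have hx : x = lapSet t.1.1 t.1.2 (compl_card t.1.2) (Sum.inr j) := by
      rw [← hy, Equiv.apply_symm_apply]
    rw [hx, lapMap_apply]
    refine iff_of_false ?_ ?_
    · rw [lapSet_inr]
      exact Finset.mem_compl.1 (((t.1.1ᶜ).orderIsoOfFin (compl_card t.1.2) j).2)
    · rw [Equiv.sumCongr_apply, Sum.map_inr, lapSet_inr]
      exact Finset.mem_compl.1 (((Rsᶜ).orderIsoOfFin hRc _).2)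

lemma lapMap_injective (Rs : Finset (Fin n)) (hR : Rs.card = k) (hRc : Rsᶜ.card = n - k) :
    Function.Injective (lapMap Rs hR hRc) := by
  rintro ⟨C, α, β⟩ ⟨C', α', β'⟩ hEq
  have hC : C = C' := by
    refine Subtype.ext (Finset.ext fun x => ?_)
    rw [show (C.1 = (C, (α, β)).1.1) from rfl] -- no-op
    rw [lapMap_mem Rs hR hRc (C, (α, β)) x, hEq, ← lapMap_mem Rs hR hRc (C', (α', β')) x]
  obtain rfl := hC
  have hsc : Equiv.sumCongr α β = Equiv.sumCongr α' β' := by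
    apply Equiv.ext
    intro y
    have hx := Equiv.ext_iff.1 hEq (lapSet C.1 C.2 (compl_card C.2) y)
    rw [lapMap_apply Rs hR hRc (C, (α, β)) y, lapMap_apply Rs hR hRc (C, (α', β')) y] at hx
    exact (lapSet Rs hR hRc).injective hx
  have hα : α = α' := by
    apply Equiv.ext
    intro i
    have := Equiv.ext_iff.1 hsc (Sum.inl i)
    simpa using this
  have hβ : β = β' := by
    apply Equiv.ext
    intro j
    have := Equiv.ext_iff.1 hsc (Sum.inr j)
    simpa using this
  rw [hα, hβ]

lemma lapMap_eq_mul (h : k + (n - k) = n) (Rs : Finset (Fin n)) (hR : Rs.card = k)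
    (hRc : Rsᶜ.card = n - k)
    (t : {C : Finset (Fin n) // C.card = k} ×
      (Equiv.Perm (Fin k) × Equiv.Perm (Fin (n - k)))) :
    lapMap Rs hR hRc t =
      lapPerm h Rs hR hRc *
        (((lapBlock n k h).symm.trans (Equiv.sumCongr t.2.1 t.2.2)).trans (lapBlock n k h)) *
        (lapPerm h t.1.1 t.1.2 (compl_card t.1.2))⁻¹ := by
  apply Equiv.ext
  intro x
  simp [lapMap, lapPerm, Equiv.Perm.mul_apply, Equiv.Perm.inv_def, Equiv.symm_trans_apply,
    Equiv.apply_symm_apply]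

lemma lapMap_sign (h : k + (n - k) = n) (Rs : Finset (Fin n)) (hR : Rs.card = k)
    (hRc : Rsᶜ.card = n - k)
    (t : {C : Finset (Fin n) // C.card = k} ×
      (Equiv.Perm (Fin k) × Equiv.Perm (Fin (n - k)))) :
    Equiv.Perm.sign (lapMap Rs hR hRc t) =
      (-1 : ℤˣ) ^ ((∑ i ∈ Rs, (i : ℕ)) + ∑ j ∈ t.1.1, (j : ℕ)) *
        Equiv.Perm.sign t.2.1 * Equiv.Perm.sign t.2.2 := by
  rw [lapMap_eq_mul h Rs hR hRc t, Equiv.Perm.sign_mul, Equiv.Perm.sign_mul,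
    Equiv.Perm.sign_symm_trans_trans, Equiv.Perm.sign_sumCongr,
    Equiv.Perm.sign_inv, lapPerm_sign, lapPerm_sign]
  set c := ∑ i ∈ Finset.range k, i
  set dR := ∑ i ∈ Rs, (i : ℕ)
  set dC := ∑ j ∈ t.1.1, (j : ℕ)
  have : (-1 : ℤˣ) ^ (dR + c) * ((-1 : ℤˣ) ^ (dC + c)) = (-1 : ℤˣ) ^ (dR + dC) := by
    rw [← pow_add, show dR + c + (dC + c) = (dR + dC) + 2 * c from by omega, pow_add,
      pow_mul]
    norm_num
  rw [mul_right_comm, this, mul_assoc]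

end Lap

/-- generalized Laplace expansion: for an `n × n` matrix `M` over a
commutative ring and a fixed set `Rs` of `k` row indices,
`det M = Σ_C (−1)^{δ} · (minor with rows Rs, cols C) · (complementary minor)`,
the sum being over all column sets `C` of size `k`, where `δ` is the sum of the
elements of `Rs` and `C`. -/
theorem stmt_8 (R' : Type*) [CommRing R'] (n k : ℕ) (hk : k ≤ n)
    (M : Matrix (Fin n) (Fin n) R') (Rs : Finset (Fin n)) (hR : Rs.card = k)
    (hRc : Rsᶜ.card = n - k) :
    M.det = ∑ Cs : {C : Finset (Fin n) // C.card = k},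
      (-1 : R') ^ ((∑ i ∈ Rs, (i : ℕ)) + ∑ j ∈ Cs.1, (j : ℕ)) *
        (M.submatrix (fun i => ((Rs.orderIsoOfFin hR) i : Fin n))
          (fun j => ((Cs.1.orderIsoOfFin Cs.2) j : Fin n))).det *
        (M.submatrix
          (fun i => (((Rsᶜ).orderIsoOfFin hRc) i : Fin n))
          (fun j => (((Cs.1ᶜ).orderIsoOfFin
            (by rw [Finset.card_compl, Cs.2, Fintype.card_fin])) j : Fin n))).det := by
  have h : k + (n - k) = n := Nat.add_sub_cancel' hk
  have hbij : Function.Bijective (Lap.lapMap Rs hR hRc) := by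
    rw [Fintype.bijective_iff_injective_and_card]
    refine ⟨Lap.lapMap_injective Rs hR hRc, ?_⟩
    rw [Fintype.card_prod, Fintype.card_prod, Fintype.card_perm, Fintype.card_perm,
      Fintype.card_perm, Fintype.card_finset_len, Fintype.card_fin, Fintype.card_fin,
      Fintype.card_fin, ← Nat.choose_mul_factorial_mul_factorial hk]
    ring
  rw [Matrix.det_apply']
  rw [← Function.Bijective.sum_comp hbij
    (fun σ => ((Equiv.Perm.sign σ : ℤ) : R') * ∏ i, M (σ i) i)]
  rw [Fintype.sum_prod_type]
  refine Finset.sum_congr rfl (fun Cs _ => ?_)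
  rw [Fintype.sum_prod_type]
  simp only [Matrix.det_apply', Finset.mul_sum, Finset.sum_mul]
  conv_rhs => rw [Finset.sum_comm]
  refine Finset.sum_congr rfl (fun α _ => ?_)
  refine Finset.sum_congr rfl (fun β _ => ?_)
  have hprod : ∏ i, M (Lap.lapMap Rs hR hRc (Cs, (α, β)) i) i =
      (∏ i : Fin k, M ((Rs.orderIsoOfFin hR) (α i) : Fin n)
        ((Cs.1.orderIsoOfFin Cs.2) i : Fin n)) *
      ∏ j : Fin (n - k), M (((Rsᶜ).orderIsoOfFin hRc) (β j) : Fin n)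
        (((Cs.1ᶜ).orderIsoOfFin (Lap.compl_card Cs.2)) j : Fin n) := by
    rw [← Equiv.prod_comp (Lap.lapSet Cs.1 Cs.2 (Lap.compl_card Cs.2))
      (fun x => M (Lap.lapMap Rs hR hRc (Cs, (α, β)) x) x), Fintype.prod_sum_type]
    congr 1
    · refine Finset.prod_congr rfl fun i _ => ?_
      rw [Lap.lapMap_apply Rs hR hRc (Cs, (α, β)) (Sum.inl i), Equiv.sumCongr_apply,
        Sum.map_inl, Lap.lapSet_inl, Lap.lapSet_inl]
    · refine Finset.prod_congr rfl fun j _ => ?_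
      rw [Lap.lapMap_apply Rs hR hRc (Cs, (α, β)) (Sum.inr j), Equiv.sumCongr_apply,
        Sum.map_inr, Lap.lapSet_inr, Lap.lapSet_inr]
  rw [hprod, Lap.lapMap_sign h Rs hR hRc (Cs, (α, β))]
  simp only [Matrix.submatrix_apply, Units.val_mul, Units.val_pow_eq_pow_val,
    Units.val_neg, Units.val_one, Int.cast_mul, Int.cast_pow, Int.cast_neg, Int.cast_one]
  ring
end

section
/- Let p be a prime ideal in a multivariate polynomial ring over a field, with reduced lexicographic Gröbner basis G and W-characteristic set C = [C₁,...,C_r]. Then for each i, the initial ini(C_i) of C_i does not belong to the ideal generated by G (equal to p). -/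
/-- The lexicographic order induced by the variable order `x₀ < x₁ < ⋯ < x_{n-1}` on
exponent vectors. -/
def LexLt {n : ℕ} (u v : Fin n →₀ ℕ) : Prop :=
  ∃ k, u k < v k ∧ ∀ j, k < j → u j = v j

/-- `E` is the exponent vector of the leading term of `f` w.r.t. the lex order. -/
def IsLeadExp {n : ℕ} {K : Type*} [CommSemiring K]
    (f : MvPolynomial (Fin n) K) (E : Fin n →₀ ℕ) : Prop :=
  E ∈ f.support ∧ ∀ E' ∈ f.support, E' ≠ E → LexLt E' E

/-- `v` is the leading variable of `f`: the greatest variable effectively appearing. -/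
def IsLeadVar {n : ℕ} {K : Type*} [CommSemiring K]
    (f : MvPolynomial (Fin n) K) (v : Fin n) : Prop :=
  (∃ E ∈ f.support, E v ≠ 0) ∧ ∀ E ∈ f.support, ∀ u, v < u → E u = 0

/-- `G` is a reduced Gröbner basis of `I` w.r.t. the lex order: its elements lie in
`I`, every nonzero element of `I` has leading term divisible by the leading term of
some element of `G`, no term of an element of `G` is divisible by the leading term of
another element, and leading coefficients are `±1`. -/
def IsReducedGB {n : ℕ} {K : Type*} [Field K]
    (G : Finset (MvPolynomial (Fin n) K)) (I : Ideal (MvPolynomial (Fin n) K)) : Prop :=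
  (∀ g ∈ G, g ∈ I) ∧
  (∀ f ∈ I, f ≠ 0 → ∃ g ∈ G, ∃ Eg Ef, IsLeadExp g Eg ∧ IsLeadExp f Ef ∧ Eg ≤ Ef) ∧
  (∀ g ∈ G, ∀ g' ∈ G, g' ≠ g → ∀ E ∈ g.support, ∀ E', IsLeadExp g' E' → ¬ E' ≤ E) ∧
  (∀ g ∈ G, ∀ E, IsLeadExp g E → g.coeff E = 1 ∨ g.coeff E = -1)

/-- `P` is the initial of `f`: the leading coefficient of `f` viewed as a univariate
polynomial in its leading variable `v`, where `d` is the degree of `f` in `v`. -/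
def IsInitial {n : ℕ} {K : Type*} [Field K]
    (f : MvPolynomial (Fin n) K) (v : Fin n) (d : ℕ) (P : MvPolynomial (Fin n) K) : Prop :=
  IsLeadVar f v ∧ (∃ E ∈ f.support, E v = d) ∧ (∀ E ∈ f.support, E v ≤ d) ∧
  ∀ E, P.coeff E = if E v = 0 then f.coeff (E + Finsupp.single v d) else 0

/-- Let `p` be a prime ideal with reduced lex Gröbner basis `G` and let
`c` be an element of the W-characteristic set of `p`, i.e. `c ∈ G` is lexicographically
minimal among the elements of `G` with leading variable `v`.  Then the initial of `c`
does not belong to the ideal generated by `G`. -/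
theorem stmt_9 {n : ℕ} {K : Type*} [Field K] (p : Ideal (MvPolynomial (Fin n) K))
    (hp : p.IsPrime) (G : Finset (MvPolynomial (Fin n) K)) (hG : IsReducedGB G p)
    (c : MvPolynomial (Fin n) K) (hc : c ∈ G) (v : Fin n) (hv : IsLeadVar c v)
    (hmin : ∀ g ∈ G, IsLeadVar g v →
      ∀ Ec Eg, IsLeadExp c Ec → IsLeadExp g Eg → ¬ LexLt Eg Ec)
    (d : ℕ) (P : MvPolynomial (Fin n) K) (hP : IsInitial c v d P) :
    P ∉ Ideal.span (G : Set (MvPolynomial (Fin n) K)) := by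
  intro hmem
  have hPp : P ∈ p := Ideal.span_le.mpr (fun g hg => hG.1 g hg) hmem
  obtain ⟨hlv, ⟨E0, hE0s, hE0d⟩, hle, hcoeff⟩ := hP
  -- P ≠ 0
  have hPne : P ≠ 0 := by
    intro h
    have h1 : P.coeff (E0 - Finsupp.single v d) = c.coeff E0 := by
      rw [hcoeff]
      have hv0 : (E0 - Finsupp.single v d) v = 0 := by
        simp [Finsupp.tsub_apply, hE0d]
      rw [if_pos hv0]
      congr 1
      ext j
      by_cases hj : j = v
      · subst hj; simp [Finsupp.tsub_apply, hE0d]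
      · simp [Finsupp.tsub_apply, Finsupp.single_apply, Ne.symm hj]
    rw [h, MvPolynomial.coeff_zero] at h1
    exact MvPolynomial.mem_support_iff.mp hE0s h1.symm
  obtain ⟨g, hgG, Eg, Ef, hEg, hEf, hle'⟩ := hG.2.1 P hPp hPne
  have hcf := MvPolynomial.mem_support_iff.mp hEf.1
  rw [hcoeff] at hcf
  by_cases hEfv : Ef v = 0
  · rw [if_pos hEfv] at hcf
    have hc' : Ef + Finsupp.single v d ∈ c.support := MvPolynomial.mem_support_iff.mpr hcf
    -- g ≠ c
    have hEgv : Eg v = 0 := Nat.le_zero.mp (hEfv ▸ hle' v)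
    have hgne : g ≠ c := by
      intro h
      subst h
      -- leading exponent of c must have nonzero v-component
      obtain ⟨E1, hE1s, hE1v⟩ := hv.1
      by_cases hE1 : E1 = Eg
      · exact hE1v (hE1 ▸ hEgv)
      · obtain ⟨k, hk, hagree⟩ := hEg.2 E1 hE1s hE1
        rcases lt_trichotomy k v with hkv | hkv | hkv
        · exact hE1v ((hagree v hkv).trans hEgv)
        · subst hkv; omega
        · have := hv.2 Eg hEg.1 k hkv; omega
    refine hG.2.2.1 c hc g hgG hgne _ hc' Eg hEg ?_
    exact le_trans hle' (le_add_of_nonneg_right zero_le)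
  · rw [if_neg hEfv] at hcf
    exact hcf rfl
end

section
/- Let p be a prime ideal in a multivariate polynomial ring over a field and (G, C) its characteristic pair, i.e., G its reduced lexicographic Gröbner basis and C its W-characteristic set. Then ⟨G⟩ = sat(C), where sat(C) = ⟨C⟩ : I^∞ with I the product of the initials of the polynomials in C. In other words, the characteristic pair of a prime ideal is strong. -/
/-- `g` is a W-characteristic element of `G`: lexicographically minimal among the
elements of `G` sharing its leading variable. -/
def IsWCharElem {n : ℕ} {K : Type*} [Field K]
    (G : Finset (MvPolynomial (Fin n) K)) (g : MvPolynomial (Fin n) K) : Prop :=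
  ∃ v, IsLeadVar g v ∧ ∀ g' ∈ G, IsLeadVar g' v →
    ∀ E E', IsLeadExp g E → IsLeadExp g' E' → ¬ LexLt E' E

theorem lexLt_iff {n : ℕ} (u v : Fin n →₀ ℕ) :
    LexLt u v ↔ Finsupp.Lex (fun a b => b < a) (· < ·) u v := by
  constructor
  · rintro ⟨k, h1, h2⟩; exact ⟨k, fun j hj => h2 j hj, h1⟩
  · rintro ⟨k, h2, h1⟩; exact ⟨k, h1, fun j hj => h2 j hj⟩

theorem lexLt_wf {n : ℕ} : WellFounded (@LexLt n) := by
  have : WellFounded (Finsupp.Lex (fun a b : Fin n => b < a) ((· < ·) : ℕ → ℕ → Prop)) := by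
    refine Finsupp.Lex.wellFounded' (fun m => Nat.not_lt_zero m) (Nat.lt_wfRel.wf) ?_
    · exact (inferInstance : WellFoundedLT (Fin n)).wf
  exact Subrelation.wf (fun {u v} h => (lexLt_iff u v).mp h) this

theorem lexLt_asymm {n : ℕ} {u v : Fin n →₀ ℕ} (h : LexLt u v) : ¬ LexLt v u := by
  rintro ⟨k', h1', h2'⟩
  obtain ⟨k, h1, h2⟩ := h
  rcases lt_trichotomy k k' with hlt | rfl | hgt
  · exact absurd (h2 k' hlt) (by omega)
  · omega
  · exact absurd (h2' k hgt) (by omega)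

theorem lexLt_total {n : ℕ} {u v : Fin n →₀ ℕ} (h : u ≠ v) : LexLt u v ∨ LexLt v u := by
  classical
  set S := (u.support ∪ v.support).filter (fun j => u j ≠ v j) with hS
  have hne : S.Nonempty := by
    by_contra hc
    apply h
    ext a
    by_cases ha : u a = v a
    · exact ha
    · exfalso; apply hc
      refine ⟨a, Finset.mem_filter.mpr ⟨?_, ha⟩⟩
      rcases eq_or_ne (u a) 0 with h0 | h0
      · exact Finset.mem_union_right _ (Finsupp.mem_support_iff.mpr (fun hv => ha (by rw [h0, hv])))
      · exact Finset.mem_union_left _ (Finsupp.mem_support_iff.mpr h0)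
  set k := S.max' hne with hk
  have hkS : k ∈ S := S.max'_mem hne
  have hkne : u k ≠ v k := (Finset.mem_filter.mp hkS).2
  have hup : ∀ j, k < j → u j = v j := by
    intro j hj
    by_contra hc
    have : j ∈ S := by
      refine Finset.mem_filter.mpr ⟨?_, hc⟩
      rcases eq_or_ne (u j) 0 with h0 | h0
      · exact Finset.mem_union_right _ (Finsupp.mem_support_iff.mpr (fun hv => hc (by rw [h0, hv])))
      · exact Finset.mem_union_left _ (Finsupp.mem_support_iff.mpr h0)
    exact absurd (S.le_max' j this) (by omega)
  rcases lt_or_gt_of_ne hkne with hlt | hgt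
  · exact Or.inl ⟨k, hlt, hup⟩
  · exact Or.inr ⟨k, hgt, fun j hj => (hup j hj).symm⟩

theorem lexLt_add_left {n : ℕ} {u v : Fin n →₀ ℕ} (w : Fin n →₀ ℕ) (h : LexLt u v) :
    LexLt (w + u) (w + v) := by
  obtain ⟨k, h1, h2⟩ := h
  exact ⟨k, by simp [Finsupp.add_apply, h1], fun j hj => by simp [Finsupp.add_apply, h2 j hj]⟩

section Lemmas
variable {n : ℕ} {K : Type*} [Field K]
open MvPolynomial Finsupp

theorem leadExp_unique {f : MvPolynomial (Fin n) K} {E E' : Fin n →₀ ℕ}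
    (h : IsLeadExp f E) (h' : IsLeadExp f E') : E = E' := by
  by_contra hc
  exact lexLt_asymm (h.2 E' h'.1 (fun he => hc he.symm)) (h'.2 E h.1 hc)

theorem leadVar_unique {f : MvPolynomial (Fin n) K} {v v' : Fin n}
    (h : IsLeadVar f v) (h' : IsLeadVar f v') : v = v' := by
  by_contra hc
  rcases lt_or_gt_of_ne hc with hlt | hgt
  · obtain ⟨E, hE, hEv⟩ := h'.1
    exact hEv (h.2 E hE v' hlt)
  · obtain ⟨E, hE, hEv⟩ := h.1
    exact hEv (h'.2 E hE v hgt)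

/-- pointwise ≤ -/
theorem finsupp_le_def {u w : Fin n →₀ ℕ} (h : u ≤ w) : ∀ a, u a ≤ w a := fun a => h a

theorem exists_leadVar {p : Ideal (MvPolynomial (Fin n) K)} (hp : p.IsPrime)
    {g : MvPolynomial (Fin n) K} (hgp : g ∈ p) (hg0 : g ≠ 0) : ∃ v, IsLeadVar g v := by
  classical
  set U := g.support.sup (fun E => E.support) with hU
  have hUne : U.Nonempty := by
    rcases Finset.eq_empty_or_nonempty U with he | hne
    · exfalso
      have hgc : g = MvPolynomial.C (g.coeff 0) := by
        apply MvPolynomial.ext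
        intro E
        rcases eq_or_ne E 0 with rfl | hE0
        · simp
        · rw [MvPolynomial.coeff_C, if_neg (Ne.symm hE0)]
          by_contra hc
          have hEs : E ∈ g.support := MvPolynomial.mem_support_iff.mpr hc
          have : E.support = ∅ := by
            have h1 : E.support ⊆ U := Finset.le_sup (f := fun E => E.support) hEs
            rw [he] at h1
            exact Finset.subset_empty.mp h1
          exact hE0 (Finsupp.support_eq_empty.mp this)
      obtain ⟨a, hgc⟩ : ∃ a, g = MvPolynomial.C a ∧ a = g.coeff 0 := ⟨g.coeff 0, hgc, rfl⟩
      obtain ⟨hgc, ha'⟩ := hgc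
      have ha : a ≠ 0 := by
        intro hz
        apply hg0
        rw [hgc, hz, map_zero]
      have h1 : (1 : MvPolynomial (Fin n) K) ∈ p := by
        have h2 : MvPolynomial.C a⁻¹ * g ∈ p := p.mul_mem_left _ hgp
        rw [hgc, ← MvPolynomial.C_mul, inv_mul_cancel₀ ha, MvPolynomial.C_1] at h2
        exact h2
      exact hp.ne_top (Ideal.eq_top_iff_one p |>.mpr h1)
    · exact hne
  refine ⟨U.max' hUne, ?_, ?_⟩
  · obtain ⟨E, hE, hv⟩ := Finset.mem_sup.mp (U.max'_mem hUne)
    exact ⟨E, hE, Finsupp.mem_support_iff.mp hv⟩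
  · intro E hE u hu
    by_contra hc
    have hm : u ∈ U :=
      Finset.mem_sup.mpr ⟨E, hE, Finsupp.mem_support_iff.mpr hc⟩
    exact absurd (U.le_max' u hm) (not_le.mpr hu)

section Ini
variable {c ic : MvPolynomial (Fin n) K} {v : Fin n} {d : ℕ}

theorem ini_one_le_d (h : IsInitial c v d ic) : 1 ≤ d := by
  obtain ⟨E, hE, hEv⟩ := h.1.1
  have := h.2.2.1 E hE
  omega

theorem mem_support_ini (h : IsInitial c v d ic) {A : Fin n →₀ ℕ} :
    A ∈ ic.support ↔ A v = 0 ∧ (A + Finsupp.single v d) ∈ c.support := by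
  rw [MvPolynomial.mem_support_iff, MvPolynomial.mem_support_iff, h.2.2.2]
  constructor
  · intro hne
    by_cases hv : A v = 0
    · rw [if_pos hv] at hne; exact ⟨hv, hne⟩
    · rw [if_neg hv] at hne; exact absurd rfl hne
  · rintro ⟨hv, hne⟩; rwa [if_pos hv]

theorem ini_support_upper (h : IsInitial c v d ic) {A : Fin n →₀ ℕ} (hA : A ∈ ic.support) :
    ∀ u, v ≤ u → A u = 0 := by
  intro u hu
  obtain ⟨hv, hmem⟩ := (mem_support_ini h).mp hA
  rcases eq_or_lt_of_le hu with rfl | hlt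
  · exact hv
  · have := h.1.2 _ hmem u hlt
    simpa [Finsupp.add_apply, Finsupp.single_apply, (ne_of_lt hlt)] using this

theorem ini_ne_zero (h : IsInitial c v d ic) : ic ≠ 0 := by
  obtain ⟨E, hE, hEv⟩ := h.2.1
  intro hz
  have hA : (E - Finsupp.single v d) + Finsupp.single v d = E := by
    ext w
    rcases eq_or_ne w v with rfl | hw
    · simp [Finsupp.tsub_apply, Finsupp.single_apply, hEv]
    · simp [Finsupp.tsub_apply, Finsupp.single_apply, Ne.symm hw, hw]
  have : ic.coeff (E - Finsupp.single v d) = c.coeff E := by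
    rw [h.2.2.2, if_pos (by simp [Finsupp.tsub_apply, hEv]), hA]
  rw [hz, MvPolynomial.coeff_zero] at this
  exact MvPolynomial.mem_support_iff.mp hE this.symm

theorem leadExp_apply_v (h : IsInitial c v d ic) {Ec : Fin n →₀ ℕ} (hEc : IsLeadExp c Ec) :
    Ec v = d := by
  obtain ⟨E0, hE0, hE0v⟩ := h.2.1
  have hle : Ec v ≤ d := h.2.2.1 Ec hEc.1
  rcases eq_or_lt_of_le hle with he | hlt
  · exact he
  · exfalso
    have hne : E0 ≠ Ec := fun he => by rw [he] at hE0v; omega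
    obtain ⟨k, hk1, hk2⟩ := hEc.2 E0 hE0 hne
    rcases lt_trichotomy k v with h1 | rfl | h3
    · rw [hk2 v h1] at hE0v; omega
    · omega
    · rw [h.1.2 Ec hEc.1 k h3] at hk1; omega
end Ini
end Lemmas

section Div
variable {n : ℕ} {K : Type*} [Field K]
open MvPolynomial Finsupp

theorem gb_span {p : Ideal (MvPolynomial (Fin n) K)} {G : Finset (MvPolynomial (Fin n) K)}
    (hG : IsReducedGB G p) : ∀ f ∈ p, f ∈ Ideal.span (G : Set (MvPolynomial (Fin n) K)) := by
  classical
  have main : ∀ Ef : Fin n →₀ ℕ, ∀ f : MvPolynomial (Fin n) K, f ∈ p → IsLeadExp f Ef →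
      f ∈ Ideal.span (G : Set (MvPolynomial (Fin n) K)) := by
    intro Ef
    induction Ef using lexLt_wf.induction with
    | _ Ef IH =>
    intro f hf hle
    have hf0 : f ≠ 0 := by
      intro hz
      rw [hz] at hle
      simpa using hle.1
    obtain ⟨g, hgG, Eg, Ef', hgE, hfE, hEgEf⟩ := hG.2.1 f hf hf0
    have hEq : Ef' = Ef := leadExp_unique hfE hle
    subst hEq
    have hEgle : ∀ a, Eg a ≤ Ef' a := fun a => hEgEf a
    set u := Ef' - Eg with hu
    set cc := f.coeff Ef' * g.coeff Eg with hcc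
    set f' := f - MvPolynomial.monomial u cc * g with hf'
    have huEg : u + Eg = Ef' := by
      ext a; have := hEgle a
      simp only [hu, Finsupp.add_apply, Finsupp.tsub_apply]; omega
    have huEf : u ≤ Ef' := by
      intro a; simp only [hu, Finsupp.tsub_apply]; omega
    have hEfu : Ef' - u = Eg := by
      ext a; have := hEgle a
      simp only [hu, Finsupp.tsub_apply]; omega
    have hsq : g.coeff Eg * g.coeff Eg = 1 := by
      rcases hG.2.2.2 g hgG Eg hgE with h | h <;> rw [h] <;> ring
    have hcoefmul : ∀ E, (MvPolynomial.monomial u cc * g).coeff E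
        = if u ≤ E then cc * g.coeff (E - u) else 0 := fun E =>
      MvPolynomial.coeff_monomial_mul' E u cc g
    have hc0 : f'.coeff Ef' = 0 := by
      rw [hf', MvPolynomial.coeff_sub, hcoefmul, if_pos huEf, hEfu, hcc, mul_assoc, hsq,
        mul_one, sub_self]
    have hsupp : ∀ E ∈ f'.support, LexLt E Ef' := by
      intro E hE
      have hne : E ≠ Ef' := by
        intro he; rw [he] at hE
        exact (MvPolynomial.mem_support_iff.mp hE) hc0
      have hcne : f'.coeff E ≠ 0 := MvPolynomial.mem_support_iff.mp hE
      by_cases hfc : f.coeff E ≠ 0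
      · exact hle.2 E (MvPolynomial.mem_support_iff.mpr hfc) hne
      · push_neg at hfc
        have hmc : (MvPolynomial.monomial u cc * g).coeff E ≠ 0 := by
          intro hz
          apply hcne
          rw [hf', MvPolynomial.coeff_sub, hfc, hz, sub_self]
        rw [hcoefmul] at hmc
        by_cases hule : u ≤ E
        · rw [if_pos hule] at hmc
          have hs : g.coeff (E - u) ≠ 0 := fun hz => hmc (by rw [hz, mul_zero])
          have hsne : E - u ≠ Eg := by
            intro he
            apply hne
            rw [← huEg, ← he]
            ext a; have := hule a
            simp only [Finsupp.add_apply, Finsupp.tsub_apply]; omega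
          have hlt : LexLt (E - u) Eg := hgE.2 _ (MvPolynomial.mem_support_iff.mpr hs) hsne
          have := lexLt_add_left u hlt
          rw [huEg] at this
          have hEeq : u + (E - u) = E := by
            ext a; have := hule a
            simp only [Finsupp.add_apply, Finsupp.tsub_apply]; omega
          rwa [hEeq] at this
        · rw [if_neg hule] at hmc; exact absurd rfl hmc
    have hf'p : f' ∈ p := p.sub_mem hf (p.mul_mem_left _ (hG.1 g hgG))
    have hgspan : MvPolynomial.monomial u cc * g ∈ Ideal.span (G : Set (MvPolynomial (Fin n) K)) :=
      Ideal.mul_mem_left _ _ (Ideal.subset_span hgG)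
    have hfeq : f = f' + MvPolynomial.monomial u cc * g := by rw [hf']; ring
    rcases eq_or_ne f' 0 with hz | hnz
    · rw [hfeq, hz, zero_add]; exact hgspan
    · obtain ⟨g2, hg2, E2, Ef2, _, hf'E, _⟩ := hG.2.1 f' hf'p hnz
      have hlt : LexLt Ef2 Ef' := hsupp _ hf'E.1
      have hmem := IH Ef2 hlt f' hf'p hf'E
      rw [hfeq]
      exact Ideal.add_mem _ hmem hgspan
  intro f hf
  rcases eq_or_ne f 0 with rfl | hne
  · exact Ideal.zero_mem _
  · obtain ⟨g, hgG, Eg, Ef, _, hfE, _⟩ := hG.2.1 f hf hne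
    exact main Ef f hf hfE
end Div

section WChar
variable {n : ℕ} {K : Type*} [Field K]
variable {p : Ideal (MvPolynomial (Fin n) K)} {G C : Finset (MvPolynomial (Fin n) K)}
variable {lvf : MvPolynomial (Fin n) K → Fin n} {df : MvPolynomial (Fin n) K → ℕ}
variable {ini : MvPolynomial (Fin n) K → MvPolynomial (Fin n) K}
open MvPolynomial Finsupp

theorem ini_not_mem (hG : IsReducedGB G p)
    (hC : ∀ g, g ∈ C ↔ g ∈ G ∧ IsWCharElem G g)
    (hini : ∀ c ∈ C, IsInitial c (lvf c) (df c) (ini c)) :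
    ∀ c ∈ C, ini c ∉ p := by
  intro c hcC hmem
  have hI := hini c hcC
  have hne : ini c ≠ 0 := ini_ne_zero hI
  obtain ⟨g, hgG, Eg, Ef, hgE, hfE, hle⟩ := hG.2.1 _ hmem hne
  obtain ⟨hEfv, hEfc⟩ := (mem_support_ini hI).mp hfE.1
  have hcG : c ∈ G := ((hC c).mp hcC).1
  rcases eq_or_ne g c with rfl | hgc
  · have h1 : Eg (lvf g) = df g := leadExp_apply_v hI hgE
    have h2 : Eg (lvf g) ≤ Ef (lvf g) := hle (lvf g)
    have h3 := ini_one_le_d hI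
    omega
  · have hBle : Eg ≤ Ef + Finsupp.single (lvf c) (df c) := by
      intro a
      calc Eg a ≤ Ef a := hle a
      _ ≤ (Ef + Finsupp.single (lvf c) (df c)) a := by
        simp only [Finsupp.add_apply]; omega
    exact hG.2.2.1 c hcG g hgG hgc _ hEfc Eg hgE hBle

theorem exists_minC (hG : IsReducedGB G p)
    (hC : ∀ g, g ∈ C ↔ g ∈ G ∧ IsWCharElem G g)
    {g : MvPolynomial (Fin n) K} (hgG : g ∈ G) {v : Fin n} (hv : IsLeadVar g v) :
    ∃ c ∈ C, IsLeadVar c v ∧ ∀ g' ∈ G, IsLeadVar g' v →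
      ∀ E E', IsLeadExp c E → IsLeadExp g' E' → ¬ LexLt E' E := by
  have hg0 : g ≠ 0 := by
    obtain ⟨E, hE, _⟩ := hv.1
    intro hz; rw [hz] at hE; simpa using hE
  obtain ⟨g1, _, Eg1, Efg, _, hgEf, _⟩ := hG.2.1 g (hG.1 g hgG) hg0
  have hSne : Set.Nonempty {E : Fin n →₀ ℕ | ∃ g' ∈ G, IsLeadVar g' v ∧ IsLeadExp g' E} :=
    ⟨Efg, g, hgG, hv, hgEf⟩
  obtain ⟨m, hmS, hmin⟩ := lexLt_wf.has_min _ hSne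
  obtain ⟨c, hcG, hcv, hcE⟩ := hmS
  have hminP : ∀ g' ∈ G, IsLeadVar g' v →
      ∀ E E', IsLeadExp c E → IsLeadExp g' E' → ¬ LexLt E' E := by
    intro g' hg' hv' E E' hE hE'
    have hEm : E = m := leadExp_unique hE hcE
    subst hEm
    exact hmin E' ⟨g', hg', hv', hE'⟩
  exact ⟨c, (hC c).mpr ⟨hcG, ⟨v, hcv, hminP⟩⟩, hcv, hminP⟩

theorem uniqC (hG : IsReducedGB G p)
    (hC : ∀ g, g ∈ C ↔ g ∈ G ∧ IsWCharElem G g)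
    (hini : ∀ c ∈ C, IsInitial c (lvf c) (df c) (ini c))
    {c₁ c₂ : MvPolynomial (Fin n) K} (h1 : c₁ ∈ C) (h2 : c₂ ∈ C)
    (hv : lvf c₁ = lvf c₂) : c₁ = c₂ := by
  have hG1 : c₁ ∈ G := ((hC c₁).mp h1).1
  have hG2 : c₂ ∈ G := ((hC c₂).mp h2).1
  have hlv1 : IsLeadVar c₁ (lvf c₁) := (hini c₁ h1).1
  have hlv2 : IsLeadVar c₂ (lvf c₂) := (hini c₂ h2).1
  obtain ⟨v1, hv1, hmin1⟩ := ((hC c₁).mp h1).2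
  obtain ⟨v2, hv2, hmin2⟩ := ((hC c₂).mp h2).2
  have hve1 : v1 = lvf c₁ := leadVar_unique hv1 hlv1
  have hve2 : v2 = lvf c₂ := leadVar_unique hv2 hlv2
  have hc10 : c₁ ≠ 0 := by
    obtain ⟨E, hE, _⟩ := hlv1.1; intro hz; rw [hz] at hE; simpa using hE
  have hc20 : c₂ ≠ 0 := by
    obtain ⟨E, hE, _⟩ := hlv2.1; intro hz; rw [hz] at hE; simpa using hE
  obtain ⟨-, -, -, E1, -, hE1, -⟩ := hG.2.1 c₁ (hG.1 c₁ hG1) hc10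
  obtain ⟨-, -, -, E2, -, hE2, -⟩ := hG.2.1 c₂ (hG.1 c₂ hG2) hc20
  have hn1 : ¬ LexLt E2 E1 := by
    apply hmin1 c₂ hG2 _ E1 E2 hE1 hE2
    rw [hve1, hv]; exact hlv2
  have hn2 : ¬ LexLt E1 E2 := by
    apply hmin2 c₁ hG1 _ E2 E1 hE2 hE1
    rw [hve2, ← hv]; exact hlv1
  have hEeq : E1 = E2 := by
    by_contra hne
    rcases lexLt_total hne with h | h
    · exact hn2 h
    · exact hn1 h
  by_contra hne
  exact hG.2.2.1 c₁ hG1 c₂ hG2 (Ne.symm hne) E1 hE1.1 E2 hE2 (hEeq ▸ le_rfl)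
end WChar

section Prem
variable {n : ℕ} {K : Type*} [Field K]
open MvPolynomial Finsupp

theorem mul_coeff_wit {P Q : MvPolynomial (Fin n) K} {E : Fin n →₀ ℕ}
    (h : (P * Q).coeff E ≠ 0) :
    ∃ x : (Fin n →₀ ℕ) × (Fin n →₀ ℕ), x.1 + x.2 = E ∧ P.coeff x.1 ≠ 0 ∧ Q.coeff x.2 ≠ 0 := by
  rw [MvPolynomial.coeff_mul] at h
  obtain ⟨x, hx, hne⟩ := Finset.exists_ne_zero_of_sum_ne_zero h
  exact ⟨x, Finset.HasAntidiagonal.mem_antidiagonal.mp hx,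
    fun hz => hne (by rw [hz, zero_mul]), fun hz => hne (by rw [hz, mul_zero])⟩

theorem prem_one {c ic : MvPolynomial (Fin n) K} {v : Fin n} {d : ℕ}
    (hd : 1 ≤ d)
    (htop : ∀ E : Fin n →₀ ℕ, ic.coeff E = if E v = 0 then c.coeff (E + Finsupp.single v d) else 0)
    (hcd : ∀ E ∈ c.support, E v ≤ d)
    (hcup : ∀ E ∈ c.support, ∀ u, v < u → E u = 0) :
    ∀ e : ℕ, ∀ f : MvPolynomial (Fin n) K, (∀ E ∈ f.support, E v ≤ e) →
    ∃ (k : ℕ) (r : MvPolynomial (Fin n) K),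
      ic ^ k * f - r ∈ Ideal.span {c} ∧ (∀ E ∈ r.support, E v < d) ∧
      (∀ u, v < u → ∀ m, (∀ E ∈ f.support, E u ≤ m) → (∀ E ∈ r.support, E u ≤ m)) := by
  classical
  have hicsupp : ∀ A : Fin n →₀ ℕ, ic.coeff A ≠ 0 →
      A v = 0 ∧ c.coeff (A + Finsupp.single v d) ≠ 0 ∧ ∀ u, v < u → A u = 0 := by
    intro A hA
    rw [htop] at hA
    by_cases hv : A v = 0
    · rw [if_pos hv] at hA
      refine ⟨hv, hA, fun u hu => ?_⟩
      have h1 := hcup _ (MvPolynomial.mem_support_iff.mpr hA) u hu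
      simpa [Finsupp.add_apply, Finsupp.single_apply, (ne_of_lt hu)] using h1
    · rw [if_neg hv] at hA; exact absurd rfl hA
  intro e
  induction e with
  | zero =>
    intro f hf
    refine ⟨0, f, by simp, fun E hE => by have := hf E hE; omega, fun u hu m hm => hm⟩
  | succ e IH =>
    intro f hf
    by_cases hdb : e + 1 < d
    · exact ⟨0, f, by simp, fun E hE => by have := hf E hE; omega, fun u hu m hm => hm⟩
    push_neg at hdb
    -- d ≤ e + 1
    set b := e + 1 with hb
    set T := f.support.filter (fun E => E v = b) with hT
    set q₀ := ∑ B ∈ T, MvPolynomial.monomial (B - Finsupp.single v d) (f.coeff B) with hq₀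
    have hq₀coeff : ∀ A : Fin n →₀ ℕ,
        q₀.coeff A = if A v + d = b then f.coeff (A + Finsupp.single v d) else 0 := by
      intro A
      rw [hq₀, MvPolynomial.coeff_sum]
      by_cases hA : A v + d = b
      · rw [if_pos hA]
        have hcongr : ∀ B ∈ T, (MvPolynomial.monomial (B - Finsupp.single v d)
            (f.coeff B)).coeff A = if B = A + Finsupp.single v d then f.coeff B else 0 := by
          intro B hB
          obtain ⟨hBf, hBv⟩ := Finset.mem_filter.mp hB
          rw [MvPolynomial.coeff_monomial]
          congr 1
          apply propext
          constructor
          · intro he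
            ext a
            have h1 : (B - Finsupp.single v d) a = A a := by rw [he]
            simp only [Finsupp.tsub_apply, Finsupp.single_apply] at h1
            simp only [Finsupp.add_apply, Finsupp.single_apply]
            rcases eq_or_ne v a with rfl | hva
            · simp only [eq_self_iff_true, if_true] at h1 ⊢; omega
            · simp only [if_neg hva] at h1 ⊢; omega
          · intro he
            ext a
            have h1 : B a = (A + Finsupp.single v d) a := by rw [he]
            simp only [Finsupp.add_apply, Finsupp.single_apply] at h1
            simp only [Finsupp.tsub_apply, Finsupp.single_apply]
            rcases eq_or_ne v a with rfl | hva
            · simp only [eq_self_iff_true, if_true] at h1 ⊢; omega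
            · simp only [if_neg hva] at h1 ⊢; omega
        rw [Finset.sum_congr rfl hcongr, Finset.sum_ite_eq' T (A + Finsupp.single v d)
          (fun B => f.coeff B)]
        by_cases hmem : A + Finsupp.single v d ∈ T
        · rw [if_pos hmem]
        · rw [if_neg hmem]
          by_contra hne
          apply hmem
          refine Finset.mem_filter.mpr ⟨MvPolynomial.mem_support_iff.mpr (Ne.symm hne), ?_⟩
          simp only [Finsupp.add_apply, Finsupp.single_apply, eq_self_iff_true, if_true]
          omega
      · rw [if_neg hA]
        apply Finset.sum_eq_zero
        intro B hB
        obtain ⟨hBf, hBv⟩ := Finset.mem_filter.mp hB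
        rw [MvPolynomial.coeff_monomial, if_neg]
        intro he
        apply hA
        have h1 : (B - Finsupp.single v d) v = A v := by rw [he]
        simp only [Finsupp.tsub_apply, Finsupp.single_apply, eq_self_iff_true, if_true] at h1
        omega
    have claim : ∀ E : Fin n →₀ ℕ, b ≤ E v → (ic * f).coeff E = (q₀ * c).coeff E := by
      intro E hEv
      rw [MvPolynomial.coeff_mul, MvPolynomial.coeff_mul]
      rcases eq_or_lt_of_le hEv with heq | hgt
      · -- E v = b : bijection
        have hL : ∀ x ∈ Finset.HasAntidiagonal.antidiagonal E,
            ic.coeff x.1 * f.coeff x.2 =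
            if x.1 v = 0 then c.coeff (x.1 + Finsupp.single v d) * f.coeff x.2 else 0 := by
          intro x hx
          rw [htop]
          by_cases h0 : x.1 v = 0
          · rw [if_pos h0, if_pos h0]
          · rw [if_neg h0, if_neg h0, zero_mul]
        have hR : ∀ x ∈ Finset.HasAntidiagonal.antidiagonal E,
            q₀.coeff x.1 * c.coeff x.2 =
            if x.1 v + d = b then f.coeff (x.1 + Finsupp.single v d) * c.coeff x.2 else 0 := by
          intro x hx
          rw [hq₀coeff]
          by_cases h0 : x.1 v + d = b
          · rw [if_pos h0, if_pos h0]
          · rw [if_neg h0, if_neg h0, zero_mul]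
        rw [Finset.sum_congr rfl hL, Finset.sum_congr rfl hR, ← Finset.sum_filter,
          ← Finset.sum_filter]
        refine Finset.sum_nbij'
          (fun x => (x.2 - Finsupp.single v d, x.1 + Finsupp.single v d))
          (fun x => (x.2 - Finsupp.single v d, x.1 + Finsupp.single v d)) ?_ ?_ ?_ ?_ ?_
        · intro x hx
          obtain ⟨hxad, hx1⟩ := Finset.mem_filter.mp hx
          have hsum : x.1 + x.2 = E := Finset.HasAntidiagonal.mem_antidiagonal.mp hxad
          have hpt : ∀ a, x.1 a + x.2 a = E a := fun a => by
            rw [← hsum]; simp [Finsupp.add_apply]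
          have hx2v : x.2 v = b := by have := hpt v; omega
          refine Finset.mem_filter.mpr ⟨Finset.HasAntidiagonal.mem_antidiagonal.mpr ?_, ?_⟩
          · ext a
            have h1 := hpt a
            simp only [Finsupp.add_apply, Finsupp.tsub_apply, Finsupp.single_apply]
            rcases eq_or_ne v a with rfl | hva
            · simp only [eq_self_iff_true, if_true]; omega
            · simp only [if_neg hva]; omega
          · simp only [Finsupp.tsub_apply, Finsupp.single_apply, eq_self_iff_true, if_true]
            omega
        · intro x hx
          obtain ⟨hxad, hx1⟩ := Finset.mem_filter.mp hx
          have hsum : x.1 + x.2 = E := Finset.HasAntidiagonal.mem_antidiagonal.mp hxad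
          have hpt : ∀ a, x.1 a + x.2 a = E a := fun a => by
            rw [← hsum]; simp [Finsupp.add_apply]
          have hx2v : x.2 v = d := by have := hpt v; omega
          refine Finset.mem_filter.mpr ⟨Finset.HasAntidiagonal.mem_antidiagonal.mpr ?_, ?_⟩
          · ext a
            have h1 := hpt a
            simp only [Finsupp.add_apply, Finsupp.tsub_apply, Finsupp.single_apply]
            rcases eq_or_ne v a with rfl | hva
            · simp only [eq_self_iff_true, if_true]; omega
            · simp only [if_neg hva]; omega
          · simp only [Finsupp.tsub_apply, Finsupp.single_apply, eq_self_iff_true, if_true]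
            omega
        · intro x hx
          obtain ⟨hxad, hx1⟩ := Finset.mem_filter.mp hx
          have hsum : x.1 + x.2 = E := Finset.HasAntidiagonal.mem_antidiagonal.mp hxad
          have hpt : ∀ a, x.1 a + x.2 a = E a := fun a => by
            rw [← hsum]; simp [Finsupp.add_apply]
          have hx2v : x.2 v = b := by have := hpt v; omega
          have e1 : (x.1 + Finsupp.single v d) - Finsupp.single v d = x.1 := by
            ext a
            simp only [Finsupp.add_apply, Finsupp.tsub_apply, Finsupp.single_apply]
            omega
          have e2 : (x.2 - Finsupp.single v d) + Finsupp.single v d = x.2 := by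
            ext a
            simp only [Finsupp.add_apply, Finsupp.tsub_apply, Finsupp.single_apply]
            rcases eq_or_ne v a with rfl | hva
            · simp only [eq_self_iff_true, if_true]; omega
            · simp only [if_neg hva]; omega
          simp only [e1, e2]
        · intro x hx
          obtain ⟨hxad, hx1⟩ := Finset.mem_filter.mp hx
          have hsum : x.1 + x.2 = E := Finset.HasAntidiagonal.mem_antidiagonal.mp hxad
          have hpt : ∀ a, x.1 a + x.2 a = E a := fun a => by
            rw [← hsum]; simp [Finsupp.add_apply]
          have hx2v : x.2 v = d := by have := hpt v; omega
          have e1 : (x.1 + Finsupp.single v d) - Finsupp.single v d = x.1 := by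
            ext a
            simp only [Finsupp.add_apply, Finsupp.tsub_apply, Finsupp.single_apply]
            omega
          have e2 : (x.2 - Finsupp.single v d) + Finsupp.single v d = x.2 := by
            ext a
            simp only [Finsupp.add_apply, Finsupp.tsub_apply, Finsupp.single_apply]
            rcases eq_or_ne v a with rfl | hva
            · simp only [eq_self_iff_true, if_true]; omega
            · simp only [if_neg hva]; omega
          simp only [e1, e2]
        · intro x hx
          obtain ⟨hxad, hx1⟩ := Finset.mem_filter.mp hx
          have hsum : x.1 + x.2 = E := Finset.HasAntidiagonal.mem_antidiagonal.mp hxad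
          have hpt : ∀ a, x.1 a + x.2 a = E a := fun a => by
            rw [← hsum]; simp [Finsupp.add_apply]
          have hx2v : x.2 v = b := by have := hpt v; omega
          have e2 : (x.2 - Finsupp.single v d) + Finsupp.single v d = x.2 := by
            ext a
            simp only [Finsupp.add_apply, Finsupp.tsub_apply, Finsupp.single_apply]
            rcases eq_or_ne v a with rfl | hva
            · simp only [eq_self_iff_true, if_true]; omega
            · simp only [if_neg hva]; omega
          simp only [e2]
          ring
      · -- E v > b : both sides are zero
        rw [Finset.sum_eq_zero, Finset.sum_eq_zero]
        · intro x hx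
          have hsum : x.1 + x.2 = E := Finset.HasAntidiagonal.mem_antidiagonal.mp hx
          have hpt : ∀ a, x.1 a + x.2 a = E a := fun a => by
            rw [← hsum]; simp [Finsupp.add_apply]
          by_cases h0 : q₀.coeff x.1 = 0
          · rw [h0, zero_mul]
          · rw [hq₀coeff] at h0
            have h1 : x.1 v + d = b := by
              by_contra hc; rw [if_neg hc] at h0; exact h0 rfl
            have h2 : x.2 v > d := by have := hpt v; omega
            have h3 : c.coeff x.2 = 0 := by
              by_contra hc
              have := hcd x.2 (MvPolynomial.mem_support_iff.mpr hc)
              omega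
            rw [h3, mul_zero]
        · intro x hx
          have hsum : x.1 + x.2 = E := Finset.HasAntidiagonal.mem_antidiagonal.mp hx
          have hpt : ∀ a, x.1 a + x.2 a = E a := fun a => by
            rw [← hsum]; simp [Finsupp.add_apply]
          by_cases h0 : ic.coeff x.1 = 0
          · rw [h0, zero_mul]
          · have h1 := (hicsupp x.1 h0).1
            have h2 : x.2 v > b := by have := hpt v; omega
            have h3 : f.coeff x.2 = 0 := by
              by_contra hc
              have := hf x.2 (MvPolynomial.mem_support_iff.mpr hc)
              omega
            rw [h3, mul_zero]
    set h := ic * f - q₀ * c with hh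
    have hh1 : ∀ E ∈ h.support, E v ≤ e := by
      intro E hE
      by_contra hc
      push_neg at hc
      have hcc : h.coeff E = 0 := by
        rw [hh, MvPolynomial.coeff_sub, claim E (by omega), sub_self]
      exact (MvPolynomial.mem_support_iff.mp hE) hcc
    have hspan : ic * f - h ∈ Ideal.span ({c} : Set (MvPolynomial (Fin n) K)) := by
      have : ic * f - h = q₀ * c := by rw [hh]; ring
      rw [this]
      exact Ideal.mem_span_singleton.mpr (dvd_mul_left c q₀)
    have hh3 : ∀ u, v < u → ∀ m, (∀ E ∈ f.support, E u ≤ m) → (∀ E ∈ h.support, E u ≤ m) := by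
      intro u hu m hm E hE
      have hcc : h.coeff E ≠ 0 := MvPolynomial.mem_support_iff.mp hE
      have : (ic * f).coeff E ≠ 0 ∨ (q₀ * c).coeff E ≠ 0 := by
        by_contra hc
        push_neg at hc
        apply hcc
        rw [hh, MvPolynomial.coeff_sub, hc.1, hc.2, sub_self]
      rcases this with h1 | h1
      · obtain ⟨x, hsum, hP, hQ⟩ := mul_coeff_wit h1
        have hx1 := (hicsupp x.1 hP).2.2 u hu
        have hx2 := hm x.2 (MvPolynomial.mem_support_iff.mpr hQ)
        have hpt : x.1 u + x.2 u = E u := by rw [← hsum]; simp [Finsupp.add_apply]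
        omega
      · obtain ⟨x, hsum, hP, hQ⟩ := mul_coeff_wit h1
        rw [hq₀coeff] at hP
        have h2 : x.1 v + d = b ∧ f.coeff (x.1 + Finsupp.single v d) ≠ 0 := by
          by_cases hcnd : x.1 v + d = b
          · rw [if_pos hcnd] at hP; exact ⟨hcnd, hP⟩
          · rw [if_neg hcnd] at hP; exact absurd rfl hP
        have hx1 : x.1 u ≤ m := by
          have := hm _ (MvPolynomial.mem_support_iff.mpr h2.2)
          simpa [Finsupp.add_apply, Finsupp.single_apply, (ne_of_lt hu)] using this
        have hx2 : x.2 u = 0 := hcup x.2 (MvPolynomial.mem_support_iff.mpr hQ) u hu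
        have hpt : x.1 u + x.2 u = E u := by rw [← hsum]; simp [Finsupp.add_apply]
        omega
    obtain ⟨k, r, hr1, hr2, hr3⟩ := IH h hh1
    refine ⟨k + 1, r, ?_, hr2, fun u hu m hm => hr3 u hu m (hh3 u hu m hm)⟩
    have heq : ic ^ (k + 1) * f - r = ic ^ k * (ic * f - h) + (ic ^ k * h - r) := by ring
    rw [heq]
    exact Ideal.add_mem _ (Ideal.mul_mem_left _ _ hspan) hr1
end Prem

section Main
variable {n : ℕ} {K : Type*} [Field K]
open MvPolynomial Finsupp

theorem prem_all {p : Ideal (MvPolynomial (Fin n) K)} {G C : Finset (MvPolynomial (Fin n) K)}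
    (hG : IsReducedGB G p)
    (hC : ∀ g, g ∈ C ↔ g ∈ G ∧ IsWCharElem G g)
    {lvf : MvPolynomial (Fin n) K → Fin n} {df : MvPolynomial (Fin n) K → ℕ}
    {ini : MvPolynomial (Fin n) K → MvPolynomial (Fin n) K}
    (hini : ∀ c ∈ C, IsInitial c (lvf c) (df c) (ini c)) :
    ∀ t : ℕ, ∀ f : MvPolynomial (Fin n) K,
    ∃ (k : MvPolynomial (Fin n) K → ℕ) (r : MvPolynomial (Fin n) K),
      ((∏ c ∈ C, ini c ^ k c) * f - r ∈ Ideal.span (C : Set (MvPolynomial (Fin n) K))) ∧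
      (∀ c ∈ C, n - t ≤ (lvf c).val → ∀ E ∈ r.support, E (lvf c) < df c) := by
  classical
  intro t
  induction t with
  | zero =>
    intro f
    refine ⟨fun _ => 0, f, by simp, fun c hc hle E hE => ?_⟩
    exact absurd (lvf c).isLt (not_lt.mpr hle)
  | succ t IH =>
    intro f
    obtain ⟨k₁, r₁, h1, h2⟩ := IH f
    by_cases hν : n - (t + 1) = n - t
    · exact ⟨k₁, r₁, h1, fun c hc hle E hE => h2 c hc (by omega) E hE⟩
    · have hνlt : n - (t + 1) < n := by omega
      set ν := n - (t + 1) with hνdef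
      set v : Fin n := ⟨ν, hνlt⟩ with hvdef
      by_cases hex : ∃ c ∈ C, lvf c = v
      · obtain ⟨c, hcC, hcv⟩ := hex
        have hI := hini c hcC
        have hd := ini_one_le_d hI
        have htop := hI.2.2.2
        have hcd := hI.2.2.1
        have hcup := hI.1.2
        have hbound : ∀ E ∈ r₁.support, E (lvf c) ≤ r₁.support.sup (fun E => E (lvf c)) :=
          fun E hE => Finset.le_sup (f := fun E => E (lvf c)) hE
        obtain ⟨m, r, hr1, hr2, hr3⟩ := prem_one hd htop hcd hcup _ r₁ hbound
        refine ⟨fun x => k₁ x + if x = c then m else 0, r, ?_, ?_⟩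
        · have hprod : (∏ x ∈ C, ini x ^ (k₁ x + if x = c then m else 0))
              = (∏ x ∈ C, ini x ^ k₁ x) * ini c ^ m := by
            calc (∏ x ∈ C, ini x ^ (k₁ x + if x = c then m else 0))
                = ∏ x ∈ C, (ini x ^ k₁ x * ini x ^ (if x = c then m else 0)) :=
                  Finset.prod_congr rfl (fun x _ => pow_add _ _ _)
              _ = (∏ x ∈ C, ini x ^ k₁ x) * ∏ x ∈ C, ini x ^ (if x = c then m else 0) :=
                  Finset.prod_mul_distrib
              _ = (∏ x ∈ C, ini x ^ k₁ x) * ∏ x ∈ C, (if x = c then ini x ^ m else 1) := by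
                  congr 1
                  refine Finset.prod_congr rfl (fun x _ => ?_)
                  split_ifs <;> simp
              _ = (∏ x ∈ C, ini x ^ k₁ x) * ini c ^ m := by
                  rw [Finset.prod_ite_eq' C c (fun x => ini x ^ m), if_pos hcC]
          have key : (∏ x ∈ C, ini x ^ (k₁ x + if x = c then m else 0)) * f - r
              = ini c ^ m * ((∏ x ∈ C, ini x ^ k₁ x) * f - r₁) + (ini c ^ m * r₁ - r) := by
            rw [hprod]; ring
          rw [key]
          refine Ideal.add_mem _ (Ideal.mul_mem_left _ _ h1) ?_
          have hsub : ({c} : Set (MvPolynomial (Fin n) K)) ⊆ (C : Set (MvPolynomial (Fin n) K)) :=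
            Set.singleton_subset_iff.mpr hcC
          exact Ideal.span_mono hsub hr1
        · intro c' hc' hle E hE
          by_cases hcase : (lvf c').val = ν
          · have hvv : lvf c' = v := Fin.ext hcase
            have hcc : c' = c := uniqC hG hC hini hc' hcC (by rw [hvv, ← hcv])
            rw [hcc]
            exact hr2 E hE
          · have hgt : n - t ≤ (lvf c').val := by omega
            have h2' := h2 c' hc' hgt
            have hu : lvf c < lvf c' := by
              rw [hcv]
              exact Fin.lt_def.mpr (by simp only [hvdef]; omega)
            have hdf1 : 1 ≤ df c' := ini_one_le_d (hini c' hc')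
            have hb1 : ∀ E' ∈ r₁.support, E' (lvf c') ≤ df c' - 1 := by
              intro E' hE'; have := h2' E' hE'; omega
            have := hr3 (lvf c') hu (df c' - 1) hb1 E hE
            omega
      · refine ⟨k₁, r₁, h1, fun c' hc' hle E hE => ?_⟩
        by_cases hcase : (lvf c').val = ν
        · exact absurd ⟨c', hc', Fin.ext hcase⟩ hex
        · exact h2 c' hc' (by omega) E hE
end Main


/-- Let `p` be a prime ideal with characteristic pair `(G, C)`: `G` its
reduced lex Gröbner basis and `C ⊆ G` its W-characteristic set.  Let `ini c` be the
initial of each `c ∈ C` (w.r.t. its leading variable `lvf c` of degree `df c`).  Then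
`⟨G⟩ = sat(C) = ⟨C⟩ : I^∞` where `I = ∏_{c ∈ C} ini c`; i.e. the characteristic pair
of a prime ideal is strong. -/
theorem stmt_10 {n : ℕ} {K : Type*} [Field K] (p : Ideal (MvPolynomial (Fin n) K))
    (hp : p.IsPrime) (G : Finset (MvPolynomial (Fin n) K)) (hG : IsReducedGB G p)
    (C : Finset (MvPolynomial (Fin n) K))
    (hC : ∀ g, g ∈ C ↔ g ∈ G ∧ IsWCharElem G g)
    (lvf : MvPolynomial (Fin n) K → Fin n) (df : MvPolynomial (Fin n) K → ℕ)
    (ini : MvPolynomial (Fin n) K → MvPolynomial (Fin n) K)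
    (hini : ∀ c ∈ C, IsInitial c (lvf c) (df c) (ini c)) :
    ∀ F : MvPolynomial (Fin n) K,
      F ∈ Ideal.span (G : Set (MvPolynomial (Fin n) K)) ↔
        ∃ k : ℕ, (∏ c ∈ C, ini c) ^ k * F ∈ Ideal.span (C : Set (MvPolynomial (Fin n) K)) := by
  classical
  have hGp : Ideal.span (G : Set (MvPolynomial (Fin n) K)) ≤ p :=
    Ideal.span_le.mpr (fun g hg => hG.1 g hg)
  have hCp : Ideal.span (C : Set (MvPolynomial (Fin n) K)) ≤ p :=
    Ideal.span_le.mpr (fun c hc => hG.1 c ((hC c).mp hc).1)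
  intro F
  constructor
  · intro hF
    have hFp : F ∈ p := hGp hF
    obtain ⟨k, r, h1, h2⟩ := prem_all hG hC hini n F
    have hrp : r ∈ p := by
      have hmem : (∏ c ∈ C, ini c ^ k c) * F - r ∈ p := hCp h1
      have hmul : (∏ c ∈ C, ini c ^ k c) * F ∈ p := p.mul_mem_left _ hFp
      have := p.sub_mem hmul hmem
      simpa using this
    have hr0 : r = 0 := by
      by_contra hne
      obtain ⟨g, hgG, Eg, Er, hgE, hrE, hle⟩ := hG.2.1 r hrp hne
      have hg0 : g ≠ 0 := by intro hz; rw [hz] at hgE; simpa using hgE.1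
      obtain ⟨v, hv⟩ := exists_leadVar hp (hG.1 g hgG) hg0
      obtain ⟨c, hcC, hcv, hmin⟩ := exists_minC hG hC hgG hv
      have hvlv : v = lvf c := leadVar_unique hcv (hini c hcC).1
      have hc0 : c ≠ 0 := by
        obtain ⟨E, hE, _⟩ := hcv.1; intro hz; rw [hz] at hE; simpa using hE
      obtain ⟨-, -, -, Ec, -, hcE, -⟩ := hG.2.1 c (hG.1 c ((hC c).mp hcC).1) hc0
      have hEcv : Ec (lvf c) = df c := leadExp_apply_v (hini c hcC) hcE
      have hnlt : ¬ LexLt Eg Ec := hmin g hgG hv Ec Eg hcE hgE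
      have hdle : df c ≤ Eg v := by
        by_contra hlt
        push_neg at hlt
        apply hnlt
        refine ⟨v, ?_, ?_⟩
        · rw [hvlv, hEcv]; rw [hvlv] at hlt; exact hlt
        · intro j hj
          rw [hv.2 Eg hgE.1 j hj, hcv.2 Ec hcE.1 j hj]
      have h3 := h2 c hcC (by omega) Er hrE.1
      have h4 : Eg v ≤ Er v := hle v
      rw [← hvlv] at h3
      omega
    rw [hr0, sub_zero] at h1
    refine ⟨∑ c ∈ C, k c, ?_⟩
    have hsplit : (∏ c ∈ C, ini c) ^ (∑ c ∈ C, k c)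
        = (∏ c ∈ C, ini c ^ ((∑ x ∈ C, k x) - k c)) * (∏ c ∈ C, ini c ^ k c) := by
      rw [← Finset.prod_pow]
      rw [← Finset.prod_mul_distrib]
      refine Finset.prod_congr rfl (fun c hc => ?_)
      rw [← pow_add]
      congr 1
      have : k c ≤ ∑ x ∈ C, k x := Finset.single_le_sum (fun i _ => Nat.zero_le _) hc
      omega
    rw [hsplit, mul_assoc]
    exact Ideal.mul_mem_left _ _ h1
  · rintro ⟨k, hk⟩
    have hmem : (∏ c ∈ C, ini c) ^ k * F ∈ p := hCp hk
    have hF : F ∈ p := by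
      rcases hp.mem_or_mem hmem with h | h
      · exfalso
        have hI : (∏ c ∈ C, ini c) ∈ p := hp.mem_of_pow_mem _ h
        have hprod : ∀ s : Finset (MvPolynomial (Fin n) K),
            (∏ c ∈ s, ini c) ∈ p → ∃ c ∈ s, ini c ∈ p := by
          intro s
          induction s using Finset.induction with
          | empty =>
            intro h1
            rw [Finset.prod_empty] at h1
            exact absurd (Ideal.eq_top_iff_one p |>.mpr h1) hp.ne_top
          | @insert a s' hx ih =>
            rw [Finset.prod_insert hx]
            intro h1
            rcases hp.mem_or_mem h1 with h2 | h2
            · exact ⟨a, Finset.mem_insert_self a s', h2⟩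
            · obtain ⟨c, hc, hcp⟩ := ih h2
              exact ⟨c, Finset.mem_insert_of_mem hc, hcp⟩
        obtain ⟨c, hcC, hcp⟩ := hprod C hI
        exact ini_not_mem hG hC hini c hcC hcp
      · exact h
    exact gb_span hG F hF
end

section
/- Let <_v be a total order on the variables x_{ij} of a generic m×n matrix X. Then the lexicographic term order induced by <_v is anti-diagonal (i.e., the leading term of every minor of X is the product of the anti-diagonal entries of its submatrix) if and only if for every square submatrix of X, the greatest variable of the submatrix with respect to <_v lies at its north-east or south-west corner. -/
/-- The lexicographic order on exponent vectors induced by a variable order `vlt`. -/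
def LexLtV {m n : ℕ} (vlt : (Fin m × Fin n) → (Fin m × Fin n) → Prop)
    (u w : (Fin m × Fin n) →₀ ℕ) : Prop :=
  ∃ x, u x < w x ∧ ∀ y, vlt x y → u y = w y

/-- `E` is the exponent of the leading term of `f` w.r.t. the lex order induced by
`vlt`. -/
def IsLeadExpV {m n : ℕ} {K : Type*} [CommSemiring K]
    (vlt : (Fin m × Fin n) → (Fin m × Fin n) → Prop)
    (f : MvPolynomial (Fin m × Fin n) K) (E : (Fin m × Fin n) →₀ ℕ) : Prop :=
  E ∈ f.support ∧ ∀ E' ∈ f.support, E' ≠ E → LexLtV vlt E' E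

section helpers

open MvPolynomial Finsupp Equiv

variable {m n r : ℕ} {K : Type*} [Field K]

lemma prodX (v : Fin r → Fin m × Fin n) :
    (∏ i, (X (v i) : MvPolynomial (Fin m × Fin n) K)) =
      monomial (∑ i, Finsupp.single (v i) 1) 1 := by
  induction' (Finset.univ : Finset (Fin r)) using Finset.induction_on with a s ha ih
  · simp
  · rw [Finset.prod_insert ha, Finset.sum_insert ha, ih, X, monomial_mul, one_mul]

lemma Eapp {a : Fin r → Fin m} {b : Fin r → Fin n} (ha : Function.Injective a)
    (hb : Function.Injective b) (σ : Fin r → Fin r) (i k : Fin r) :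
    (∑ j, Finsupp.single (a j, b (σ j)) (1:ℕ)) (a i, b k) =
      if σ i = k then 1 else 0 := by
  rw [Finsupp.finset_sum_apply]
  rw [Finset.sum_eq_single i]
  · simp only [Finsupp.single_apply, Prod.mk.injEq]
    by_cases h : σ i = k <;> simp [h, hb.eq_iff]
  · intro j _ hj
    simp only [Finsupp.single_apply, Prod.mk.injEq]
    rw [if_neg]
    rintro ⟨h1, -⟩
    exact hj (ha h1)
  · simp

lemma Eapp0 {a : Fin r → Fin m} {b : Fin r → Fin n}
    (σ : Fin r → Fin r) (x : Fin m × Fin n)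
    (hx : (∑ j, Finsupp.single (a j, b (σ j)) (1:ℕ)) x ≠ 0) :
    ∃ j, x = (a j, b (σ j)) := by
  rw [Finsupp.finset_sum_apply] at hx
  obtain ⟨j, -, hj⟩ := Finset.exists_ne_zero_of_sum_ne_zero hx
  refine ⟨j, ?_⟩
  by_contra h
  exact hj (by rw [Finsupp.single_apply, if_neg (fun he => h he.symm)])

lemma E_inj {a : Fin r → Fin m} {b : Fin r → Fin n} (ha : Function.Injective a)
    (hb : Function.Injective b) {σ τ : Fin r → Fin r}
    (h : (∑ j, Finsupp.single (a j, b (σ j)) (1:ℕ)) =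
      ∑ j, Finsupp.single (a j, b (τ j)) 1) : σ = τ := by
  funext i
  have := congrFun (congrArg DFunLike.coe h) (a i, b (σ i))
  rw [Eapp ha hb σ i (σ i), Eapp ha hb τ i (σ i), if_pos rfl] at this
  by_contra hc
  rw [if_neg (fun he => hc he.symm)] at this
  simp at this

lemma det_eq (a : Fin r → Fin m) (b : Fin r → Fin n) :
    (Matrix.det (Matrix.of fun p q : Fin r =>
      (MvPolynomial.X (a p, b q) : MvPolynomial (Fin m × Fin n) K))) =
    ∑ σ : Equiv.Perm (Fin r), (Equiv.Perm.sign σ : K) •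
      monomial (∑ i, Finsupp.single (a i, b (σ i)) (1:ℕ)) (1:K) := by
  rw [Matrix.det_apply,
    ← Equiv.sum_comp (Equiv.inv (Equiv.Perm (Fin r)))
      (fun σ => (Equiv.Perm.sign σ : K) •
        monomial (∑ i, Finsupp.single (a i, b (σ i)) (1:ℕ)) (1:K))]
  refine Finset.sum_congr rfl fun σ _ => ?_
  simp only [Equiv.inv_apply, Equiv.Perm.sign_inv]
  have h1 : (∏ i, (Matrix.of fun p q : Fin r =>
      (MvPolynomial.X (a p, b q) : MvPolynomial (Fin m × Fin n) K)) (σ i) i)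
      = ∏ i, (X (a (σ i), b i) : MvPolynomial (Fin m × Fin n) K) := rfl
  have hexp : (∑ i, Finsupp.single (a (σ i), b i) (1:ℕ))
      = ∑ i, Finsupp.single (a i, b (σ⁻¹ i)) 1 := by
    rw [← Equiv.sum_comp σ (fun i => Finsupp.single (a i, b (σ⁻¹ i)) (1:ℕ))]
    simp
  rw [h1, prodX, hexp, Units.smul_def, ← Int.cast_smul_eq_zsmul K]

lemma coeff_det {a : Fin r → Fin m} {b : Fin r → Fin n} (ha : Function.Injective a)
    (hb : Function.Injective b) (σ : Equiv.Perm (Fin r)) :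
    coeff (∑ i, Finsupp.single (a i, b (σ i)) 1)
      (Matrix.det (Matrix.of fun p q : Fin r =>
        (MvPolynomial.X (a p, b q) : MvPolynomial (Fin m × Fin n) K)))
      = (Equiv.Perm.sign σ : K) := by
  rw [det_eq]
  rw [MvPolynomial.coeff_sum]
  rw [Finset.sum_eq_single σ]
  · simp [coeff_monomial]
  · intro τ _ hτ
    simp only [coeff_smul, coeff_monomial]
    rw [if_neg, smul_zero]
    intro h
    exact hτ (Equiv.coe_fn_injective (E_inj ha hb h))
  · simp

lemma sign_cast_ne {σ : Equiv.Perm (Fin r)} : ((Equiv.Perm.sign σ : ℤ) : K) ≠ 0 := by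
  rcases Int.units_eq_one_or (Equiv.Perm.sign σ) with h | h <;> rw [h] <;> simp

lemma mem_support_det {a : Fin r → Fin m} {b : Fin r → Fin n}
    {E : (Fin m × Fin n) →₀ ℕ}
    (hE : E ∈ (Matrix.det (Matrix.of fun p q : Fin r =>
        (MvPolynomial.X (a p, b q) : MvPolynomial (Fin m × Fin n) K))).support) :
    ∃ σ : Equiv.Perm (Fin r), E = ∑ i, Finsupp.single (a i, b (σ i)) 1 := by
  by_contra hc
  push_neg at hc
  rw [MvPolynomial.mem_support_iff] at hE
  apply hE
  rw [det_eq, MvPolynomial.coeff_sum]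
  refine Finset.sum_eq_zero fun τ _ => ?_
  simp only [coeff_smul, coeff_monomial]
  rw [if_neg fun h => hc τ h.symm, smul_zero]

lemma mem_support_det' {a : Fin r → Fin m} {b : Fin r → Fin n}
    (ha : Function.Injective a)
    (hb : Function.Injective b) (σ : Equiv.Perm (Fin r)) :
    (∑ i, Finsupp.single (a i, b (σ i)) 1) ∈
      (Matrix.det (Matrix.of fun p q : Fin r =>
        (MvPolynomial.X (a p, b q) : MvPolynomial (Fin m × Fin n) K))).support := by
  rw [MvPolynomial.mem_support_iff, coeff_det ha hb]
  exact sign_cast_ne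

lemma sm2 {α : Type*} [Preorder α] {x y : α} (h : x < y) : StrictMono ![x, y] := by
  intro i j hij
  fin_cases i <;> fin_cases j <;> simp_all

lemma exists_vlt_max {α : Type*} {vlt : α → α → Prop} (h : IsStrictTotalOrder α vlt)
    (s : Finset α) (hs : s.Nonempty) : ∃ x ∈ s, ∀ y ∈ s, y ≠ x → vlt y x := by
  classical
  induction s using Finset.induction_on with
  | empty => exact absurd hs (by simp)
  | @insert a s ha ih =>
    rcases s.eq_empty_or_nonempty with rfl | hne
    · exact ⟨a, by simp, by simp⟩
    · obtain ⟨x, hx, hmax⟩ := ih hne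
      rcases (or_iff_not_imp_left.2 fun h1 => or_iff_not_imp_right.2 fun h2 =>
        h.trichotomous a x h1 h2 : vlt a x ∨ a = x ∨ vlt x a) with hax | rfl | hxa
      · refine ⟨x, Finset.mem_insert_of_mem hx, fun y hy hyx => ?_⟩
        rcases Finset.mem_insert.1 hy with rfl | hy'
        · exact hax
        · exact hmax y hy' hyx
      · refine ⟨a, Finset.mem_insert_self a s, fun y hy hya => ?_⟩
        rcases Finset.mem_insert.1 hy with rfl | hy'
        · exact absurd rfl hya
        · exact hmax y hy' hya
      · refine ⟨a, Finset.mem_insert_self a s, fun y hy hya => ?_⟩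
        rcases Finset.mem_insert.1 hy with rfl | hy'
        · exact absurd rfl hya
        · rcases eq_or_ne y x with rfl | hyx
          · exact hxa
          · exact h.trans _ _ _ (hmax y hy' hyx) hxa

lemma lead2 {vlt : (Fin m × Fin n) → (Fin m × Fin n) → Prop}
    (hvlt : IsStrictTotalOrder (Fin m × Fin n) vlt)
    {a : Fin 2 → Fin m} {b : Fin 2 → Fin n}
    (hai : Function.Injective a) (hbi : Function.Injective b)
    (H : IsLeadExpV vlt (Matrix.det (Matrix.of fun p q : Fin 2 =>
          (MvPolynomial.X (a p, b q) : MvPolynomial (Fin m × Fin n) K)))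
        (∑ x : Fin 2, Finsupp.single (a x, b x.rev) 1)) :
    ∃ x, (x = (a 0, b 1) ∨ x = (a 1, b 0)) ∧
      ∀ p q : Fin 2, (a p, b q) ≠ x → vlt (a p, b q) x := by
  classical
  have hid : ∀ i k : Fin 2, (∑ j, Finsupp.single (a j, b j) (1:ℕ)) (a i, b k)
      = if i = k then 1 else 0 := fun i k => Eapp hai hbi id i k
  have hrev : ∀ i k : Fin 2, (∑ j, Finsupp.single (a j, b (Fin.rev j)) (1:ℕ)) (a i, b k)
      = if Fin.rev i = k then 1 else 0 := fun i k => Eapp hai hbi Fin.rev i k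
  have hsup : (∑ i : Fin 2, Finsupp.single (a i, b i) (1:ℕ)) ∈
      (Matrix.det (Matrix.of fun p q : Fin 2 =>
        (MvPolynomial.X (a p, b q) : MvPolynomial (Fin m × Fin n) K))).support := by
    have := mem_support_det' (K := K) hai hbi 1
    simpa using this
  have hne : (∑ i : Fin 2, Finsupp.single (a i, b i) (1:ℕ)) ≠
      ∑ x : Fin 2, Finsupp.single (a x, b x.rev) 1 := by
    intro h
    have := E_inj hai hbi (σ := id) (τ := Fin.rev) h
    exact absurd (congrFun this 0) (by decide)
  obtain ⟨x, hx1, hx2⟩ := H.2 _ hsup hne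
  have hxne : (∑ x : Fin 2, Finsupp.single (a x, b x.rev) (1:ℕ)) x ≠ 0 := by omega
  obtain ⟨j, rfl⟩ := Eapp0 (a := a) (b := b) Fin.rev x hxne
  have hdiff : ∀ p q : Fin 2, (∑ j, Finsupp.single (a j, b j) (1:ℕ)) (a p, b q) ≠
      (∑ j, Finsupp.single (a j, b (Fin.rev j)) (1:ℕ)) (a p, b q) := by
    intro p q
    rw [hid, hrev]
    fin_cases p <;> fin_cases q <;> decide
  refine ⟨(a j, b (Fin.rev j)), ?_, ?_⟩
  · fin_cases j
    · left; rfl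
    · right; rfl
  · intro p q hpq
    have h1 : ¬ vlt (a j, b (Fin.rev j)) (a p, b q) := fun hv => hdiff p q (hx2 _ hv)
    rcases (or_iff_not_imp_left.2 fun h1 => or_iff_not_imp_right.2 fun h2 =>
      hvlt.trichotomous (a p, b q) (a j, b (Fin.rev j)) h1 h2 :
      vlt (a p, b q) (a j, b (Fin.rev j)) ∨ (a p, b q) = (a j, b (Fin.rev j)) ∨
      vlt (a j, b (Fin.rev j)) (a p, b q)) with h | h | h
    · exact h
    · exact absurd h hpq
    · exact absurd h h1

end helpers

/-- Let `vlt` be a total order on the variables `x_{ij}` of the generic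
`m × n` matrix.  The induced lexicographic term order is anti-diagonal (the leading
term of every minor, i.e. of the determinant of every square submatrix with rows `a`
and columns `b`, is the product of its anti-diagonal entries) iff for every square
submatrix the greatest variable lies at its north-east or south-west corner. -/
theorem stmt_11 (m n : ℕ) (K : Type*) [Field K]
    (vlt : (Fin m × Fin n) → (Fin m × Fin n) → Prop)
    (hvlt : IsStrictTotalOrder (Fin m × Fin n) vlt) :
    (∀ r : ℕ, 0 < r → ∀ (a : Fin r → Fin m) (b : Fin r → Fin n),
        StrictMono a → StrictMono b →
        IsLeadExpV vlt
          (Matrix.det (Matrix.of fun p q : Fin r =>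
            (MvPolynomial.X (a p, b q) : MvPolynomial (Fin m × Fin n) K)))
          (∑ x : Fin r, Finsupp.single (a x, b x.rev) 1)) ↔
    (∀ r : ℕ, ∀ hr : 0 < r, ∀ (a : Fin r → Fin m) (b : Fin r → Fin n),
        StrictMono a → StrictMono b →
        (∀ p q : Fin r, (a p, b q) = (a ⟨0, hr⟩, b ⟨r - 1, Nat.sub_lt hr Nat.one_pos⟩) ∨
          vlt (a p, b q) (a ⟨0, hr⟩, b ⟨r - 1, Nat.sub_lt hr Nat.one_pos⟩)) ∨
        (∀ p q : Fin r, (a p, b q) = (a ⟨r - 1, Nat.sub_lt hr Nat.one_pos⟩, b ⟨0, hr⟩) ∨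
          vlt (a p, b q) (a ⟨r - 1, Nat.sub_lt hr Nat.one_pos⟩, b ⟨0, hr⟩))) := by
  classical
  have hasym : ∀ x y, vlt x y → ¬ vlt y x := fun x y h1 h2 =>
    hvlt.irrefl x (hvlt.trans _ _ _ h1 h2)
  constructor
  · intro H r hr a b ha hb
    obtain ⟨v, hv, hmax⟩ := exists_vlt_max hvlt
      (Finset.image (fun pq : Fin r × Fin r => (a pq.1, b pq.2)) Finset.univ)
      ⟨(a ⟨0, hr⟩, b ⟨0, hr⟩), Finset.mem_image.2 ⟨(⟨0, hr⟩, ⟨0, hr⟩), by simp, rfl⟩⟩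
    obtain ⟨⟨p₀, q₀⟩, -, rfl⟩ := Finset.mem_image.1 hv
    have hmax' : ∀ p q : Fin r, (p, q) ≠ (p₀, q₀) → vlt (a p, b q) (a p₀, b q₀) := by
      intro p q hpq
      refine hmax _ (Finset.mem_image.2 ⟨(p, q), by simp, rfl⟩) fun h => hpq ?_
      obtain ⟨h1, h2⟩ := Prod.mk.injEq .. ▸ h
      exact Prod.ext (ha.injective h1) (hb.injective h2)
    have corner : ∀ p' q' : Fin r,
        (∀ p q : Fin r, (p, q) ≠ (p', q') → vlt (a p, b q) (a p', b q')) →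
        ∀ p q : Fin r, (a p, b q) = (a p', b q') ∨ vlt (a p, b q) (a p', b q') := by
      intro p' q' hm p q
      by_cases h : (p, q) = (p', q')
      · obtain ⟨h1, h2⟩ := Prod.mk.injEq .. ▸ h
        left; rw [h1, h2]
      · exact Or.inr (hm p q h)
    by_cases hcor : (p₀ = ⟨0, hr⟩ ∧ q₀ = ⟨r - 1, Nat.sub_lt hr Nat.one_pos⟩) ∨
        (p₀ = ⟨r - 1, Nat.sub_lt hr Nat.one_pos⟩ ∧ q₀ = ⟨0, hr⟩)
    · rcases hcor with ⟨hp, hq⟩ | ⟨hp, hq⟩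
      · rw [hp, hq] at hmax'
        exact Or.inl (corner _ _ hmax')
      · rw [hp, hq] at hmax'
        exact Or.inr (corner _ _ hmax')
    · exfalso
      push_neg at hcor
      have hval : (p₀.val < r - 1 ∧ q₀.val < r - 1) ∨ (0 < p₀.val ∧ 0 < q₀.val) := by
      -- from hcor
        have h1 : ¬(p₀.val = 0 ∧ q₀.val = r - 1) :=
          fun ⟨u1, u2⟩ => absurd (Fin.ext u2) (hcor.1 (Fin.ext u1))
        have h2 : ¬(p₀.val = r - 1 ∧ q₀.val = 0) :=
          fun ⟨u1, u2⟩ => absurd (Fin.ext u2) (hcor.2 (Fin.ext u1))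
        have := p₀.isLt
        have := q₀.isLt
        omega
      rcases hval with ⟨hp, hq⟩ | ⟨hp, hq⟩
      · -- (p₀, q₀) is the NW corner of a 2×2 submatrix
        have hp2 : p₀ < (⟨p₀.val + 1, by omega⟩ : Fin r) := by
          rw [Fin.lt_def]; exact Nat.lt_succ_self _
        have hq2 : q₀ < (⟨q₀.val + 1, by omega⟩ : Fin r) := by
          rw [Fin.lt_def]; exact Nat.lt_succ_self _
        obtain ⟨x, hxor, hxmax⟩ := lead2 hvlt (ha.comp (sm2 hp2)).injective
          (hb.comp (sm2 hq2)).injective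
          (H 2 two_pos _ _ (ha.comp (sm2 hp2)) (hb.comp (sm2 hq2)))
        have e00 : ((a ∘ ![p₀, ⟨p₀.val + 1, by omega⟩]) 0,
            (b ∘ ![q₀, ⟨q₀.val + 1, by omega⟩]) 0) = (a p₀, b q₀) := by simp
        have hxv : x ≠ (a p₀, b q₀) := by
          rcases hxor with h | h <;> subst h <;> simp only [Function.comp_apply,
            Matrix.cons_val_zero, Matrix.cons_val_one, Matrix.head_cons] <;>
            intro hc
          · obtain ⟨-, h2⟩ := Prod.mk.injEq .. ▸ hc
            have := Fin.val_eq_of_eq (hb.injective h2)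
            omega
          · obtain ⟨h1, -⟩ := Prod.mk.injEq .. ▸ hc
            have := Fin.val_eq_of_eq (ha.injective h1)
            omega
        have h1 := hxmax 0 0 (by rw [e00]; exact fun h => hxv (h.symm))
        rw [e00] at h1
        -- h1 : vlt (a p₀, b q₀) x ; now vlt x (a p₀, b q₀) from global max
        have h2 : vlt x (a p₀, b q₀) := by
          rcases hxor with h | h <;> subst h <;> simp only [Function.comp_apply,
            Matrix.cons_val_zero, Matrix.cons_val_one, Matrix.head_cons]
          · refine hmax' p₀ ⟨q₀.val + 1, by omega⟩ fun hc => ?_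
            obtain ⟨-, hc2⟩ := Prod.mk.injEq .. ▸ hc
            have := Fin.val_eq_of_eq hc2
            omega
          · refine hmax' ⟨p₀.val + 1, by omega⟩ q₀ fun hc => ?_
            obtain ⟨hc1, -⟩ := Prod.mk.injEq .. ▸ hc
            have := Fin.val_eq_of_eq hc1
            omega
        exact hasym _ _ h1 h2
      · -- (p₀, q₀) is the SE corner of a 2×2 submatrix
        have hp2 : (⟨p₀.val - 1, by omega⟩ : Fin r) < p₀ := by
          rw [Fin.lt_def]; simp; omega
        have hq2 : (⟨q₀.val - 1, by omega⟩ : Fin r) < q₀ := by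
          rw [Fin.lt_def]; simp; omega
        obtain ⟨x, hxor, hxmax⟩ := lead2 hvlt (ha.comp (sm2 hp2)).injective
          (hb.comp (sm2 hq2)).injective
          (H 2 two_pos _ _ (ha.comp (sm2 hp2)) (hb.comp (sm2 hq2)))
        have e11 : ((a ∘ ![⟨p₀.val - 1, by omega⟩, p₀]) 1,
            (b ∘ ![⟨q₀.val - 1, by omega⟩, q₀]) 1) = (a p₀, b q₀) := by simp
        have hxv : x ≠ (a p₀, b q₀) := by
          rcases hxor with h | h <;> subst h <;> simp only [Function.comp_apply,
            Matrix.cons_val_zero, Matrix.cons_val_one, Matrix.head_cons] <;>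
            intro hc
          · obtain ⟨h1, -⟩ := Prod.mk.injEq .. ▸ hc
            have := Fin.val_eq_of_eq (ha.injective h1)
            simp at this; omega
          · obtain ⟨-, h2⟩ := Prod.mk.injEq .. ▸ hc
            have := Fin.val_eq_of_eq (hb.injective h2)
            simp at this; omega
        have h1 := hxmax 1 1 (by rw [e11]; exact fun h => hxv (h.symm))
        rw [e11] at h1
        have h2 : vlt x (a p₀, b q₀) := by
          rcases hxor with h | h <;> subst h <;> simp only [Function.comp_apply,
            Matrix.cons_val_zero, Matrix.cons_val_one, Matrix.head_cons]
          · refine hmax' ⟨p₀.val - 1, by omega⟩ q₀ fun hc => ?_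
            obtain ⟨hc1, -⟩ := Prod.mk.injEq .. ▸ hc
            have := Fin.val_eq_of_eq hc1
            simp at this; omega
          · refine hmax' p₀ ⟨q₀.val - 1, by omega⟩ fun hc => ?_
            obtain ⟨-, hc2⟩ := Prod.mk.injEq .. ▸ hc
            have := Fin.val_eq_of_eq hc2
            simp at this; omega
        exact hasym _ _ h1 h2
  · intro H r hr a b ha hb
    have hai := ha.injective
    have hbi := hb.injective
    have c0e : (⟨0, two_pos⟩ : Fin 2) = 0 := rfl
    have c1e : (⟨2 - 1, Nat.sub_lt two_pos Nat.one_pos⟩ : Fin 2) = 1 := rfl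
    refine ⟨?_, ?_⟩
    · have := mem_support_det' (K := K) hai hbi Fin.revPerm
      simpa using this
    · intro E' hE' hne
      obtain ⟨σ, rfl⟩ := mem_support_det (K := K) hE'
      have hσex : ∃ k, σ k ≠ Fin.rev k := by
        by_contra hc
        push_neg at hc
        exact hne (Finset.sum_congr rfl fun k _ => by rw [hc k])
      set S : Finset (Fin r) := Finset.univ.filter (fun k => σ k ≠ Fin.rev k) with hS
      set D : Finset (Fin m × Fin n) :=
        S.image (fun k => (a k, b (σ k))) ∪ S.image (fun k => (a k, b (Fin.rev k))) with hD
      obtain ⟨k₀, hk₀⟩ := hσex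
      have hk₀S : k₀ ∈ S := Finset.mem_filter.2 ⟨Finset.mem_univ _, hk₀⟩
      obtain ⟨v, hvD, hmax⟩ := exists_vlt_max hvlt D
        ⟨_, Finset.mem_union_right _ (Finset.mem_image_of_mem _ hk₀S)⟩
      have hdmem : ∀ x : Fin m × Fin n,
          (∑ j, Finsupp.single (a j, b (σ j)) (1:ℕ)) x ≠
            (∑ j, Finsupp.single (a j, b (Fin.rev j)) (1:ℕ)) x → x ∈ D := by
        intro x hx
        by_cases h0 : (∑ j, Finsupp.single (a j, b (σ j)) (1:ℕ)) x = 0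
        · have h0' : (∑ j, Finsupp.single (a j, b (Fin.rev j)) (1:ℕ)) x ≠ 0 := by
            rw [h0] at hx; exact fun h => hx h.symm
          obtain ⟨j, rfl⟩ := Eapp0 Fin.rev x h0'
          have hj : σ j ≠ Fin.rev j := by
            intro he
            apply hx
            rw [Eapp hai hbi σ j (Fin.rev j), Eapp hai hbi Fin.rev j (Fin.rev j),
              if_pos he, if_pos rfl]
          exact Finset.mem_union_right _ (Finset.mem_image_of_mem _
            (Finset.mem_filter.2 ⟨Finset.mem_univ _, hj⟩))
        · obtain ⟨j, rfl⟩ := Eapp0 σ x h0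
          have hj : σ j ≠ Fin.rev j := by
            intro he
            apply hx
            rw [Eapp hai hbi σ j (σ j), Eapp hai hbi Fin.rev j (σ j),
              if_pos rfl, if_pos he.symm]
          exact Finset.mem_union_left _ (Finset.mem_image_of_mem _
            (Finset.mem_filter.2 ⟨Finset.mem_univ _, hj⟩))
      have hanti : ∃ k, σ k ≠ Fin.rev k ∧ v = (a k, b (Fin.rev k)) := by
        rcases Finset.mem_union.1 hvD with hv1 | hv2
        · exfalso
          obtain ⟨i, hiS, rfl⟩ := Finset.mem_image.1 hv1
          have hi : σ i ≠ Fin.rev i := (Finset.mem_filter.1 hiS).2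
          have hilt := i.isLt
          have hslt := (σ i).isLt
          have contra : ∀ k : Fin r, σ k ≠ Fin.rev k →
              ((a i, b (σ i)) = (a k, b (Fin.rev k)) ∨
                vlt (a i, b (σ i)) (a k, b (Fin.rev k))) → False := by
            intro k hk hor
            have hcD : (a k, b (Fin.rev k)) ∈ D :=
              Finset.mem_union_right _ (Finset.mem_image_of_mem _
                (Finset.mem_filter.2 ⟨Finset.mem_univ _, hk⟩))
            have hknv : (a i, b (σ i)) ≠ (a k, b (Fin.rev k)) := by
              intro he
              obtain ⟨h1, h2⟩ := Prod.mk.injEq .. ▸ he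
              have hik : i = k := hai h1
              subst hik
              exact hi (hbi h2)
            rcases hor with he | hlt
            · exact hknv he
            · exact hasym _ _ hlt (hmax _ hcD (fun h => hknv h.symm))
          rcases hi.lt_or_gt with hlt | hgt
          · have hir : i < Fin.rev (σ i) := by
              rw [Fin.lt_def] at hlt ⊢
              rw [Fin.val_rev] at hlt ⊢
              omega
            have hH := H 2 two_pos (a ∘ ![i, Fin.rev (σ i)]) (b ∘ ![σ i, Fin.rev i])
              (ha.comp (sm2 hir)) (hb.comp (sm2 hlt))
            rcases hH with hC | hC
            · have h00 := hC 0 0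
              simp only [Function.comp_apply, Matrix.cons_val_zero, Matrix.cons_val_one,
                Matrix.head_cons, c0e, c1e] at h00
              exact contra i hi h00
            · have h00 := hC 0 0
              simp only [Function.comp_apply, Matrix.cons_val_zero, Matrix.cons_val_one,
                Matrix.head_cons, c0e, c1e] at h00
              refine contra (Fin.rev (σ i)) ?_ ?_
              · intro he
                rw [Fin.rev_rev] at he
                have hki := σ.injective he
                rw [hki] at hir
                exact lt_irrefl _ hir
              · rw [Fin.rev_rev]
                exact h00
          · have hir : Fin.rev (σ i) < i := by
              rw [Fin.lt_def] at hgt ⊢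
              rw [Fin.val_rev] at hgt ⊢
              omega
            have hH := H 2 two_pos (a ∘ ![Fin.rev (σ i), i]) (b ∘ ![Fin.rev i, σ i])
              (ha.comp (sm2 hir)) (hb.comp (sm2 hgt))
            rcases hH with hC | hC
            · have h11 := hC 1 1
              simp only [Function.comp_apply, Matrix.cons_val_zero, Matrix.cons_val_one,
                Matrix.head_cons, c0e, c1e] at h11
              refine contra (Fin.rev (σ i)) ?_ ?_
              · intro he
                rw [Fin.rev_rev] at he
                have hki := σ.injective he
                rw [hki] at hir
                exact lt_irrefl _ hir
              · rw [Fin.rev_rev]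
                exact h11
            · have h11 := hC 1 1
              simp only [Function.comp_apply, Matrix.cons_val_zero, Matrix.cons_val_one,
                Matrix.head_cons, c0e, c1e] at h11
              exact contra i hi h11
        · obtain ⟨k, hkS, hvk⟩ := Finset.mem_image.1 hv2
          exact ⟨k, (Finset.mem_filter.1 hkS).2, hvk.symm⟩
      obtain ⟨k, hk, rfl⟩ := hanti
      show ∃ x, (∑ j, Finsupp.single (a j, b (σ j)) (1:ℕ)) x <
          (∑ x : Fin r, Finsupp.single (a x, b x.rev) 1) x ∧ ∀ y, vlt x y →
          (∑ j, Finsupp.single (a j, b (σ j)) (1:ℕ)) y =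
          (∑ x : Fin r, Finsupp.single (a x, b x.rev) 1) y
      refine ⟨(a k, b (Fin.rev k)), ?_, ?_⟩
      · rw [Eapp hai hbi σ k (Fin.rev k), Eapp hai hbi Fin.rev k (Fin.rev k),
          if_neg hk, if_pos rfl]
        exact Nat.zero_lt_one
      · intro y hy
        by_contra hne2
        have hyD := hdmem y hne2
        have hyne : y ≠ (a k, b (Fin.rev k)) := fun he => hvlt.irrefl _ (he ▸ hy)
        exact hasym _ _ (hmax y hyD hyne) hy
end

section
/- Let <_v be a total order on the variables of a generic m×n matrix X. Then the lexicographic term order induced by <_v is diagonal (the leading term of every minor is the product of the diagonal entries of its submatrix) if and only if for every square submatrix of X, the greatest variable of the submatrix lies at its north-west or south-east corner. -/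
namespace Stmt12Aux

open MvPolynomial Equiv Finsupp

variable {m n : ℕ} {vlt : (Fin m × Fin n) → (Fin m × Fin n) → Prop}

lemma lexlt_add {u w v : (Fin m × Fin n) →₀ ℕ} (h : LexLtV vlt u w) :
    LexLtV vlt (v + u) (v + w) := by
  obtain ⟨x, hx, hy⟩ := h
  exact ⟨x, by simpa using hx, fun y hvy => by simp [hy y hvy]⟩

lemma lexlt_asymm (hvlt : IsStrictTotalOrder (Fin m × Fin n) vlt)
    {u w : (Fin m × Fin n) →₀ ℕ} (h1 : LexLtV vlt u w) (h2 : LexLtV vlt w u) : False := by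
  obtain ⟨x, hx, hxe⟩ := h1
  obtain ⟨x', hx', hxe'⟩ := h2
  rcases (haveI := hvlt; trichotomous (r := vlt) x x') with h | h | h
  · have := hxe x' h; omega
  · subst h; omega
  · have := hxe' x h; omega

lemma exists_max (hvlt : IsStrictTotalOrder (Fin m × Fin n) vlt)
    (s : Finset (Fin m × Fin n)) (hs : s.Nonempty) :
    ∃ M ∈ s, ∀ x ∈ s, x = M ∨ vlt x M := by
  classical
  induction s using Finset.induction_on with
  | empty => simp at hs
  | @insert c s' hns ih =>
    by_cases hs2 : s'.Nonempty
    · obtain ⟨M, hM, hall⟩ := ih hs2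
      rcases (haveI := hvlt; trichotomous (r := vlt) c M) with h | h | h
      · exact ⟨M, Finset.mem_insert_of_mem hM, by
          intro x hx
          rcases Finset.mem_insert.mp hx with rfl | hx
          · exact Or.inr h
          · exact hall x hx⟩
      · exact ⟨M, Finset.mem_insert_of_mem hM, by
          intro x hx
          rcases Finset.mem_insert.mp hx with rfl | hx
          · exact Or.inl h
          · exact hall x hx⟩
      · refine ⟨c, Finset.mem_insert_self _ _, ?_⟩
        intro x hx
        rcases Finset.mem_insert.mp hx with rfl | hx
        · exact Or.inl rfl
        · rcases hall x hx with rfl | hlt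
          · exact Or.inr h
          · exact Or.inr (hvlt.trans _ _ _ hlt h)
    · rw [Finset.not_nonempty_iff_eq_empty] at hs2
      subst hs2
      exact ⟨c, Finset.mem_insert_self _ _, by simp⟩

lemma eval_sum {r : ℕ} (a : Fin r → Fin m) (ha : Function.Injective a)
    (c : Fin r → Fin n) (i : Fin r) (j : Fin n) :
    (∑ k, Finsupp.single ((a k, c k) : Fin m × Fin n) (1:ℕ)) (a i, j)
      = if c i = j then 1 else 0 := by
  classical
  rw [Finsupp.finset_sum_apply]
  rw [Finset.sum_eq_single i]
  · rw [Finsupp.single_apply]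
    by_cases h : c i = j <;> simp [h, Prod.ext_iff]
  · intro k _ hk
    rw [Finsupp.single_apply, if_neg]
    simp only [Prod.mk.injEq, not_and]
    intro hak
    exact absurd (ha hak) hk
  · simp

lemma eval_gt (hvlt : IsStrictTotalOrder (Fin m × Fin n) vlt) {r : ℕ}
    (c : Fin r → Fin m × Fin n) {M y : Fin m × Fin n}
    (hc : ∀ k, c k = M ∨ vlt (c k) M) (hy : vlt M y) :
    (∑ k, Finsupp.single (c k) (1:ℕ)) y = 0 := by
  classical
  rw [Finsupp.finset_sum_apply]
  apply Finset.sum_eq_zero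
  intro k _
  rw [Finsupp.single_apply, if_neg]
  rintro rfl
  rcases hc k with h | h
  · rw [h] at hy; exact hvlt.irrefl _ hy
  · exact hvlt.irrefl _ (hvlt.trans _ _ _ h hy)

section DetStuff
variable {K : Type*} [Field K]

lemma prod_X_eq {r : ℕ} (v : Fin r → Fin m × Fin n) (s : Finset (Fin r)) :
    (∏ i ∈ s, (X (v i) : MvPolynomial (Fin m × Fin n) K))
      = monomial (∑ i ∈ s, Finsupp.single (v i) 1) 1 := by
  classical
  induction s using Finset.induction_on with
  | empty => simp [monomial_zero']
  | @insert c s' hns ih =>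
    rw [Finset.prod_insert hns, Finset.sum_insert hns, ih, X, monomial_mul, one_mul]

variable {r : ℕ}

/-- Exponent of the permutation monomial of the minor. -/
noncomputable def Fexp (a : Fin r → Fin m) (b : Fin r → Fin n) (σ : Perm (Fin r)) :
    (Fin m × Fin n) →₀ ℕ :=
  ∑ i, Finsupp.single (a (σ i), b i) 1

variable {a : Fin r → Fin m} {b : Fin r → Fin n}

lemma det_eq (a : Fin r → Fin m) (b : Fin r → Fin n) : (Matrix.of fun p q : Fin r =>
      (X (a p, b q) : MvPolynomial (Fin m × Fin n) K)).det
    = ∑ σ : Perm (Fin r), monomial (Fexp a b σ) (((Equiv.Perm.sign σ : ℤ) : K)) := by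
  rw [Matrix.det_apply']
  refine Finset.sum_congr rfl fun σ _ => ?_
  simp only [Matrix.of_apply]
  rw [prod_X_eq]
  rw [show ((((Perm.sign σ : ℤ)) : MvPolynomial (Fin m × Fin n) K))
      = C (((Perm.sign σ : ℤ) : K))
      from (map_intCast (C : K →+* MvPolynomial (Fin m × Fin n) K) _).symm]
  rw [C_mul_monomial, mul_one]
  rfl

lemma Fexp_apply (ha : Function.Injective a) (hb : Function.Injective b)
    (σ : Perm (Fin r)) (i : Fin r) (j : Fin r) :
    Fexp a b σ (a i, b j) = if σ j = i then 1 else 0 := by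
  classical
  rw [Fexp, Finsupp.finset_sum_apply, Finset.sum_eq_single j]
  · rw [Finsupp.single_apply]
    by_cases h : σ j = i <;> simp [h, Prod.ext_iff, fun x => (ha.eq_iff (a := σ x)).symm] <;>
      simp [ha.eq_iff] <;> tauto
  · intro k _ hk
    rw [Finsupp.single_apply, if_neg]
    simp only [Prod.mk.injEq, not_and]
    intro _ hbk
    exact absurd (hb hbk) hk
  · simp

lemma Fexp_injective (ha : Function.Injective a) (hb : Function.Injective b) :
    Function.Injective (Fexp a b) := by
  intro σ τ h
  ext j
  have h1 := Fexp_apply ha hb σ (σ j) j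
  have h2 := Fexp_apply ha hb τ (σ j) j
  rw [h, h2, if_pos rfl] at h1
  have hj : τ j = σ j := by
    by_contra hne
    rw [if_neg hne] at h1
    omega
  exact congrArg Fin.val hj.symm

lemma coeff_det (E' : (Fin m × Fin n) →₀ ℕ) :
    coeff E' ((Matrix.of fun p q : Fin r =>
        (X (a p, b q) : MvPolynomial (Fin m × Fin n) K)).det)
      = ∑ σ : Perm (Fin r), if Fexp a b σ = E' then ((Equiv.Perm.sign σ : ℤ) : K) else 0 := by
  classical
  rw [det_eq, coeff_sum]
  exact Finset.sum_congr rfl fun σ _ => coeff_monomial _ _ _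

lemma sign_cast_ne_zero (σ : Perm (Fin r)) : ((Equiv.Perm.sign σ : ℤ) : K) ≠ 0 := by
  rcases Int.units_eq_one_or (Equiv.Perm.sign σ) with h | h <;> simp [h]

lemma coeff_det_Fexp (ha : Function.Injective a) (hb : Function.Injective b)
    (τ : Perm (Fin r)) :
    coeff (Fexp a b τ) ((Matrix.of fun p q : Fin r =>
        (X (a p, b q) : MvPolynomial (Fin m × Fin n) K)).det)
      = ((Equiv.Perm.sign τ : ℤ) : K) := by
  classical
  rw [coeff_det, Finset.sum_eq_single τ]
  · rw [if_pos rfl]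
  · intro σ _ hστ
    rw [if_neg fun h => hστ (Fexp_injective ha hb h)]
  · simp

lemma support_det (ha : Function.Injective a) (hb : Function.Injective b)
    {E' : (Fin m × Fin n) →₀ ℕ}
    (hE : E' ∈ ((Matrix.of fun p q : Fin r =>
        (X (a p, b q) : MvPolynomial (Fin m × Fin n) K)).det).support) :
    ∃ σ : Perm (Fin r), Fexp a b σ = E' := by
  classical
  by_contra h
  push_neg at h
  rw [MvPolynomial.mem_support_iff, coeff_det] at hE
  exact hE (Finset.sum_eq_zero fun σ _ => if_neg (h σ))

end DetStuff

lemma smono2 {α : Type*} [Preorder α] {g : Fin 2 → α} (h : g 0 < g 1) : StrictMono g := by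
  intro i j hij
  fin_cases i <;> fin_cases j <;> simp_all <;> omega

lemma antidiag_lt (hvlt : IsStrictTotalOrder (Fin m × Fin n) vlt)
    (A : Fin 2 → Fin m) (B : Fin 2 → Fin n)
    (hA : Function.Injective A) (hB : Function.Injective B) {M : Fin m × Fin n}
    (hmax : ∀ k l : Fin 2, (A k, B l) = M ∨ vlt (A k, B l) M)
    (hM : M = (A 0, B 1) ∨ M = (A 1, B 0)) :
    LexLtV vlt (∑ k, Finsupp.single ((A k, B k) : Fin m × Fin n) 1)
      (∑ k, Finsupp.single ((A k, (![B 1, B 0] : Fin 2 → Fin n) k) : Fin m × Fin n) 1) := by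
  have hB01 : B 0 ≠ B 1 := fun h => absurd (hB h) (by decide)
  refine ⟨M, ?_, ?_⟩
  · rcases hM with rfl | rfl
    · have e1 := eval_sum A hA B 0 (B 1)
      have e2 := eval_sum A hA (fun k => (![B 1, B 0] : Fin 2 → Fin n) k) 0 (B 1)
      simp only [Matrix.cons_val_zero] at e2
      rw [e1, e2, if_neg hB01]
      simp
    · have e1 := eval_sum A hA B 1 (B 0)
      have e2 := eval_sum A hA (fun k => (![B 1, B 0] : Fin 2 → Fin n) k) 1 (B 0)
      simp only [Matrix.cons_val_one, Matrix.head_cons] at e2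
      rw [e1, e2, if_neg (fun h => hB01 h.symm)]
      simp
  · intro y hy
    rw [eval_gt hvlt (fun k => ((A k, B k) : Fin m × Fin n)) (fun k => hmax k k) hy,
      eval_gt hvlt (fun k => ((A k, (![B 1, B 0] : Fin 2 → Fin n) k) : Fin m × Fin n))
        (fun k => ?_) hy]
    fin_cases k
    · simpa using hmax 0 1
    · simpa using hmax 1 0

lemma key (hvlt : IsStrictTotalOrder (Fin m × Fin n) vlt)
    (H : ∀ r : ℕ, ∀ hr : 0 < r, ∀ (a : Fin r → Fin m) (b : Fin r → Fin n),
        StrictMono a → StrictMono b →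
        (∀ p q : Fin r, (a p, b q) = (a ⟨0, hr⟩, b ⟨0, hr⟩) ∨
          vlt (a p, b q) (a ⟨0, hr⟩, b ⟨0, hr⟩)) ∨
        (∀ p q : Fin r, (a p, b q) =
            (a ⟨r - 1, Nat.sub_lt hr Nat.one_pos⟩, b ⟨r - 1, Nat.sub_lt hr Nat.one_pos⟩) ∨
          vlt (a p, b q)
            (a ⟨r - 1, Nat.sub_lt hr Nat.one_pos⟩, b ⟨r - 1, Nat.sub_lt hr Nat.one_pos⟩))) :
    ∀ r : ℕ, ∀ (a : Fin r → Fin m) (b : Fin r → Fin n), StrictMono a → StrictMono b →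
    ∀ f : Fin r → Fin r, Function.Injective f → f ≠ id →
    LexLtV vlt (∑ i, Finsupp.single (a i, b (f i)) 1)
      (∑ i, Finsupp.single (a i, b i) 1) := by
  intro r
  induction r with
  | zero =>
    intro a b _ _ f _ hfid
    exact absurd (funext fun i => i.elim0) hfid
  | succ r ih =>
    intro a b ha hb f hf hfid
    have hr1 : 0 < r + 1 := Nat.succ_pos r
    have h0 : (⟨0, hr1⟩ : Fin (r+1)) = 0 := rfl
    have hlast : (⟨r + 1 - 1, Nat.sub_lt hr1 Nat.one_pos⟩ : Fin (r+1)) = Fin.last r := rfl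
    rcases H (r+1) hr1 a b ha hb with hNW | hSE
    · rw [h0] at hNW
      by_cases hf0 : f 0 = 0
      · rw [Fin.sum_univ_succ (f := fun i => Finsupp.single ((a i, b (f i)) : Fin m × Fin n) 1),
            Fin.sum_univ_succ (f := fun i => Finsupp.single ((a i, b i) : Fin m × Fin n) 1), hf0]
        apply lexlt_add
        have hne : ∀ i : Fin r, f i.succ ≠ 0 := fun i h =>
          (Fin.succ_ne_zero i) (hf (h.trans hf0.symm))
        have key2 := ih (a ∘ Fin.succ) (b ∘ Fin.succ)
          (ha.comp Fin.strictMono_succ) (hb.comp Fin.strictMono_succ)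
          (fun i => (f i.succ).pred (hne i))
          (by
            intro i j hij
            have : f i.succ = f j.succ := by
              have := congrArg Fin.succ hij
              rwa [Fin.succ_pred, Fin.succ_pred] at this
            exact Fin.succ_injective _ (hf this))
          (by
            intro hId
            apply hfid
            funext i
            induction i using Fin.cases with
            | zero => exact hf0
            | succ i =>
              have : (f i.succ).pred (hne i) = i := congrFun hId i
              have := congrArg Fin.succ this
              rwa [Fin.succ_pred] at this)
        have e1 : ∀ i : Fin r, ((a ∘ Fin.succ) i, (b ∘ Fin.succ) ((f i.succ).pred (hne i)))
            = ((a i.succ, b (f i.succ)) : Fin m × Fin n) := by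
          intro i
          simp only [Function.comp_apply, Fin.succ_pred]
        simp only [Function.comp_apply, Fin.succ_pred] at key2
        exact key2
      · refine ⟨(a 0, b 0), ?_, ?_⟩
        · have e1 := eval_sum a ha.injective (fun k => b (f k)) 0 (b 0)
          have e2 := eval_sum a ha.injective b 0 (b 0)
          simp only [if_pos rfl] at e2
          rw [if_neg (fun h => hf0 (hb.injective h))] at e1
          rw [e1, e2]
          simp
        · intro y hy
          rw [eval_gt hvlt (fun k => ((a k, b (f k)) : Fin m × Fin n))
              (fun k => hNW k (f k)) hy,
            eval_gt hvlt (fun k => ((a k, b k) : Fin m × Fin n))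
              (fun k => hNW k k) hy]
    · rw [hlast] at hSE
      by_cases hfl : f (Fin.last r) = Fin.last r
      · rw [Fin.sum_univ_castSucc (f := fun i => Finsupp.single ((a i, b (f i)) : Fin m × Fin n) 1),
            Fin.sum_univ_castSucc (f := fun i => Finsupp.single ((a i, b i) : Fin m × Fin n) 1), hfl]
        rw [add_comm (∑ i : Fin r, Finsupp.single ((a i.castSucc, b (f i.castSucc)) : Fin m × Fin n) 1),
            add_comm (∑ i : Fin r, Finsupp.single ((a i.castSucc, b i.castSucc) : Fin m × Fin n) 1)]
        apply lexlt_add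
        have hne : ∀ i : Fin r, f i.castSucc ≠ Fin.last r := fun i h =>
          (Fin.castSucc_lt_last i).ne (hf (h.trans hfl.symm))
        have key2 := ih (a ∘ Fin.castSucc) (b ∘ Fin.castSucc)
          (ha.comp Fin.strictMono_castSucc) (hb.comp Fin.strictMono_castSucc)
          (fun i => (f i.castSucc).castPred (hne i))
          (by
            intro i j hij
            have : f i.castSucc = f j.castSucc := by
              have := congrArg Fin.castSucc hij
              rwa [Fin.castSucc_castPred, Fin.castSucc_castPred] at this
            exact Fin.castSucc_injective _ (hf this))
          (by
            intro hId
            apply hfid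
            funext i
            induction i using Fin.lastCases with
            | last => exact hfl
            | cast i =>
              have : (f i.castSucc).castPred (hne i) = i := congrFun hId i
              have := congrArg Fin.castSucc this
              rwa [Fin.castSucc_castPred] at this)
        simp only [Function.comp_apply, Fin.castSucc_castPred] at key2
        exact key2
      · refine ⟨(a (Fin.last r), b (Fin.last r)), ?_, ?_⟩
        · have e1 := eval_sum a ha.injective (fun k => b (f k)) (Fin.last r) (b (Fin.last r))
          have e2 := eval_sum a ha.injective b (Fin.last r) (b (Fin.last r))
          simp only [if_pos rfl] at e2
          rw [if_neg (fun h => hfl (hb.injective h))] at e1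
          rw [e1, e2]
          simp
        · intro y hy
          rw [eval_gt hvlt (fun k => ((a k, b (f k)) : Fin m × Fin n))
              (fun k => hSE k (f k)) hy,
            eval_gt hvlt (fun k => ((a k, b k) : Fin m × Fin n))
              (fun k => hSE k k) hy]

end Stmt12Aux

open MvPolynomial Equiv Finsupp Stmt12Aux

/-- Let `vlt` be a total order on the variables `x_{ij}` of the generic
`m × n` matrix.  The induced lexicographic term order is diagonal (the leading
term of every minor, i.e. of the determinant of every square submatrix with rows `a`
and columns `b`, is the product of its diagonal entries) iff for every square
submatrix the greatest variable lies at its north-west or south-east corner. -/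
theorem stmt_12 (m n : ℕ) (K : Type*) [Field K]
    (vlt : (Fin m × Fin n) → (Fin m × Fin n) → Prop)
    (hvlt : IsStrictTotalOrder (Fin m × Fin n) vlt) :
    (∀ r : ℕ, 0 < r → ∀ (a : Fin r → Fin m) (b : Fin r → Fin n),
        StrictMono a → StrictMono b →
        IsLeadExpV vlt
          (Matrix.det (Matrix.of fun p q : Fin r =>
            (MvPolynomial.X (a p, b q) : MvPolynomial (Fin m × Fin n) K)))
          (∑ x : Fin r, Finsupp.single (a x, b x) 1)) ↔
    (∀ r : ℕ, ∀ hr : 0 < r, ∀ (a : Fin r → Fin m) (b : Fin r → Fin n),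
        StrictMono a → StrictMono b →
        (∀ p q : Fin r, (a p, b q) = (a ⟨0, hr⟩, b ⟨0, hr⟩) ∨
          vlt (a p, b q) (a ⟨0, hr⟩, b ⟨0, hr⟩)) ∨
        (∀ p q : Fin r, (a p, b q) =
            (a ⟨r - 1, Nat.sub_lt hr Nat.one_pos⟩, b ⟨r - 1, Nat.sub_lt hr Nat.one_pos⟩) ∨
          vlt (a p, b q)
            (a ⟨r - 1, Nat.sub_lt hr Nat.one_pos⟩, b ⟨r - 1, Nat.sub_lt hr Nat.one_pos⟩))) := by
  constructor
  · -- diagonal lead ⇒ corner property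
    intro Hlead r hr a b ha hb
    by_contra hcon
    push_neg at hcon
    obtain ⟨⟨p1, q1, hp1, hq1⟩, p2, q2, hp2, hq2⟩ := hcon
    -- maximum entry of the submatrix
    obtain ⟨M, hMmem, hMmax⟩ := exists_max hvlt
      ((Finset.univ : Finset (Fin r × Fin r)).image fun pq => ((a pq.1, b pq.2) : Fin m × Fin n))
      ⟨(a ⟨0, hr⟩, b ⟨0, hr⟩), Finset.mem_image.mpr ⟨(⟨0, hr⟩, ⟨0, hr⟩), Finset.mem_univ _, rfl⟩⟩
    obtain ⟨⟨ps, qs⟩, -, hMdef⟩ := Finset.mem_image.mp hMmem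
    simp only at hMdef
    have hmax : ∀ p q : Fin r, (a p, b q) = M ∨ vlt (a p, b q) M := fun p q =>
      hMmax _ (Finset.mem_image.mpr ⟨(p, q), Finset.mem_univ _, rfl⟩)
    have hMnw : M ≠ (a ⟨0, hr⟩, b ⟨0, hr⟩) := by
      rintro rfl
      rcases hmax p1 q1 with h | h
      · exact hp1 h
      · exact hq1 h
    have hMse : M ≠ (a ⟨r - 1, Nat.sub_lt hr Nat.one_pos⟩,
        b ⟨r - 1, Nat.sub_lt hr Nat.one_pos⟩) := by
      rintro rfl
      rcases hmax p2 q2 with h | h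
      · exact hp2 h
      · exact hq2 h
    have hnw' : ¬(ps.val = 0 ∧ qs.val = 0) := by
      rintro ⟨h1, h2⟩
      apply hMnw
      rw [← hMdef, show ps = ⟨0, hr⟩ from Fin.ext (by simp only [Fin.val_mk]; omega),
        show qs = ⟨0, hr⟩ from Fin.ext (by simp only [Fin.val_mk]; omega)]
    have hse' : ¬(ps.val = r - 1 ∧ qs.val = r - 1) := by
      rintro ⟨h1, h2⟩
      apply hMse
      rw [← hMdef, show ps = ⟨r - 1, Nat.sub_lt hr Nat.one_pos⟩ from
          Fin.ext (by simp only [Fin.val_mk]; omega),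
        show qs = ⟨r - 1, Nat.sub_lt hr Nat.one_pos⟩ from
          Fin.ext (by simp only [Fin.val_mk]; omega)]
    have hps : ps.val < r := ps.isLt
    have hqs : qs.val < r := qs.isLt
    -- the max sits on the antidiagonal of some 2×2 submatrix
    have hcases : (0 < ps.val ∧ qs.val < r - 1) ∨ (ps.val < r - 1 ∧ 0 < qs.val) := by omega
    have main : ∀ ρ γ : Fin 2 → Fin r, StrictMono ρ → StrictMono γ →
        (M = (a (ρ 0), b (γ 1)) ∨ M = (a (ρ 1), b (γ 0))) → False := by
      intro ρ γ hρ hγ hMpos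
      set A : Fin 2 → Fin m := a ∘ ρ with hA
      set B : Fin 2 → Fin n := b ∘ γ with hB
      have hsA : StrictMono A := ha.comp hρ
      have hsB : StrictMono B := hb.comp hγ
      have hmax2 : ∀ k l : Fin 2, (A k, B l) = M ∨ vlt (A k, B l) M := fun k l =>
        hmax (ρ k) (γ l)
      have hlt := antidiag_lt hvlt A B hsA.injective hsB.injective hmax2 hMpos
      have hEad : (∑ k, Finsupp.single ((A k, (![B 1, B 0] : Fin 2 → Fin n) k) : Fin m × Fin n) 1)
          = Fexp A B (Equiv.swap 0 1) := by
        rw [Fexp, Fin.sum_univ_two, Fin.sum_univ_two]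
        simp [Equiv.swap_apply_left, Equiv.swap_apply_right, add_comm]
      have hlead := Hlead 2 (by norm_num) A B hsA hsB
      have hmem : (∑ k, Finsupp.single ((A k, (![B 1, B 0] : Fin 2 → Fin n) k) : Fin m × Fin n) 1)
          ∈ (Matrix.det (Matrix.of fun p q : Fin 2 =>
            (MvPolynomial.X (A p, B q) : MvPolynomial (Fin m × Fin n) K))).support := by
        rw [hEad, MvPolynomial.mem_support_iff,
          coeff_det_Fexp hsA.injective hsB.injective (Equiv.swap 0 1)]
        exact sign_cast_ne_zero _
      have hne : (∑ k, Finsupp.single ((A k, (![B 1, B 0] : Fin 2 → Fin n) k) : Fin m × Fin n) 1)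
          ≠ ∑ x : Fin 2, Finsupp.single ((A x, B x) : Fin m × Fin n) 1 := by
        intro hEq
        have hB01 : B 0 ≠ B 1 := fun h => absurd (hsB.injective h) (by decide)
        have h1 := eval_sum A hsA.injective (fun k => (![B 1, B 0] : Fin 2 → Fin n) k) 0 (B 1)
        have h2 := eval_sum A hsA.injective B 0 (B 1)
        rw [if_neg hB01] at h2
        simp only [Matrix.cons_val_zero, if_true, eq_self_iff_true] at h1
        rw [hEq, h2] at h1
        omega
      exact lexlt_asymm hvlt hlt (hlead.2 _ hmem hne)
    rcases hcases with ⟨h1, h2⟩ | ⟨h1, h2⟩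
    · -- rows ps-1, ps ; cols qs, qs+1 ; M at SW corner (A 1, B 0)
      refine main ![⟨ps.val - 1, by omega⟩, ps] ![qs, ⟨qs.val + 1, by omega⟩]
        (smono2 ?_) (smono2 ?_) (Or.inr ?_)
      · simp only [Matrix.cons_val_zero, Matrix.cons_val_one, Matrix.head_cons]
        rw [Fin.lt_def]
        simp only [Fin.val_mk]
        omega
      · simp only [Matrix.cons_val_zero, Matrix.cons_val_one, Matrix.head_cons]
        rw [Fin.lt_def]
        simp only [Fin.val_mk]
        omega
      · simp only [Matrix.cons_val_zero, Matrix.cons_val_one, Matrix.head_cons]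
        exact hMdef.symm
    · -- rows ps, ps+1 ; cols qs-1, qs ; M at NE corner (A 0, B 1)
      refine main ![ps, ⟨ps.val + 1, by omega⟩] ![⟨qs.val - 1, by omega⟩, qs]
        (smono2 ?_) (smono2 ?_) (Or.inl ?_)
      · simp only [Matrix.cons_val_zero, Matrix.cons_val_one, Matrix.head_cons]
        rw [Fin.lt_def]
        simp only [Fin.val_mk]
        omega
      · simp only [Matrix.cons_val_zero, Matrix.cons_val_one, Matrix.head_cons]
        rw [Fin.lt_def]
        simp only [Fin.val_mk]
        omega
      · simp only [Matrix.cons_val_zero, Matrix.cons_val_one, Matrix.head_cons]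
        exact hMdef.symm
  · -- corner property ⇒ diagonal lead
    intro H r hr a b ha hb
    constructor
    · rw [show (∑ x : Fin r, Finsupp.single ((a x, b x) : Fin m × Fin n) (1:ℕ))
          = Fexp a b 1 from by simp [Fexp, Equiv.Perm.one_apply]]
      rw [MvPolynomial.mem_support_iff,
        coeff_det_Fexp ha.injective hb.injective 1]
      exact sign_cast_ne_zero _
    · intro E' hE' hne
      obtain ⟨σ, rfl⟩ := support_det ha.injective hb.injective hE'
      have hσ : σ ≠ 1 := by
        rintro rfl
        exact hne (by simp [Fexp, Equiv.Perm.one_apply])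
      have hrw : Fexp a b σ = ∑ i, Finsupp.single ((a i, b (σ⁻¹ i)) : Fin m × Fin n) 1 := by
        rw [Fexp]
        have := Equiv.sum_comp σ (fun j => Finsupp.single ((a j, b (σ⁻¹ j)) : Fin m × Fin n) (1:ℕ))
        simp only [Equiv.Perm.inv_def, Equiv.symm_apply_apply] at this
        exact this
      rw [hrw]
      exact key hvlt H r a b ha hb (fun i => σ⁻¹ i) (σ⁻¹).injective (by
        intro h
        apply hσ
        have h1 : σ⁻¹ = 1 := Equiv.ext fun i => congrFun h i
        rw [← inv_inv σ, h1, inv_one])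
end

section
/- A permutation w ∈ S_n is vexillary (2143-avoiding: there exist no i < j < k < ℓ with w_j < w_i < w_ℓ < w_k) if and only if there are no two elements (p,q) and (p',q') in the essential set ess(w) with p < p' and q < q'. -/
/-- `(i,j)` lies in the Rothe diagram `D(w)`: `w i > j` and `w⁻¹ j > i`. -/
def InRothe {n : ℕ} (w : Equiv.Perm (Fin n)) (i j : Fin n) : Prop :=
  j < w i ∧ i < w.symm j

/-- `(p,q)` lies in the essential set `ess(w)`: it is in `D(w)` and neither `(p,q+1)`
nor `(p+1,q)` is in `D(w)`. -/
def InEss {n : ℕ} (w : Equiv.Perm (Fin n)) (p q : Fin n) : Prop :=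
  InRothe w p q ∧ (∀ q' : Fin n, (q' : ℕ) = (q : ℕ) + 1 → ¬ InRothe w p q') ∧
    ∀ p' : Fin n, (p' : ℕ) = (p : ℕ) + 1 → ¬ InRothe w p' q

/-- `w` is vexillary, i.e. 2143-avoiding. -/
def Vexillary {n : ℕ} (w : Equiv.Perm (Fin n)) : Prop :=
  ¬ ∃ i j k l : Fin n, i < j ∧ j < k ∧ k < l ∧ w j < w i ∧ w i < w l ∧ w l < w k

/-!
If `(p, q)` is essential, the dots in column `q + 1` and in row `p + 1` lie weakly northwest of
it (otherwise the box to its right or below would be in `D(w)`); they form the `21` of a `2143`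
pattern, whose `43` is given by the dots in row `p'` and column `q'` of any essential box
`(p', q')` strictly southeast of `(p, q)`.

Conversely, a box of `D(w)` from which no step right or down stays in `D(w)` is essential, so
walking right and down from a box of `D(w)` ends in `ess(w)`. For a `2143` pattern at
`i < j < k < l`, start one walk at `(i, w j)` and one at `(k, w l)`: the first is trapped in the
rectangle `[i, j) × [w j, w i)`, which lies strictly northwest of the second's start.
-/

namespace InEss

variable {n : ℕ} {w : Equiv.Perm (Fin n)} {p q : Fin n}

theorem symm (h : InEss w p q) : InEss w.symm q p :=
  ⟨h.1.symm, fun _ hp' hD => h.2.2 _ hp' hD.symm, fun _ hq' hD => h.2.1 _ hq' hD.symm⟩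

theorem exists_succ_symm_le (h : InEss w p q) :
    ∃ c : Fin n, (c : ℕ) = q + 1 ∧ w.symm c ≤ p := by
  obtain ⟨⟨hq, -⟩, hright, -⟩ := h
  have hc : (q : ℕ) + 1 < n := by have := (w p).isLt; omega
  refine ⟨⟨q + 1, hc⟩, rfl, not_lt.mp fun hcp => hright _ rfl ⟨?_, hcp⟩⟩
  have hne : (⟨q + 1, hc⟩ : Fin n) ≠ w p := by
    rintro heq
    rw [heq, Equiv.symm_apply_apply] at hcp
    exact hcp.false
  have hne' : (q : ℕ) + 1 ≠ w p := Fin.val_ne_of_ne hne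
  exact Fin.mk_lt_of_lt_val (by rw [Fin.lt_def] at hq; omega)

theorem exists_succ_le (h : InEss w p q) : ∃ r : Fin n, (r : ℕ) = p + 1 ∧ w r ≤ q :=
  h.symm.exists_succ_symm_le

end InEss

section

variable {n : ℕ} (w : Equiv.Perm (Fin n))

theorem exists_inEss_of_inRothe (S : Fin n → Fin n → Prop)
    (right : ∀ p q q' : Fin n, S p q → (q' : ℕ) = q + 1 → InRothe w p q' → S p q')
    (down : ∀ p p' q : Fin n, S p q → (p' : ℕ) = p + 1 → InRothe w p' q → S p' q)
    {a b : Fin n} (hS : S a b) (hD : InRothe w a b) : ∃ p q, InEss w p q ∧ S p q := by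
  classical
  let T := Finset.univ.filter fun x : Fin n × Fin n => S x.1 x.2 ∧ InRothe w x.1 x.2
  obtain ⟨⟨p, q⟩, hpq, hmax⟩ :=
    T.exists_max_image (fun x => (x.1 : ℕ) + x.2) ⟨(a, b), by simp [T, hS, hD]⟩
  simp only [T, Finset.mem_filter, Finset.mem_univ, true_and] at hpq hmax
  refine ⟨p, q, ⟨hpq.2, fun q' hq' hD' => ?_, fun p' hp' hD' => ?_⟩, hpq.1⟩
  · have : (p : ℕ) + q' ≤ p + q := hmax (p, q') ⟨right p q q' hpq.1 hq' hD', hD'⟩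
    omega
  · have : (p' : ℕ) + q ≤ p + q := hmax (p', q) ⟨down p p' q hpq.1 hp' hD', hD'⟩
    omega

theorem exists_pattern_of_inEss {p q p' q' : Fin n} (h : InEss w p q) (h' : InEss w p' q')
    (hp : p < p') (hq : q < q') :
    ∃ i j k l : Fin n, i < j ∧ j < k ∧ k < l ∧ w j < w i ∧ w i < w l ∧ w l < w k := by
  obtain ⟨c, hc, hcp⟩ := h.exists_succ_symm_le
  obtain ⟨r, hr, hrq⟩ := h.exists_succ_le
  obtain ⟨hq', hp'⟩ := h'.1
  have hrp' : r ≠ p' := by rintro rfl; exact (hrq.trans_lt (hq.trans hq')).false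
  have hcq' : c ≠ q' := by rintro rfl; exact (hcp.trans_lt (hp.trans hp')).false
  refine ⟨w.symm c, r, p', w.symm q', ?_, ?_, hp', ?_, ?_, ?_⟩ <;>
    simp only [Equiv.apply_symm_apply, Fin.lt_def, Fin.le_def, ne_eq, Fin.ext_iff] at * <;>
    omega

theorem exists_inEss_of_pattern {i j k l : Fin n} (hij : i < j) (hjk : j < k) (hkl : k < l)
    (h₁ : w j < w i) (h₂ : w i < w l) (h₃ : w l < w k) :
    ∃ p q p' q' : Fin n, InEss w p q ∧ InEss w p' q' ∧ p < p' ∧ q < q' := by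
  -- The dots of `i` and `j` fence off the rectangle `[i, j) × [w j, w i)` inside `D(w)`.
  obtain ⟨p, q, hess, -, hpj, -, hqi⟩ := exists_inEss_of_inRothe w
    (fun p q => i ≤ p ∧ p < j ∧ w j ≤ q ∧ q < w i)
    (by
      rintro p q q' ⟨hip, hpj, hjq, hqi⟩ hq' ⟨-, hpq'⟩
      have hq'i : q' ≠ w i := by
        rintro rfl
        rw [Equiv.symm_apply_apply] at hpq'
        exact (hpq'.trans_le hip).false
      refine ⟨hip, hpj, ?_, ?_⟩ <;> simp only [Fin.lt_def, Fin.le_def, ne_eq, Fin.ext_iff] at * <;>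
        omega)
    (by
      rintro p p' q ⟨hip, hpj, hjq, hqi⟩ hp' ⟨hqp', -⟩
      have hp'j : p' ≠ j := by
        rintro rfl
        exact (hjq.trans_lt hqp').false
      refine ⟨?_, ?_, hjq, hqi⟩ <;> simp only [Fin.lt_def, Fin.le_def, ne_eq, Fin.ext_iff] at * <;>
        omega)
    ⟨le_rfl, hij, le_rfl, h₁⟩ ⟨h₁, by simpa using hij⟩
  obtain ⟨p', q', hess', hkp', hlq'⟩ := exists_inEss_of_inRothe w
    (fun p q => k ≤ p ∧ w l ≤ q)
    (fun p q q' hS hq' _ => ⟨hS.1, hS.2.trans (by rw [Fin.le_def]; omega)⟩)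
    (fun p p' q hS hp' _ => ⟨hS.1.trans (by rw [Fin.le_def]; omega), hS.2⟩)
    ⟨le_rfl, le_rfl⟩ ⟨h₃, by simpa using hkl⟩
  exact ⟨p, q, p', q', hess, hess', hpj.trans_le (hjk.le.trans hkp'),
    hqi.trans_le (h₂.le.trans hlq')⟩

end

/-- a permutation is vexillary iff there are no two elements `(p,q)` and
`(p',q')` of its essential set with `p < p'` and `q < q'`. -/
theorem stmt_14 (n : ℕ) (w : Equiv.Perm (Fin n)) :
    Vexillary w ↔
      ¬ ∃ p q p' q' : Fin n, InEss w p q ∧ InEss w p' q' ∧ p < p' ∧ q < q' :=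
  not_congr ⟨fun ⟨_, _, _, _, hij, hjk, hkl, h₁, h₂, h₃⟩ =>
      exists_inEss_of_pattern w hij hjk hkl h₁ h₂ h₃,
    fun ⟨_, _, _, _, h, h', hp, hq⟩ => exists_pattern_of_inEss w h h' hp hq⟩
end

section
/- Let w ∈ S_n be a non-vexillary permutation. Then there exist (p,q), (p̃,q̃) ∈ ess(w) with p̃ < p and q̃ < q, and an element (p̄,q̄) of D(w) inside the rectangle [p̃+1,p]×[q̃+1,q] such that, setting r̄ = rank(w^T_{p̄q̄}) + 1 and r̃ = rank(w^T_{p̃q̃}) + 1, one has r̄ − r̃ ≥ q̄ − q̃ and r̄ − r̃ ≥ p̄ − p̃; consequently the minor with rows [p̄−r̄+1, p̄] and columns [q̄−r̄+1, q̄] contains the minor with rows [p̃−r̃+1, p̃] and columns [q̃−r̃+1, q̃]. -/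
/-- `rank(w^T_{pq})` (0-based): the number of `i ≤ p` with `w i ≤ q`. -/
def rkNW {n : ℕ} (w : Equiv.Perm (Fin n)) (p q : Fin n) : ℕ :=
  (Finset.univ.filter fun i => i ≤ p ∧ w i ≤ q).card

/-! A 2143-pattern `i < j < k < l` of `w` consists of two inversions `(i, j)` and `(k, l)`, and
every inversion `(a, e)` encloses an essential box in `[a, e) × [w e, w a)`; the two essential
boxes so obtained lie strictly northwest and southeast of each other. Let `(p̄, q̄)` be a minimal
box of `D(w)` strictly southeast of the northwest one `(p̃, q̃)`. By minimality, every row strictly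
between `p̃` and `p̄` has its `1` in a column `≤ q̄`, and essentiality of `(p̃, q̃)` puts the `1` of
column `q̃ + 1` in a row `≤ p̃`; together they raise the rank by at least `p̄ - p̃`. Transposing
(`w ↦ w⁻¹`) gives the column bound, and the two bounds are the containment of the minors. -/

section

variable {n : ℕ} {w : Equiv.Perm (Fin n)}

lemma inRothe_symm_iff {i j : Fin n} : InRothe w.symm j i ↔ InRothe w i j := by
  simp only [InRothe, Equiv.symm_symm]
  exact and_comm

lemma inEss_symm_iff {p q : Fin n} : InEss w.symm q p ↔ InEss w p q := by
  simp only [InEss, inRothe_symm_iff]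
  exact and_congr_right' and_comm

lemma rkNW_symm (p q : Fin n) : rkNW w.symm q p = rkNW w p q := by
  refine Finset.card_equiv w.symm fun j => ?_
  simp only [Finset.mem_filter, Finset.mem_univ, true_and, Equiv.apply_symm_apply]
  exact and_comm

lemma rkNW_lt_rkNW {p q q' i : Fin n} (hi : i ≤ p) (hqi : q < w i) (hiq' : w i ≤ q') :
    rkNW w p q < rkNW w p q' := by
  refine Finset.card_lt_card <| (Finset.ssubset_iff_of_subset ?_).2 ⟨i, ?_, ?_⟩
  · intro x
    simp only [Finset.mem_filter, Finset.mem_univ, true_and]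
    exact fun hx => ⟨hx.1, hx.2.trans (hqi.le.trans hiq')⟩
  · simp [hi, hiq']
  · simp [hqi]

lemma rkNW_add_le_rkNW {p p' q : Fin n} (hp : p < p') (h : ∀ i, p < i → i < p' → w i ≤ q) :
    rkNW w p q + ((p' : ℕ) - p - 1) ≤ rkNW w p' q := by
  rw [← Fin.card_Ioo, rkNW, rkNW, ← Finset.card_union_of_disjoint]
  · refine Finset.card_le_card fun i hi => ?_
    simp only [Finset.mem_union, Finset.mem_filter, Finset.mem_univ, true_and,
      Finset.mem_Ioo] at hi ⊢
    rcases hi with hi | hi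
    · exact ⟨hi.1.trans hp.le, hi.2⟩
    · exact ⟨hi.2.le, h i hi.1 hi.2⟩
  · refine Finset.disjoint_left.2 fun i hi hi' => ?_
    simp only [Finset.mem_filter, Finset.mem_univ, true_and, Finset.mem_Ioo] at hi hi'
    exact absurd hi.1 (not_le.2 hi'.1)

/-- A maximal box of `D(w)` in the rectangle is essential: `D(w)` meets neither column `w a` nor
row `e` of the rectangle's border. -/
lemma exists_inEss_of_inversion {a e : Fin n} (hae : a < e) (hw : w e < w a) :
    ∃ p q, InEss w p q ∧ a ≤ p ∧ p < e ∧ w e ≤ q ∧ q < w a := by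
  let P : Fin n × Fin n → Prop := fun x => InRothe w x.1 x.2 ∧ x.1 < e ∧ x.2 < w a
  have hstart : P (a, w e) := ⟨⟨hw, by simpa using hae⟩, hae, hw⟩
  obtain ⟨⟨p, q⟩, hle, hPpq, hmax⟩ := exists_maximal_ge_of_wellFoundedGT P (a, w e) hstart
  obtain ⟨hpq, hpe, hqa⟩ : InRothe w p q ∧ p < e ∧ q < w a := hPpq
  obtain ⟨hap, hweq⟩ : a ≤ p ∧ w e ≤ q := Prod.mk_le_mk.1 hle
  refine ⟨p, q, ⟨hpq, fun q' hq' hpq' => ?_, fun p' hp' hp'q => ?_⟩, hap, hpe, hweq, hqa⟩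
  · rcases lt_or_ge q' (w a) with hq'a | hq'a
    · have := (Prod.mk_le_mk.1 <| hmax (y := (p, q')) ⟨hpq', hpe, hq'a⟩
        (Prod.mk_le_mk.2 ⟨le_rfl, by rw [Fin.le_def]; omega⟩)).2
      rw [Fin.le_def] at this
      omega
    · obtain rfl : q' = w a := Fin.ext (by rw [Fin.le_def] at hq'a; rw [Fin.lt_def] at hqa; omega)
      exact absurd hpq'.2 (by simpa using hap)
  · rcases lt_or_ge p' e with hp'e | hp'e
    · have := (Prod.mk_le_mk.1 <| hmax (y := (p', q)) ⟨hp'q, hp'e, hqa⟩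
        (Prod.mk_le_mk.2 ⟨by rw [Fin.le_def]; omega, le_rfl⟩)).1
      rw [Fin.le_def] at this
      omega
    · obtain rfl : p' = e := Fin.ext (by rw [Fin.le_def] at hp'e; rw [Fin.lt_def] at hpe; omega)
      exact absurd hp'q.1 (not_lt.2 hweq)

lemma exists_northwest_inRothe {pt qt p q : Fin n} (h : InRothe w p q) (hp : pt < p)
    (hq : qt < q) :
    ∃ pb qb, InRothe w pb qb ∧ pt < pb ∧ pb ≤ p ∧ qt < qb ∧ qb ≤ q ∧
      ∀ i j, pt < i → i ≤ pb → qt < j → j ≤ qb → (i, j) ≠ (pb, qb) → ¬ InRothe w i j := by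
  obtain ⟨⟨pb, qb⟩, hle, hPb, hmin⟩ := exists_minimal_le_of_wellFoundedLT
    (fun x : Fin n × Fin n => InRothe w x.1 x.2 ∧ pt < x.1 ∧ qt < x.2) (p, q) ⟨h, hp, hq⟩
  obtain ⟨hb, hptb, hqtb⟩ : InRothe w pb qb ∧ pt < pb ∧ qt < qb := hPb
  obtain ⟨hpb, hqb⟩ : pb ≤ p ∧ qb ≤ q := Prod.mk_le_mk.1 hle
  refine ⟨pb, qb, hb, hptb, hpb, hqtb, hqb, fun i j hi hib hj hjb hne hij => hne ?_⟩
  have hle' : (i, j) ≤ (pb, qb) := Prod.mk_le_mk.2 ⟨hib, hjb⟩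
  exact le_antisymm hle' (hmin (y := (i, j)) ⟨hij, hi, hj⟩ hle')

lemma rkNW_add_rows_le {pt qt pb qb : Fin n} (ht : InEss w pt qt) (hb : InRothe w pb qb)
    (hp : pt < pb) (hq : qt < qb) (hcol : ∀ i, pt < i → i < pb → ¬ InRothe w i qb) :
    rkNW w pt qt + ((pb : ℕ) - pt) ≤ rkNW w pb qb := by
  obtain ⟨⟨hqt, -⟩, heast, -⟩ := ht
  rw [Fin.lt_def] at hp hq hqt
  let j : Fin n := ⟨qt + 1, by omega⟩
  have hj : w.symm j ≤ pt := by
    by_contra! h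
    rcases (show j ≤ w pt from Fin.le_def.2 (by simp only [j]; omega)).lt_or_eq with hlt | heq
    · exact heast j rfl ⟨hlt, h⟩
    · simp [heq] at h
  have hnew : rkNW w pt qt < rkNW w pt qb :=
    rkNW_lt_rkNW hj (by simp [j, Fin.lt_def]) (by simp [j, Fin.le_def]; omega)
  have hmid := rkNW_add_le_rkNW (Fin.lt_def.2 hp) fun i hpi hib =>
    not_lt.1 fun hqi => hcol i hpi hib ⟨hqi, hib.trans hb.2⟩
  omega

lemma rkNW_add_cols_le {pt qt pb qb : Fin n} (ht : InEss w pt qt) (hb : InRothe w pb qb)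
    (hp : pt < pb) (hq : qt < qb) (hrow : ∀ j, qt < j → j < qb → ¬ InRothe w pb j) :
    rkNW w pt qt + ((qb : ℕ) - qt) ≤ rkNW w pb qb := by
  simpa only [rkNW_symm] using rkNW_add_rows_le (w := w.symm) (inEss_symm_iff.2 ht)
    (inRothe_symm_iff.2 hb) hq hp fun j hj hjb => inRothe_symm_iff.not.2 (hrow j hj hjb)

end

/-- if `w` is not vexillary, there are `(p,q), (p̃,q̃) ∈ ess(w)` with
`p̃ < p`, `q̃ < q` and a northwest-most element `(p̄,q̄)` of `D(w)` in the rectangle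
`[p̃+1,p] × [q̃+1,q]` such that, with `r̄ = rank(w^T_{p̄q̄}) + 1` and
`r̃ = rank(w^T_{p̃q̃}) + 1`, one has `r̄ − r̃ ≥ q̄ − q̃` and `r̄ − r̃ ≥ p̄ − p̃`;
consequently the row interval `[p̃−r̃+1, p̃]` is contained in `[p̄−r̄+1, p̄]` and the
column interval `[q̃−r̃+1, q̃]` in `[q̄−r̄+1, q̄]` (0-based, expressed over `ℤ`), i.e.
the corresponding elusive minor at `(p̃,q̃)` is contained in the one at `(p̄,q̄)`. -/
theorem stmt_16 (n : ℕ) (w : Equiv.Perm (Fin n)) (hw : ¬ Vexillary w) :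
    ∃ p q pt qt : Fin n, InEss w p q ∧ InEss w pt qt ∧ pt < p ∧ qt < q ∧
      ∃ pb qb : Fin n, InRothe w pb qb ∧ pt < pb ∧ pb ≤ p ∧ qt < qb ∧ qb ≤ q ∧
        (∀ i j : Fin n, pt < i → i ≤ pb → qt < j → j ≤ qb → (i, j) ≠ (pb, qb) →
          ¬ InRothe w i j) ∧
        ((rkNW w pb qb : ℤ) + 1) - ((rkNW w pt qt : ℤ) + 1) ≥ (qb : ℤ) - (qt : ℤ) ∧
        ((rkNW w pb qb : ℤ) + 1) - ((rkNW w pt qt : ℤ) + 1) ≥ (pb : ℤ) - (pt : ℤ) ∧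
        Set.Icc ((pt : ℤ) - rkNW w pt qt) (pt : ℤ) ⊆
          Set.Icc ((pb : ℤ) - rkNW w pb qb) (pb : ℤ) ∧
        Set.Icc ((qt : ℤ) - rkNW w pt qt) (qt : ℤ) ⊆
          Set.Icc ((qb : ℤ) - rkNW w pb qb) (qb : ℤ) := by
  obtain ⟨i, j, k, l, hij, hjk, hkl, hji, hil, hlk⟩ := not_not.1 hw
  obtain ⟨pt, qt, hEt, -, hptj, -, hqti⟩ := exists_inEss_of_inversion hij hji
  obtain ⟨p, q, hE, hkp, -, hlq, -⟩ := exists_inEss_of_inversion hkl hlk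
  have hpt : pt < p := hptj.trans (hjk.trans_le hkp)
  have hqt : qt < q := hqti.trans (hil.trans_le hlq)
  obtain ⟨pb, qb, hb, hptb, hpb, hqtb, hqb, hNW⟩ := exists_northwest_inRothe hE.1 hpt hqt
  have hrows := rkNW_add_rows_le hEt hb hptb hqtb fun i hi hib =>
    hNW i qb hi hib.le hqtb le_rfl (by simp [hib.ne])
  have hcols := rkNW_add_cols_le hEt hb hptb hqtb fun j hj hjb =>
    hNW pb j hptb le_rfl hj hjb.le (by simp [hjb.ne])
  have hp' : (pt : ℕ) < pb := hptb
  have hq' : (qt : ℕ) < qb := hqtb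
  refine ⟨p, q, pt, qt, hE, hEt, hpt, hqt, pb, qb, hb, hptb, hpb, hqtb, hqb, hNW, ?_, ?_,
    Set.Icc_subset_Icc ?_ ?_, Set.Icc_subset_Icc ?_ ?_⟩ <;> omega
end
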